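/- arXiv:1506.04241 — 5 statements merged into one kernel-verified Lean document; each statement's English description precedes it below -/
import Mathlib

section
/- Fix h ∈ ℝ. Under the Gibbs measures μ_N^{(0)} of the pure hard-core monomer-dimer model (J = 0), the monomer density m_N converges in distribution to the constant g(h): for every bounded continuous function ψ : ℝ → ℝ, Σ_{D ∈ 𝒟_N} μ_N^{(0)}(D)·ψ(m_N(D)) → ψ(g(h)) as N → ∞. -/
set_option maxHeartbeats 1000000


open MeasureTheory Filter Real

noncomputable section

/-- A dimer configuration on the complete graph `K_N`: a set of non-loop edges
that are pairwise non-incident (a matching). -/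
def IsDimerConfig (N : ℕ) (D : Finset (Sym2 (Fin N))) : Prop :=
  (∀ e ∈ D, ¬ e.IsDiag) ∧
  ∀ e ∈ D, ∀ f ∈ D, e ≠ f → ∀ v : Fin N, ¬(v ∈ e ∧ v ∈ f)

open Classical in
/-- The configuration space `𝒟_N` of all dimer configurations on `K_N`. -/
noncomputable def dimerConfigs (N : ℕ) : Finset (Finset (Sym2 (Fin N))) :=
  Finset.univ.filter (fun D => IsDimerConfig N D)

/-- The number of monomers `S_N(D) = N - 2|D|` (as a real number). -/
def monomerCount (N : ℕ) (D : Finset (Sym2 (Fin N))) : ℝ := (N : ℝ) - 2 * D.card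

/-- The monomer density `m_N(D) = S_N(D)/N`. -/
def monomerDensity (N : ℕ) (D : Finset (Sym2 (Fin N))) : ℝ := monomerCount N D / N

/-- `g(h) = (e^h/2)(√(e^{2h}+4) − e^h)`. -/
def gFun (h : ℝ) : ℝ := Real.exp h / 2 * (Real.sqrt (Real.exp (2*h) + 4) - Real.exp h)

/-- `p⁰(h) = −(1−g(h))/2 − (1/2)·log(1−g(h))`. -/
def p0 (h : ℝ) : ℝ := -(1 - gFun h)/2 - (1/2) * Real.log (1 - gFun h)

/-- Variational pressure `p̃(m) = −Jm² + p⁰((2m−1)J + h)`. -/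
def ptilde (h J m : ℝ) : ℝ := -J * m^2 + p0 ((2*m - 1) * J + h)

/-- Pure hard-core partition function `Z_N⁰(a) = Σ_D N^{−|D|} e^{a·S_N(D)}`. -/
def Z0 (N : ℕ) (a : ℝ) : ℝ :=
  ∑ D ∈ dimerConfigs N, (N : ℝ) ^ (-(D.card : ℤ)) * Real.exp (a * monomerCount N D)

/-- Pure hard-core pressure density `p_N⁰(a) = (1/N) log Z_N⁰(a)`. -/
def p0N (N : ℕ) (a : ℝ) : ℝ := (1 / (N : ℝ)) * Real.log (Z0 N a)

/-- Minus the IMD Hamiltonian: `−H_N(D) = N((h−J)m_N(D) + J m_N(D)²)`. -/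
def negH (N : ℕ) (h J : ℝ) (D : Finset (Sym2 (Fin N))) : ℝ :=
  (N : ℝ) * ((h - J) * monomerDensity N D + J * (monomerDensity N D)^2)

/-- The IMD partition function `Z_N = Σ_D N^{−|D|} e^{−H_N(D)}`. -/
def ZIMD (N : ℕ) (h J : ℝ) : ℝ :=
  ∑ D ∈ dimerConfigs N, (N : ℝ) ^ (-(D.card : ℤ)) * Real.exp (negH N h J D)

/-- The IMD pressure density `p_N = (1/N) log Z_N`. -/
def pIMD (N : ℕ) (h J : ℝ) : ℝ := (1 / (N : ℝ)) * Real.log (ZIMD N h J)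

/-- Expectation of an observable `f` under the IMD Gibbs measure `μ_N`. -/
def gibbsExp (N : ℕ) (h J : ℝ) (f : Finset (Sym2 (Fin N)) → ℝ) : ℝ :=
  (∑ D ∈ dimerConfigs N, (N : ℝ) ^ (-(D.card : ℤ)) * Real.exp (negH N h J D) * f D)
    / ZIMD N h J

/-- `F_N(x) = −Jx² + p_N⁰(2Jx + h − J)`. -/
def FN (h J : ℝ) (N : ℕ) (x : ℝ) : ℝ := -J * x^2 + p0N N (2*J*x + h - J)


section DimerAux
open Finset Classical

-- endpoints of an edge
def ends {N : ℕ} (e : Sym2 (Fin N)) : Finset (Fin N) :=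
  Finset.univ.filter (fun v => v ∈ e)

lemma ends_card {N : ℕ} (e : Sym2 (Fin N)) (he : ¬ e.IsDiag) : (ends e).card = 2 := by
  induction e using Sym2.ind with
  | _ a b =>
    rw [Sym2.mk_isDiag_iff] at he
    have : ends s(a,b) = {a, b} := by
      ext v; simp [ends, Sym2.mem_iff]
    rw [this, Finset.card_insert_of_notMem (by simpa using he), Finset.card_singleton]

lemma ends_subset_iff {N : ℕ} (e : Sym2 (Fin N)) (S : Finset (Fin N)) :
    ends e ⊆ S ↔ ∀ v ∈ e, v ∈ S := by
  constructor
  · intro h v hv; exact h (by simp [ends, hv])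
  · intro h v hv; simp [ends] at hv; exact h v hv

lemma ends_inj {N : ℕ} (e f : Sym2 (Fin N)) (he : ¬ e.IsDiag) (hf : ¬ f.IsDiag)
    (h : ends e = ends f) : e = f := by
  induction e using Sym2.ind with
  | _ a b =>
  induction f using Sym2.ind with
  | _ c d =>
    rw [Sym2.mk_isDiag_iff] at he hf
    have ha : a ∈ ends s(c,d) := by rw [← h]; simp [ends]
    have hb : b ∈ ends s(c,d) := by rw [← h]; simp [ends]
    simp [ends, Sym2.mem_iff] at ha hb
    rcases ha with rfl | rfl <;> rcases hb with rfl | rfl <;> simp_all [Sym2.eq_swap]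


-- free vertices
def freeV {N : ℕ} (D : Finset (Sym2 (Fin N))) : Finset (Fin N) :=
  Finset.univ.filter (fun v => ∀ e ∈ D, v ∉ e)

lemma covered_card {N : ℕ} (D : Finset (Sym2 (Fin N))) (hD : IsDimerConfig N D) :
    (Finset.univ.filter (fun v : Fin N => ∃ e ∈ D, v ∈ e)).card = 2 * D.card := by
  have heq : (Finset.univ.filter (fun v : Fin N => ∃ e ∈ D, v ∈ e)) = D.biUnion ends := by
    ext v; simp [ends]
  rw [heq, Finset.card_biUnion]
  · rw [Finset.sum_congr rfl (fun e he => ends_card e (hD.1 e he))]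
    simp [mul_comm]
  · intro e he f hf hef
    simp only [Finset.disjoint_left]
    intro v hv hv'
    simp [ends] at hv hv'
    exact hD.2 e he f hf hef v ⟨hv, hv'⟩

lemma freeV_card {N : ℕ} (D : Finset (Sym2 (Fin N))) (hD : IsDimerConfig N D) :
    (freeV D).card = N - 2 * D.card := by
  have h2 := covered_card D hD
  have h3 := Finset.card_filter_add_card_filter_not
    (s := (Finset.univ : Finset (Fin N))) (p := fun v => ∃ e ∈ D, v ∈ e)
  have heq : freeV D = Finset.univ.filter (fun v : Fin N => ¬ ∃ e ∈ D, v ∈ e) := by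
    ext v; simp [freeV]
  simp only [Finset.card_univ, Fintype.card_fin] at h3
  rw [heq]
  omega

lemma two_card_le {N : ℕ} (D : Finset (Sym2 (Fin N))) (hD : IsDimerConfig N D) :
    2 * D.card ≤ N := by
  have h2 := covered_card D hD
  have := Finset.card_filter_le (Finset.univ : Finset (Fin N)) (fun v => ∃ e ∈ D, v ∈ e)
  simp only [Finset.card_univ, Fintype.card_fin] at this
  omega


-- edges that can be added to D
def freeE {N : ℕ} (D : Finset (Sym2 (Fin N))) : Finset (Sym2 (Fin N)) :=
  Finset.univ.filter (fun e => ¬ e.IsDiag ∧ ∀ v ∈ e, ∀ f ∈ D, v ∉ f)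

lemma mem_ends {N : ℕ} {v : Fin N} {e : Sym2 (Fin N)} : v ∈ ends e ↔ v ∈ e := by
  simp [ends]

lemma freeE_card {N : ℕ} (D : Finset (Sym2 (Fin N))) (hD : IsDimerConfig N D) :
    (freeE D).card = Nat.choose (N - 2 * D.card) 2 := by
  rw [← freeV_card D hD, ← Finset.card_powersetCard 2 (freeV D)]
  apply Finset.card_bij (fun e _ => ends e)
  · intro e he
    simp only [freeE, Finset.mem_filter, Finset.mem_univ, true_and] at he
    rw [Finset.mem_powersetCard]
    constructor
    · intro v hv
      rw [mem_ends] at hv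
      simp only [freeV, Finset.mem_filter, Finset.mem_univ, true_and]
      exact fun f hf => he.2 v hv f hf
    · exact ends_card e he.1
  · intro e he f hf h
    simp only [freeE, Finset.mem_filter, Finset.mem_univ, true_and] at he hf
    exact ends_inj e f he.1 hf.1 h
  · intro p hp
    rw [Finset.mem_powersetCard] at hp
    obtain ⟨a, b, hab, rfl⟩ := Finset.card_eq_two.mp hp.2
    refine ⟨s(a,b), ?_, ?_⟩
    · simp only [freeE, Finset.mem_filter, Finset.mem_univ, true_and]
      refine ⟨by simpa [Sym2.mk_isDiag_iff] using hab, ?_⟩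
      intro v hv f hf
      have hvp : v ∈ ({a, b} : Finset (Fin N)) := by
        rw [Sym2.mem_iff] at hv
        rcases hv with rfl | rfl <;> simp
      have := hp.1 hvp
      simp only [freeV, Finset.mem_filter, Finset.mem_univ, true_and] at this
      exact this f hf
    · ext v; simp [mem_ends, Sym2.mem_iff]


noncomputable def Mk (N k : ℕ) : ℕ :=
  ((dimerConfigs N).filter (fun D => D.card = k)).card

lemma mem_dimerConfigs {N : ℕ} {D : Finset (Sym2 (Fin N))} :
    D ∈ dimerConfigs N ↔ IsDimerConfig N D := by simp [dimerConfigs]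

lemma dimer_subset {N : ℕ} {D E : Finset (Sym2 (Fin N))} (h : E ⊆ D)
    (hD : IsDimerConfig N D) : IsDimerConfig N E :=
  ⟨fun e he => hD.1 e (h he), fun e he f hf => hD.2 e (h he) f (h hf)⟩

lemma Mk_rec (N k : ℕ) :
    (k + 1) * Mk N (k + 1) = Mk N k * Nat.choose (N - 2 * k) 2 := by
  classical
  set sk1 := (dimerConfigs N).filter (fun D => D.card = k + 1) with hsk1
  set sk := (dimerConfigs N).filter (fun D => D.card = k) with hsk
  have hL : (sk1.sigma (fun D => D)).card = Mk N (k+1) * (k+1) := by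
    rw [Finset.card_sigma]
    rw [Finset.sum_congr rfl (fun D hD => by
      simp only [hsk1, Finset.mem_filter] at hD
      exact hD.2)]
    simp [Mk, hsk1, mul_comm]
  have hR : (sk.sigma (fun D => freeE D)).card = Mk N k * Nat.choose (N - 2*k) 2 := by
    rw [Finset.card_sigma]
    rw [Finset.sum_congr rfl (fun D hD => by
      simp only [hsk, Finset.mem_filter, mem_dimerConfigs] at hD
      rw [freeE_card D hD.1, hD.2])]
    simp [Mk, hsk]
  have key : (sk1.sigma (fun D => D)).card = (sk.sigma (fun D => freeE D)).card := by
    apply Finset.card_bij (fun p _ => (⟨p.1.erase p.2, p.2⟩ : Σ _ : Finset (Sym2 (Fin N)), Sym2 (Fin N)))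
    · rintro ⟨D, e⟩ hp
      rw [Finset.mem_sigma] at hp
      obtain ⟨hD, he⟩ := hp
      simp only [hsk1, Finset.mem_filter, mem_dimerConfigs] at hD
      rw [Finset.mem_sigma]
      constructor
      · simp only [hsk, Finset.mem_filter, mem_dimerConfigs]
        refine ⟨dimer_subset (Finset.erase_subset _ _) hD.1, ?_⟩
        rw [Finset.card_erase_of_mem he, hD.2]
        omega
      · simp only [freeE, Finset.mem_filter, Finset.mem_univ, true_and]
        refine ⟨hD.1.1 e he, ?_⟩
        intro v hv f hf
        rw [Finset.mem_erase] at hf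
        intro hvf
        exact hD.1.2 e he f hf.2 (Ne.symm hf.1) v ⟨hv, hvf⟩
    · rintro ⟨D, e⟩ hp ⟨D', e'⟩ hp' heq
      rw [Finset.mem_sigma] at hp hp'
      dsimp only at hp hp' heq
      obtain ⟨h1, h2⟩ := Sigma.mk.inj_iff.mp heq
      rw [heq_iff_eq] at h2
      subst h2
      have hDD : D = D' := by
        rw [← Finset.insert_erase hp.2, ← Finset.insert_erase hp'.2, h1]
      subst hDD
      rfl
    · rintro ⟨D, e⟩ hp
      rw [Finset.mem_sigma] at hp
      obtain ⟨hD, he⟩ := hp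
      simp only [hsk, Finset.mem_filter, mem_dimerConfigs] at hD
      simp only [freeE, Finset.mem_filter, Finset.mem_univ, true_and] at he
      have henot : e ∉ D := by
        intro hcon
        exact he.2 e.out.1 (Sym2.out_fst_mem e) e hcon (Sym2.out_fst_mem e)
      refine ⟨⟨insert e D, e⟩, ?_, ?_⟩
      · rw [Finset.mem_sigma]
        constructor
        · simp only [hsk1, Finset.mem_filter, mem_dimerConfigs]
          constructor
          · constructor
            · intro f hf
              rcases Finset.mem_insert.mp hf with rfl | hf'
              · exact he.1
              · exact hD.1.1 f hf'
            · intro f hf f' hf' hne v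
              rcases Finset.mem_insert.mp hf with rfl | hf2 <;>
                rcases Finset.mem_insert.mp hf' with rfl | hf2'
              · exact absurd rfl hne
              · rintro ⟨hv1, hv2⟩; exact he.2 v hv1 f' hf2' hv2
              · rintro ⟨hv1, hv2⟩; exact he.2 v hv2 f hf2 hv1
              · exact hD.1.2 f hf2 f' hf2' hne v
          · rw [Finset.card_insert_of_notMem henot, hD.2]
        · exact Finset.mem_insert_self e D
      · have : (insert e D).erase e = D := Finset.erase_insert henot
        exact Sigma.ext this (heq_iff_eq.mpr rfl)
  calc (k+1) * Mk N (k+1) = Mk N (k+1) * (k+1) := mul_comm _ _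
    _ = _ := by rw [← hL, key, hR]


lemma geom_right (a : ℕ → ℝ) (ρ : ℝ) (hρ : 0 ≤ ρ) (kc : ℕ)
    (hstep : ∀ j, kc ≤ j → a (j+1) ≤ ρ * a j) : ∀ d, a (kc + d) ≤ ρ^d * a kc := by
  intro d
  induction d with
  | zero => simp
  | succ d ih =>
    calc a (kc + (d+1)) = a ((kc + d) + 1) := by ring_nf
      _ ≤ ρ * a (kc + d) := hstep _ (Nat.le_add_right _ _)
      _ ≤ ρ * (ρ^d * a kc) := mul_le_mul_of_nonneg_left ih hρ
      _ = ρ^(d+1) * a kc := by ring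

lemma geom_left (a : ℕ → ℝ) (ρ : ℝ) (hρ : 0 ≤ ρ) (kl : ℕ)
    (hstep : ∀ j, j + 1 ≤ kl → a j ≤ ρ * a (j+1)) :
    ∀ d, d ≤ kl → a (kl - d) ≤ ρ^d * a kl := by
  intro d
  induction d with
  | zero => simp
  | succ d ih =>
    intro hd
    have h1 : kl - (d+1) + 1 = kl - d := by omega
    calc a (kl - (d+1)) ≤ ρ * a (kl - (d+1) + 1) := hstep _ (by omega)
      _ = ρ * a (kl - d) := by rw [h1]
      _ ≤ ρ * (ρ^d * a kl) := mul_le_mul_of_nonneg_left (ih (by omega)) hρ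
      _ = ρ^(d+1) * a kl := by ring

lemma choose_two_mul (n : ℕ) : 2 * Nat.choose n 2 = n * (n - 1) := by
  rw [Nat.choose_two_right]
  apply Nat.mul_div_cancel'
  rcases Nat.even_or_odd n with he | ho
  · exact he.two_dvd.mul_right _
  · exact ((Nat.Odd.sub_odd ho odd_one)).two_dvd.mul_left _

lemma choose_two_cast (n : ℕ) (hn : 1 ≤ n) :
    (Nat.choose n 2 : ℝ) = (n : ℝ) * ((n:ℝ) - 1) / 2 := by
  have h := choose_two_mul n
  have : ((2 * Nat.choose n 2 : ℕ) : ℝ) = ((n * (n-1) : ℕ) : ℝ) := by rw [h]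
  push_cast [Nat.cast_sub hn] at this
  linarith


noncomputable def aW (h : ℝ) (N k : ℕ) : ℝ :=
  (Mk N k : ℝ) * (N : ℝ) ^ (-(k : ℤ)) * Real.exp (h * ((N : ℝ) - 2 * k))

lemma aW_nonneg (h : ℝ) (N k : ℕ) : 0 ≤ aW h N k := by
  apply mul_nonneg (mul_nonneg (Nat.cast_nonneg _) (zpow_nonneg (Nat.cast_nonneg _) _))
  exact (Real.exp_pos _).le

lemma aW_rec (h : ℝ) (N k : ℕ) (hN : 1 ≤ N) :
    ((k : ℝ) + 1) * N * Real.exp (2 * h) * aW h N (k + 1) =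
      (Nat.choose (N - 2 * k) 2 : ℝ) * aW h N k := by
  have hN0 : (N : ℝ) ≠ 0 := by positivity
  have hrec : ((k : ℝ) + 1) * (Mk N (k+1) : ℝ) = (Mk N k : ℝ) * (Nat.choose (N - 2*k) 2 : ℝ) := by
    have h0 := Mk_rec N k
    have h1 : (((k+1) * Mk N (k+1) : ℕ) : ℝ) = ((Mk N k * Nat.choose (N-2*k) 2 : ℕ) : ℝ) := by
      rw [h0]
    push_cast at h1
    linarith
  unfold aW
  have hz : (N : ℝ) ^ (-((k:ℕ)+1 : ℕ) : ℤ) * (N:ℝ) = (N : ℝ) ^ (-(k : ℤ)) := by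
    have h1 : (-(k:ℤ)) = (-(((k:ℕ)+1:ℕ)):ℤ) + 1 := by push_cast; ring
    rw [h1, zpow_add₀ hN0, zpow_one]
  have hexp : Real.exp (2*h) * Real.exp (h * ((N:ℝ) - 2 * ((k:ℕ)+1:ℕ))) =
      Real.exp (h * ((N:ℝ) - 2*k)) := by
    rw [← Real.exp_add]
    congr 1
    push_cast
    ring
  calc ((k : ℝ) + 1) * N * Real.exp (2 * h) *
        ((Mk N (k+1) : ℝ) * (N : ℝ) ^ (-((k:ℕ)+1:ℕ) : ℤ) * Real.exp (h * ((N : ℝ) - 2 * ((k:ℕ)+1:ℕ))))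
      = (((k : ℝ) + 1) * (Mk N (k+1) : ℝ)) * ((N : ℝ) ^ (-((k:ℕ)+1:ℕ) : ℤ) * N) *
        (Real.exp (2*h) * Real.exp (h * ((N:ℝ) - 2 * ((k:ℕ)+1:ℕ)))) := by ring
    _ = _ := by rw [hz, hexp, hrec]; ring


lemma sum_by_card (N : ℕ) (w : ℕ → ℝ) :
    ∑ D ∈ dimerConfigs N, w D.card = ∑ k ∈ Finset.range (N + 1), (Mk N k : ℝ) * w k := by
  rw [← Finset.sum_fiberwise_of_maps_to (g := fun D => D.card) (t := Finset.range (N+1))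
    (fun D hD => by
      simp only [Finset.mem_range]
      have := two_card_le D (by simpa [dimerConfigs] using hD)
      omega)]
  refine Finset.sum_congr rfl (fun k _ => ?_)
  rw [Finset.sum_congr rfl (fun D hD => by
    rw [show D.card = k from (Finset.mem_filter.mp hD).2]), Finset.sum_const, Mk]
  simp [mul_comm]

lemma empty_mem (N : ℕ) : (∅ : Finset (Sym2 (Fin N))) ∈ dimerConfigs N := by
  simp [dimerConfigs, IsDimerConfig]


lemma gFun_facts (h : ℝ) :
    0 < gFun h ∧ gFun h < 1 ∧ (gFun h)^2 = Real.exp (2*h) * (1 - gFun h) := by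
  have hEpos : 0 < Real.exp h := Real.exp_pos h
  have hE2 : Real.exp (2*h) = (Real.exp h)^2 := by
    rw [two_mul, Real.exp_add, sq]
  set E := Real.exp h with hE
  set s := Real.sqrt (E^2 + 4) with hs
  have hsq : s^2 = E^2 + 4 := Real.sq_sqrt (by positivity)
  have hspos : 0 < s := Real.sqrt_pos.mpr (by positivity)
  have hsgt : E < s := by
    nlinarith [hsq, hspos]
  have hg : gFun h = E / 2 * (s - E) := by rw [gFun, hE2]
  have h1 : 0 < gFun h := by
    rw [hg]
    have : 0 < s - E := by linarith
    positivity
  have hslt : s < E + 2/E := by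
    have h2 : (E + 2/E)^2 = E^2 + 4 + 4/E^2 := by field_simp; ring
    have hEp2 : 0 < E + 2/E := by positivity
    have h3 : 0 < 4/E^2 := by positivity
    have h4 : s^2 < (E + 2/E)^2 := by rw [hsq, h2]; linarith
    nlinarith [h4, hspos, hEp2]
  have h2 : gFun h < 1 := by
    rw [hg]
    calc E / 2 * (s - E) < E / 2 * (E + 2/E - E) := by
          apply mul_lt_mul_of_pos_left _ (by positivity)
          linarith
      _ = 1 := by field_simp; ring
  refine ⟨h1, h2, ?_⟩
  rw [hg, hE2]
  nlinarith [hsq]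


lemma step_right (h : ℝ) (N j : ℕ) (hN : 1 ≤ N) (c : ℝ) (hc0 : 0 ≤ c) (hc1 : c < 1)
    (hcond : (N:ℝ) - 2*j ≤ c * N) :
    aW h N (j+1) ≤ (c^2 / ((1-c) * Real.exp (2*h))) * aW h N j := by
  have hNpos : (0:ℝ) < N := by exact_mod_cast hN
  have hex : (0:ℝ) < Real.exp (2*h) := Real.exp_pos _
  have h1c : (0:ℝ) < 1 - c := by linarith
  have hPpos : (0:ℝ) < ((j:ℝ) + 1) * N * Real.exp (2*h) := by positivity
  set ρ := c^2 / ((1-c) * Real.exp (2*h)) with hρ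
  have hρ0 : 0 ≤ ρ := by positivity
  have key : (Nat.choose (N - 2*j) 2 : ℝ) ≤ ρ * (((j:ℝ) + 1) * N * Real.exp (2*h)) := by
    by_cases hcase : N - 2*j ≤ 1
    · have h0 : Nat.choose (N - 2*j) 2 = 0 := Nat.choose_eq_zero_of_lt (by omega)
      rw [h0]
      push_cast
      positivity
    · push_neg at hcase
      have h2jN : 2*j ≤ N := by omega
      have hx : ((N - 2*j : ℕ) : ℝ) = (N:ℝ) - 2*j := by
        push_cast [Nat.cast_sub h2jN]
        ring
      set x : ℝ := (N:ℝ) - 2*j with hxdef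
      clear_value x
      have hx2 : (2:ℝ) ≤ x := by
        have : (2:ℝ) ≤ ((N - 2*j : ℕ) : ℝ) := by exact_mod_cast hcase
        linarith [hx]
      rw [choose_two_cast _ (by omega), hx]
      have hρe : ρ * Real.exp (2*h) = c^2 / (1-c) := by
        rw [hρ]; field_simp
      have hxx : x^2 ≤ (c*(N:ℝ))^2 := by nlinarith [hcond, hx2]
      have hNx : (1-c)*(N:ℝ) ≤ (N:ℝ) - x := by nlinarith [hcond]
      have hkey2 : x^2 * (1 - c) ≤ c^2 * ((N:ℝ) * ((N:ℝ) - x)) := by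
        have hB := mul_le_mul_of_nonneg_left hNx (by positivity : (0:ℝ) ≤ c^2 * N)
        have hC := mul_le_mul_of_nonneg_left hxx h1c.le
        nlinarith [hB, hC]
      have hj : (j:ℝ) = ((N:ℝ) - x)/2 := by rw [hxdef]; ring
      calc x * (x - 1)/2 ≤ x^2/2 := by nlinarith [hx2]
        _ ≤ c^2/(1-c) * (((j:ℝ)+1) * N) := by
            rw [div_mul_eq_mul_div, le_div_iff₀ h1c, hj]
            have hcN : (0:ℝ) ≤ c^2 * (N:ℝ) := by positivity
            have h6 : c^2*((((N:ℝ)-x)/2 + 1) * N) = c^2*((N:ℝ)*((N:ℝ)-x))/2 + c^2*N := by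
              ring
            nlinarith [hkey2, hcN, h6]
        _ = ρ * (((j:ℝ)+1) * N * Real.exp (2*h)) := by
            rw [← hρe]; ring
  have hrec := aW_rec h N j hN
  have h2 : (((j:ℝ)+1) * N * Real.exp (2*h)) * aW h N (j+1) ≤
      (((j:ℝ)+1) * N * Real.exp (2*h)) * (ρ * aW h N j) := by
    rw [hrec]
    calc (Nat.choose (N - 2*j) 2 : ℝ) * aW h N j
        ≤ (ρ * (((j:ℝ)+1) * N * Real.exp (2*h))) * aW h N j :=
          mul_le_mul_of_nonneg_right key (aW_nonneg h N j)
      _ = (((j:ℝ)+1) * N * Real.exp (2*h)) * (ρ * aW h N j) := by ring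
  exact le_of_mul_le_mul_left h2 hPpos

lemma step_left (h : ℝ) (N j : ℕ) (hN : 1 ≤ N) (c d : ℝ) (hd0 : 0 < d) (hdc : d < c)
    (hc1 : c < 1) (hcond : c * N + 2 ≤ (N:ℝ) - 2*j) :
    aW h N j ≤ (((1-d) * Real.exp (2*h)) / d^2) * aW h N (j+1) := by
  have hNpos : (0:ℝ) < N := by exact_mod_cast hN
  have hex : (0:ℝ) < Real.exp (2*h) := Real.exp_pos _
  have h1d : (0:ℝ) < 1 - d := by linarith
  have hc0 : 0 < c := lt_trans hd0 hdc
  set ρ := ((1-d) * Real.exp (2*h)) / d^2 with hρ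
  have h2jN : 2*j + 2 ≤ N := by
    have : (2*j : ℝ) + 2 ≤ (N:ℝ) := by nlinarith [hcond, hNpos, hc0.le]
    exact_mod_cast this
  have hx : ((N - 2*j : ℕ) : ℝ) = (N:ℝ) - 2*j := by
    push_cast [Nat.cast_sub (by omega : 2*j ≤ N)]
    ring
  set x : ℝ := (N:ℝ) - 2*j with hxdef
  clear_value x
  have hx2 : (2:ℝ) ≤ x := by nlinarith [hcond, hNpos, hc0.le]
  have hxN : x ≤ N := by
    have : (0:ℝ) ≤ (j:ℝ) := Nat.cast_nonneg j
    rw [hxdef]; linarith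
  have hchoosepos : (0:ℝ) < (Nat.choose (N - 2*j) 2 : ℝ) := by
    have : 0 < Nat.choose (N - 2*j) 2 := Nat.choose_pos (by omega)
    exact_mod_cast this
  have key : (((j:ℝ) + 1) * N * Real.exp (2*h)) ≤ ρ * (Nat.choose (N - 2*j) 2 : ℝ) := by
    rw [choose_two_cast _ (by omega), hx]
    have hρe : ρ * (x * (x-1)/2) = Real.exp (2*h) * ((1-d) * (x * (x-1)) / (2 * d^2)) := by
      rw [hρ]; field_simp
    have hA : (N:ℝ) - x + 2 ≤ (1-c)*N := by nlinarith [hcond]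
    have hB : d^2 * ((N:ℝ) * ((N:ℝ) - x + 2)) ≤ d^2 * ((N:ℝ) * ((1-c)*N)) := by
      apply mul_le_mul_of_nonneg_left _ (by positivity)
      exact mul_le_mul_of_nonneg_left hA hNpos.le
    have hC : (1-d) * ((c*(N:ℝ)+2)*((c*(N:ℝ))+1)) ≤ (1-d)*(x*(x-1)) := by
      apply mul_le_mul_of_nonneg_left _ h1d.le
      apply mul_le_mul (by linarith) (by linarith) (by positivity) (by linarith [hx2])
    have hD0 : d^2*(1-c) ≤ (1-d)*c^2 := by
      nlinarith [mul_nonneg (sub_pos.mpr hdc).le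
        (show (0:ℝ) ≤ c + d - c*d by nlinarith [hd0, hc1, hc0])]
    have hD : d^2*((1-c)*(N:ℝ)^2) ≤ (1-d)*((c*(N:ℝ))^2) := by
      have h5 := mul_le_mul_of_nonneg_right hD0 (sq_nonneg (N:ℝ))
      nlinarith [h5]
    have hE : (1-d)*((c*(N:ℝ))^2) ≤ (1-d)*((c*(N:ℝ)+2)*((c*(N:ℝ))+1)) := by
      apply mul_le_mul_of_nonneg_left _ h1d.le
      nlinarith [mul_pos hc0 hNpos]
    have hkey2 : ((j:ℝ)+1) * N * (2 * d^2) ≤ (1-d) * (x * (x-1)) := by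
      have hj : (j:ℝ) = ((N:ℝ) - x)/2 := by rw [hxdef]; ring
      rw [hj]
      nlinarith [hB, hC, hD, hE]
    calc ((j:ℝ)+1) * N * Real.exp (2*h)
        ≤ ((1-d) * (x * (x-1)) / (2 * d^2)) * Real.exp (2*h) := by
          apply mul_le_mul_of_nonneg_right _ hex.le
          rw [le_div_iff₀ (by positivity)]
          linarith [hkey2]
      _ = ρ * (x*(x-1)/2) := by rw [hρe]; ring
  have hrec := aW_rec h N j hN
  have h2 : (Nat.choose (N - 2*j) 2 : ℝ) * aW h N j ≤
      (Nat.choose (N - 2*j) 2 : ℝ) * (ρ * aW h N (j+1)) := by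
    rw [← hrec]
    calc (((j:ℝ)+1) * N * Real.exp (2*h)) * aW h N (j+1)
        ≤ (ρ * (Nat.choose (N - 2*j) 2 : ℝ)) * aW h N (j+1) :=
          mul_le_mul_of_nonneg_right key (aW_nonneg h N (j+1))
      _ = (Nat.choose (N - 2*j) 2 : ℝ) * (ρ * aW h N (j+1)) := by ring
  exact le_of_mul_le_mul_left h2 hchoosepos


noncomputable def dimerZ (h : ℝ) (N : ℕ) : ℝ := ∑ k ∈ Finset.range (N+1), aW h N k

lemma Mk_zero (N : ℕ) : Mk N 0 = 1 := by
  unfold Mk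
  have h1 : (dimerConfigs N).filter (fun D => D.card = 0) = {∅} := by
    ext D
    simp only [Finset.mem_filter, Finset.mem_singleton, Finset.card_eq_zero]
    constructor
    · exact fun h => h.2
    · rintro rfl
      refine ⟨?_, rfl⟩
      simp [dimerConfigs, IsDimerConfig]
  rw [h1, Finset.card_singleton]

lemma dimerZ_pos (h : ℝ) (N : ℕ) : 0 < dimerZ h N := by
  unfold dimerZ
  apply Finset.sum_pos' (fun k _ => aW_nonneg h N k)
  refine ⟨0, Finset.mem_range.mpr (by omega), ?_⟩
  unfold aW
  rw [Mk_zero]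
  push_cast
  simp only [neg_zero, zpow_zero]
  have : (0:ℝ) < Real.exp (h * ((N:ℝ) - 2*0)) := Real.exp_pos _
  nlinarith [this]

lemma Z0_group (h : ℝ) (N : ℕ) : Z0 N h = dimerZ h N := by
  have e := sum_by_card N (fun k : ℕ => (N:ℝ)^(-(k:ℤ)) * Real.exp (h * ((N:ℝ) - 2*(k:ℝ))))
  unfold Z0 dimerZ aW
  rw [show (∑ D ∈ dimerConfigs N, (N : ℝ) ^ (-(D.card : ℤ)) *
        Real.exp (h * monomerCount N D)) =
      ∑ D ∈ dimerConfigs N, (fun k : ℕ => (N:ℝ)^(-(k:ℤ)) *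
        Real.exp (h * ((N:ℝ) - 2*(k:ℝ)))) D.card from
    Finset.sum_congr rfl (fun D _ => by simp [monomerCount])]
  rw [e]
  exact Finset.sum_congr rfl (fun k _ => by ring)

lemma numer_group (h : ℝ) (N : ℕ) (ψ : ℝ → ℝ) :
    ∑ D ∈ dimerConfigs N, (N : ℝ) ^ (-(D.card : ℤ)) *
        Real.exp (h * monomerCount N D) * ψ (monomerDensity N D) =
      ∑ k ∈ Finset.range (N+1), aW h N k * ψ (((N:ℝ) - 2*(k:ℝ))/N) := by
  have e := sum_by_card N (fun k : ℕ => (N:ℝ)^(-(k:ℤ)) *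
    Real.exp (h * ((N:ℝ) - 2*(k:ℝ))) * ψ (((N:ℝ) - 2*(k:ℝ))/N))
  unfold aW
  rw [show (∑ D ∈ dimerConfigs N, (N : ℝ) ^ (-(D.card : ℤ)) *
        Real.exp (h * monomerCount N D) * ψ (monomerDensity N D)) =
      ∑ D ∈ dimerConfigs N, (fun k : ℕ => (N:ℝ)^(-(k:ℤ)) *
        Real.exp (h * ((N:ℝ) - 2*(k:ℝ))) * ψ (((N:ℝ) - 2*(k:ℝ))/N)) D.card from
    Finset.sum_congr rfl (fun D _ => by simp [monomerCount, monomerDensity])]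
  rw [e]
  exact Finset.sum_congr rfl (fun k _ => by ring)


lemma dimer_conc (h ε : ℝ) (hε : 0 < ε) (hεg : ε ≤ gFun h) (hεg' : ε ≤ 1 - gFun h) :
    Tendsto (fun N : ℕ =>
      (∑ k ∈ (Finset.range (N+1)).filter
          (fun k : ℕ => ε < |((N:ℝ) - 2*(k:ℝ))/N - gFun h|), aW h N k) / dimerZ h N)
      atTop (nhds 0) := by
  obtain ⟨hg0, hg1, hgsq⟩ := gFun_facts h
  have hex : (0:ℝ) < Real.exp (2*h) := Real.exp_pos _
  obtain ⟨c₁, hc₁⟩ : ∃ x : ℝ, x = gFun h - ε/4 := ⟨_, rfl⟩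
  obtain ⟨dd, hdd⟩ : ∃ x : ℝ, x = gFun h + ε/8 := ⟨_, rfl⟩
  obtain ⟨c₂, hc₂⟩ : ∃ x : ℝ, x = gFun h + ε/4 := ⟨_, rfl⟩
  obtain ⟨ρR, hρR⟩ : ∃ x : ℝ, x = c₁^2 / ((1-c₁) * Real.exp (2*h)) := ⟨_, rfl⟩
  obtain ⟨ρL, hρL⟩ : ∃ x : ℝ, x = ((1-dd) * Real.exp (2*h)) / dd^2 := ⟨_, rfl⟩
  have hc₁0 : 0 < c₁ := by rw [hc₁]; linarith
  have hc₁1 : c₁ < 1 := by rw [hc₁]; linarith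
  have h1c₁ : 0 < 1 - c₁ := by linarith
  have hdd0 : 0 < dd := by rw [hdd]; linarith
  have h1dd : 0 < 1 - dd := by rw [hdd]; linarith
  have hddc₂ : dd < c₂ := by rw [hdd, hc₂]; linarith
  have hc₂1 : c₂ < 1 := by rw [hc₂]; linarith
  have hρR0 : 0 < ρR := by
    rw [hρR]; exact div_pos (pow_pos hc₁0 2) (mul_pos h1c₁ hex)
  have hρR1 : ρR < 1 := by
    rw [hρR, div_lt_one (mul_pos h1c₁ hex)]
    rw [hc₁] at *
    nlinarith [hgsq, hg0, hε, hεg, hex]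
  have hρL0 : 0 < ρL := by
    rw [hρL]; exact div_pos (mul_pos h1dd hex) (pow_pos hdd0 2)
  have hρL1 : ρL < 1 := by
    rw [hρL, div_lt_one (pow_pos hdd0 2)]
    rw [hdd] at *
    nlinarith [hgsq, hg0, hε, hεg', hex]
  obtain ⟨ρ₀, hρ₀⟩ : ∃ x : ℝ, x = max ρR ρL := ⟨_, rfl⟩
  have hρ₀0 : 0 < ρ₀ := by rw [hρ₀]; exact lt_max_of_lt_left hρR0
  have hρ₀1 : ρ₀ < 1 := by rw [hρ₀]; exact max_lt hρR1 hρL1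
  have hρRρ₀ : ρR ≤ ρ₀ := by rw [hρ₀]; exact le_max_left _ _
  have hρLρ₀ : ρL ≤ ρ₀ := by rw [hρ₀]; exact le_max_right _ _
  obtain ⟨r, hr⟩ : ∃ x : ℝ, x = ρ₀ ^ (ε/4 : ℝ) := ⟨_, rfl⟩
  have hr0 : 0 < r := by rw [hr]; exact Real.rpow_pos_of_pos hρ₀0 _
  have hr1 : r < 1 := by rw [hr]; exact Real.rpow_lt_one hρ₀0.le hρ₀1 (by positivity)
  have hlim : Tendsto (fun N : ℕ => ρ₀⁻¹ * (((N:ℝ) + 1) * r^N)) atTop (nhds 0) := by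
    have h1 : Tendsto (fun N : ℕ => (N:ℝ) * r^N) atTop (nhds 0) :=
      tendsto_self_mul_const_pow_of_lt_one hr0.le hr1
    have h2 : Tendsto (fun N : ℕ => r^N) atTop (nhds 0) :=
      tendsto_pow_atTop_nhds_zero_of_lt_one hr0.le hr1
    have h3 : Tendsto (fun N : ℕ => ((N:ℝ)+1) * r^N) atTop (nhds 0) := by
      have h4 := h1.add h2
      simp only [add_zero] at h4
      convert h4 using 2 with N
      ring
    have h5 := (tendsto_const_nhds (x := ρ₀⁻¹) (f := atTop (α := ℕ))).mul h3
    simpa using h5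
  apply squeeze_zero' _ _ hlim
  · filter_upwards [eventually_ge_atTop 1] with N hN
    exact div_nonneg (Finset.sum_nonneg (fun k _ => aW_nonneg h N k)) (dimerZ_pos h N).le
  · -- main bound
    have hev : ∀ᶠ N : ℕ in atTop, (16/ε + 2 : ℝ) ≤ (N:ℝ) :=
      (tendsto_natCast_atTop_atTop (R := ℝ)).eventually_ge_atTop _
    filter_upwards [hev, eventually_ge_atTop 2] with N hNε hN2
    have hN1 : 1 ≤ N := by omega
    have hNpos : (0:ℝ) < N := by positivity
    have hN2' : (2:ℝ) ≤ N := by exact_mod_cast hN2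
    have hZpos := dimerZ_pos h N
    obtain ⟨eN, heN⟩ : ∃ x : ℕ, x = ⌊ε/4 * N⌋₊ := ⟨_, rfl⟩
    have heN_le : (eN : ℝ) ≤ ε/4 * N := by rw [heN]; exact Nat.floor_le (by positivity)
    have heN_lb : ε/4 * N - 1 ≤ (eN : ℝ) := by
      rw [heN]
      have := Nat.lt_floor_add_one (ε/4 * N)
      linarith
    have hεN : (16:ℝ) ≤ ε * N := by
      have h6 : (16/ε : ℝ) ≤ N := by linarith
      calc (16:ℝ) = ε * (16/ε) := by field_simp
        _ ≤ ε * N := mul_le_mul_of_nonneg_left h6 hε.le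
    obtain ⟨kc, hkc⟩ : ∃ x : ℕ, x = ⌈(1-gFun h+ε/4) * N/2⌉₊ := ⟨_, rfl⟩
    obtain ⟨kl, hkl⟩ : ∃ x : ℕ, x = ⌊(1-gFun h-ε/4) * N/2⌋₊ := ⟨_, rfl⟩
    have hα0 : (0:ℝ) ≤ (1-gFun h+ε/4) * N/2 := by
      have h7 : (0:ℝ) ≤ 1 - gFun h + ε/4 := by linarith
      positivity
    have hkc_ub : (kc : ℝ) ≤ (1-gFun h+ε/4) * N/2 + 1 := by
      rw [hkc]; exact (Nat.ceil_lt_add_one hα0).le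
    have hkc_lb : (1-gFun h+ε/4) * N/2 ≤ (kc:ℝ) := by rw [hkc]; exact Nat.le_ceil _
    have hkl_ub : (kl : ℝ) ≤ (1-gFun h-ε/4) * N/2 := by
      rw [hkl]
      apply Nat.floor_le
      have h7 : (0:ℝ) ≤ 1 - gFun h - ε/4 := by linarith
      positivity
    have hkl_lb : (1-gFun h-ε/4) * N/2 - 1 ≤ (kl:ℝ) := by
      rw [hkl]
      have := Nat.lt_floor_add_one ((1-gFun h-ε/4) * N/2)
      linarith
    have hkcN : kc ≤ N := by
      have h7 : (kc:ℝ) ≤ (N:ℝ) := by nlinarith [hkc_ub, hg0, hε, hNpos, hεg]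
      exact_mod_cast h7
    have hklN : kl ≤ N := by
      have h7 : (kl:ℝ) ≤ (N:ℝ) := by nlinarith [hkl_ub, hg0, hε, hNpos]
      exact_mod_cast h7
    have hkcZ : aW h N kc ≤ dimerZ h N :=
      Finset.single_le_sum (fun k _ => aW_nonneg h N k) (Finset.mem_range.mpr (by omega))
    have hklZ : aW h N kl ≤ dimerZ h N :=
      Finset.single_le_sum (fun k _ => aW_nonneg h N k) (Finset.mem_range.mpr (by omega))
    have hstepR : ∀ j, kc ≤ j → aW h N (j+1) ≤ ρR * aW h N j := by
      intro j hj
      rw [hρR]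
      apply step_right h N j hN1 c₁ hc₁0.le hc₁1
      have hj' : (kc:ℝ) ≤ j := by exact_mod_cast hj
      rw [hc₁]
      nlinarith [hkc_lb, hj']
    have hstepL : ∀ j, j + 1 ≤ kl → aW h N j ≤ ρL * aW h N (j+1) := by
      intro j hj
      rw [hρL]
      apply step_left h N j hN1 c₂ dd hdd0 hddc₂ hc₂1
      have hj' : (j:ℝ) + 1 ≤ kl := by exact_mod_cast hj
      rw [hc₂]
      nlinarith [hkl_ub, hj']
    have hbad : ∀ k ∈ (Finset.range (N+1)).filter
        (fun k : ℕ => ε < |((N:ℝ) - 2*(k:ℝ))/N - gFun h|),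
        aW h N k ≤ ρ₀^eN * dimerZ h N := by
      intro k hk
      rw [Finset.mem_filter, Finset.mem_range] at hk
      obtain ⟨hkN, hkabs⟩ := hk
      have hρ₀eN : (0:ℝ) ≤ ρ₀^eN := pow_nonneg hρ₀0.le _
      rcases lt_abs.mp hkabs with hhigh | hlow
      · -- x - g > ε : k small side
        have hk_ub : (k:ℝ) < (1-gFun h-ε) * N/2 := by
          have h8a : gFun h + ε < ((N:ℝ) - 2*(k:ℝ))/N := by linarith
          have h8 : (gFun h + ε) * N < (N:ℝ) - 2*(k:ℝ) := by
            calc (gFun h + ε) * N < (((N:ℝ) - 2*(k:ℝ))/N) * N :=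
                  mul_lt_mul_of_pos_right h8a hNpos
              _ = (N:ℝ) - 2*(k:ℝ) := by field_simp
          linarith
        have hkkl : k + eN ≤ kl ∧ eN ≤ kl - k ∧ k ≤ kl := by
          have h9 : ((k + eN : ℕ):ℝ) < (kl:ℝ) := by
            push_cast
            linarith [hkl_lb, heN_le, hεN, hk_ub]
          have h10 : k + eN < kl := by exact_mod_cast h9
          exact ⟨by omega, by omega, by omega⟩
        obtain ⟨h11, h12, h13⟩ := hkkl
        have hgeo := geom_left (aW h N) ρL hρL0.le kl hstepL (kl - k) (by omega)
        rw [show kl - (kl - k) = k by omega] at hgeo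
        calc aW h N k ≤ ρL^(kl-k) * aW h N kl := hgeo
          _ ≤ ρ₀^eN * aW h N kl := by
              apply mul_le_mul_of_nonneg_right _ (aW_nonneg h N kl)
              calc ρL^(kl-k) ≤ ρL^eN := pow_le_pow_of_le_one hρL0.le hρL1.le h12
                _ ≤ ρ₀^eN := pow_le_pow_left₀ hρL0.le hρLρ₀ eN
          _ ≤ ρ₀^eN * dimerZ h N := mul_le_mul_of_nonneg_left hklZ hρ₀eN
      · -- -(x - g) > ε : k large side
        have hk_lb : (1-gFun h+ε) * N/2 < (k:ℝ) := by
          have h8a : ((N:ℝ) - 2*(k:ℝ))/N < gFun h - ε := by linarith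
          have h8 : (N:ℝ) - 2*(k:ℝ) < (gFun h - ε) * N := by
            calc (N:ℝ) - 2*(k:ℝ) = (((N:ℝ) - 2*(k:ℝ))/N) * N := by field_simp
              _ < (gFun h - ε) * N := mul_lt_mul_of_pos_right h8a hNpos
          linarith
        have hkkc : kc + eN ≤ k ∧ eN ≤ k - kc ∧ kc ≤ k := by
          have h9 : ((kc + eN : ℕ):ℝ) < (k:ℝ) := by
            push_cast
            linarith [hkc_ub, heN_le, hεN, hk_lb]
          have h10 : kc + eN < k := by exact_mod_cast h9
          exact ⟨by omega, by omega, by omega⟩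
        obtain ⟨h11, h12, h13⟩ := hkkc
        have hgeo := geom_right (aW h N) ρR hρR0.le kc hstepR (k - kc)
        rw [show kc + (k - kc) = k by omega] at hgeo
        calc aW h N k ≤ ρR^(k-kc) * aW h N kc := hgeo
          _ ≤ ρ₀^eN * aW h N kc := by
              apply mul_le_mul_of_nonneg_right _ (aW_nonneg h N kc)
              calc ρR^(k-kc) ≤ ρR^eN := pow_le_pow_of_le_one hρR0.le hρR1.le h12
                _ ≤ ρ₀^eN := pow_le_pow_left₀ hρR0.le hρRρ₀ eN
          _ ≤ ρ₀^eN * dimerZ h N := mul_le_mul_of_nonneg_left hkcZ hρ₀eN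
    -- sum the bad terms
    have hsum : (∑ k ∈ (Finset.range (N+1)).filter
          (fun k : ℕ => ε < |((N:ℝ) - 2*(k:ℝ))/N - gFun h|), aW h N k)
        ≤ ((N:ℝ)+1) * (ρ₀^eN * dimerZ h N) := by
      calc (∑ k ∈ (Finset.range (N+1)).filter
            (fun k : ℕ => ε < |((N:ℝ) - 2*(k:ℝ))/N - gFun h|), aW h N k)
          ≤ ((Finset.range (N+1)).filter
            (fun k : ℕ => ε < |((N:ℝ) - 2*(k:ℝ))/N - gFun h|)).card • (ρ₀^eN * dimerZ h N) :=
            Finset.sum_le_card_nsmul _ _ _ hbad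
        _ = (((Finset.range (N+1)).filter
            (fun k : ℕ => ε < |((N:ℝ) - 2*(k:ℝ))/N - gFun h|)).card : ℝ) * (ρ₀^eN * dimerZ h N) := by
            rw [nsmul_eq_mul]
        _ ≤ ((N:ℝ)+1) * (ρ₀^eN * dimerZ h N) := by
            apply mul_le_mul_of_nonneg_right _ (by positivity)
            have h14 : ((Finset.range (N+1)).filter
                (fun k : ℕ => ε < |((N:ℝ) - 2*(k:ℝ))/N - gFun h|)).card ≤ N+1 := by
              calc _ ≤ (Finset.range (N+1)).card := Finset.card_filter_le _ _
                _ = N+1 := Finset.card_range _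
            exact_mod_cast h14
    -- geometric decay
    have hgeom : ρ₀^eN ≤ ρ₀⁻¹ * r^N := by
      have e1 : (ρ₀:ℝ)^eN = ρ₀ ^ ((eN:ℝ)) := (Real.rpow_natCast ρ₀ eN).symm
      have e2 : ρ₀ ^ ((eN:ℝ)) ≤ ρ₀ ^ (ε/4 * N - 1 : ℝ) :=
        Real.rpow_le_rpow_of_exponent_ge hρ₀0 hρ₀1.le heN_lb
      have e3 : ρ₀ ^ (ε/4 * N - 1 : ℝ) = ρ₀⁻¹ * r^N := by
        rw [Real.rpow_sub hρ₀0, Real.rpow_one]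
        rw [hr, ← Real.rpow_natCast (ρ₀ ^ (ε/4:ℝ)) N, ← Real.rpow_mul hρ₀0.le]
        ring
      rw [e1, ← e3]
      exact e2
    rw [div_le_iff₀ hZpos]
    calc (∑ k ∈ (Finset.range (N+1)).filter
          (fun k : ℕ => ε < |((N:ℝ) - 2*(k:ℝ))/N - gFun h|), aW h N k)
        ≤ ((N:ℝ)+1) * (ρ₀^eN * dimerZ h N) := hsum
      _ ≤ ((N:ℝ)+1) * ((ρ₀⁻¹ * r^N) * dimerZ h N) := by
          apply mul_le_mul_of_nonneg_left _ (by positivity)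
          exact mul_le_mul_of_nonneg_right hgeom hZpos.le
      _ = ρ₀⁻¹ * (((N:ℝ)+1) * r^N) * dimerZ h N := by ring

end DimerAux


/-- law of large numbers for the pure hard-core model (`J = 0`):
under `μ_N⁰`, the monomer density converges in distribution to `δ_{g(h)}`. -/
theorem hardcore_lln (h : ℝ) :
    ∀ ψ : ℝ → ℝ, Continuous ψ → (∃ C : ℝ, ∀ x : ℝ, |ψ x| ≤ C) →
      Tendsto (fun N : ℕ =>
          (∑ D ∈ dimerConfigs N, (N : ℝ) ^ (-(D.card : ℤ)) *
            Real.exp (h * monomerCount N D) * ψ (monomerDensity N D)) / Z0 N h)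
        atTop (nhds (ψ (gFun h))) := by
  intro ψ hψ hbdd
  obtain ⟨C, hC⟩ := hbdd
  have hC0 : 0 ≤ C := le_trans (abs_nonneg (ψ 0)) (hC 0)
  obtain ⟨hg0, hg1, _⟩ := gFun_facts h
  rw [Metric.tendsto_atTop]
  intro ε' hε'
  obtain ⟨δ, hδ0, hδ⟩ := Metric.continuousAt_iff.mp (hψ.continuousAt (x := gFun h))
    (ε'/2) (by linarith)
  obtain ⟨ε, hεdef⟩ : ∃ x : ℝ, x = min (δ/2) (min (gFun h) (1 - gFun h)) := ⟨_, rfl⟩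
  have hε0 : 0 < ε := by
    rw [hεdef]
    exact lt_min (by linarith) (lt_min hg0 (by linarith))
  have hεg : ε ≤ gFun h := by
    rw [hεdef]; exact le_trans (min_le_right _ _) (min_le_left _ _)
  have hεg' : ε ≤ 1 - gFun h := by
    rw [hεdef]; exact le_trans (min_le_right _ _) (min_le_right _ _)
  have hεδ : ε ≤ δ/2 := by rw [hεdef]; exact min_le_left _ _
  have hconc := dimer_conc h ε hε0 hεg hεg'
  rw [Metric.tendsto_atTop] at hconc
  obtain ⟨N₁, hN₁⟩ := hconc (ε'/(2*(2*C+1))) (by positivity)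
  refine ⟨max N₁ 1, fun N hN => ?_⟩
  have hN1 : 1 ≤ N := le_trans (le_max_right _ _) hN
  have hNN₁ : N₁ ≤ N := le_trans (le_max_left _ _) hN
  have hNpos : (0:ℝ) < N := by
    have : (1:ℕ) ≤ N := hN1
    exact_mod_cast Nat.lt_of_lt_of_le Nat.zero_lt_one this
  have hZ := dimerZ_pos h N
  rw [Real.dist_eq, numer_group h N ψ, Z0_group h N]
  -- notation
  have hP := hN₁ N hNN₁
  rw [Real.dist_eq, sub_zero] at hP
  have hPnn : 0 ≤ (∑ k ∈ (Finset.range (N+1)).filter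
      (fun k : ℕ => ε < |((N:ℝ) - 2*(k:ℝ))/N - gFun h|), aW h N k) / dimerZ h N :=
    div_nonneg (Finset.sum_nonneg (fun k _ => aW_nonneg h N k)) hZ.le
  rw [abs_of_nonneg hPnn] at hP
  -- decomposition
  have hsplit : (∑ k ∈ Finset.range (N+1), aW h N k * ψ (((N:ℝ) - 2*(k:ℝ))/N)) / dimerZ h N
      - ψ (gFun h) =
      (∑ k ∈ Finset.range (N+1), aW h N k * (ψ (((N:ℝ) - 2*(k:ℝ))/N) - ψ (gFun h)))
        / dimerZ h N := by
    rw [eq_div_iff hZ.ne', sub_mul, div_mul_cancel₀ _ hZ.ne']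
    have e1 : ∑ k ∈ Finset.range (N+1), aW h N k * (ψ (((N:ℝ) - 2*(k:ℝ))/N) - ψ (gFun h)) =
        (∑ k ∈ Finset.range (N+1), aW h N k * ψ (((N:ℝ) - 2*(k:ℝ))/N)) -
        (∑ k ∈ Finset.range (N+1), aW h N k) * ψ (gFun h) := by
      rw [Finset.sum_mul]
      rw [← Finset.sum_sub_distrib]
      exact Finset.sum_congr rfl (fun k _ => by ring)
    rw [e1]
    unfold dimerZ
    ring
  rw [hsplit, abs_div, abs_of_pos hZ]
  have habsle : |∑ k ∈ Finset.range (N+1), aW h N k * (ψ (((N:ℝ) - 2*(k:ℝ))/N) - ψ (gFun h))|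
      ≤ 2*C * (∑ k ∈ (Finset.range (N+1)).filter
          (fun k : ℕ => ε < |((N:ℝ) - 2*(k:ℝ))/N - gFun h|), aW h N k)
        + (ε'/2) * dimerZ h N := by
    calc |∑ k ∈ Finset.range (N+1), aW h N k * (ψ (((N:ℝ) - 2*(k:ℝ))/N) - ψ (gFun h))|
        ≤ ∑ k ∈ Finset.range (N+1), |aW h N k * (ψ (((N:ℝ) - 2*(k:ℝ))/N) - ψ (gFun h))| :=
          Finset.abs_sum_le_sum_abs _ _
      _ = ∑ k ∈ Finset.range (N+1), aW h N k * |ψ (((N:ℝ) - 2*(k:ℝ))/N) - ψ (gFun h)| := by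
          refine Finset.sum_congr rfl (fun k _ => ?_)
          rw [abs_mul, abs_of_nonneg (aW_nonneg h N k)]
      _ = (∑ k ∈ (Finset.range (N+1)).filter
            (fun k : ℕ => ε < |((N:ℝ) - 2*(k:ℝ))/N - gFun h|),
              aW h N k * |ψ (((N:ℝ) - 2*(k:ℝ))/N) - ψ (gFun h)|)
          + (∑ k ∈ (Finset.range (N+1)).filter
            (fun k : ℕ => ¬ (ε < |((N:ℝ) - 2*(k:ℝ))/N - gFun h|)),
              aW h N k * |ψ (((N:ℝ) - 2*(k:ℝ))/N) - ψ (gFun h)|) :=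
          (Finset.sum_filter_add_sum_filter_not _ _ _).symm
      _ ≤ (∑ k ∈ (Finset.range (N+1)).filter
            (fun k : ℕ => ε < |((N:ℝ) - 2*(k:ℝ))/N - gFun h|), aW h N k * (2*C))
          + (∑ k ∈ (Finset.range (N+1)).filter
            (fun k : ℕ => ¬ (ε < |((N:ℝ) - 2*(k:ℝ))/N - gFun h|)), aW h N k * (ε'/2)) := by
          apply add_le_add
          · apply Finset.sum_le_sum
            intro k _
            apply mul_le_mul_of_nonneg_left _ (aW_nonneg h N k)
            calc |ψ (((N:ℝ) - 2*(k:ℝ))/N) - ψ (gFun h)|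
                ≤ |ψ (((N:ℝ) - 2*(k:ℝ))/N)| + |ψ (gFun h)| := abs_sub _ _
              _ ≤ C + C := add_le_add (hC _) (hC _)
              _ = 2*C := by ring
          · apply Finset.sum_le_sum
            intro k hk
            rw [Finset.mem_filter] at hk
            apply mul_le_mul_of_nonneg_left _ (aW_nonneg h N k)
            have hdist : dist (((N:ℝ) - 2*(k:ℝ))/N) (gFun h) < δ := by
              rw [Real.dist_eq]
              have := not_lt.mp hk.2
              linarith
            exact (hδ hdist).le
      _ = 2*C * (∑ k ∈ (Finset.range (N+1)).filter
            (fun k : ℕ => ε < |((N:ℝ) - 2*(k:ℝ))/N - gFun h|), aW h N k)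
          + (ε'/2) * (∑ k ∈ (Finset.range (N+1)).filter
            (fun k : ℕ => ¬ (ε < |((N:ℝ) - 2*(k:ℝ))/N - gFun h|)), aW h N k) := by
          rw [← Finset.sum_mul, ← Finset.sum_mul]
          ring
      _ ≤ _ := by
          apply add_le_add_right
          apply mul_le_mul_of_nonneg_left _ (by linarith)
          unfold dimerZ
          exact Finset.sum_le_sum_of_subset_of_nonneg (Finset.filter_subset _ _)
            (fun k hk _ => aW_nonneg h N k)
  -- conclude
  have hfinal : |∑ k ∈ Finset.range (N+1), aW h N k *
        (ψ (((N:ℝ) - 2*(k:ℝ))/N) - ψ (gFun h))| / dimerZ h N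
      ≤ 2*C * ((∑ k ∈ (Finset.range (N+1)).filter
          (fun k : ℕ => ε < |((N:ℝ) - 2*(k:ℝ))/N - gFun h|), aW h N k) / dimerZ h N)
        + ε'/2 := by
    rw [div_le_iff₀ hZ]
    calc |∑ k ∈ Finset.range (N+1), aW h N k * (ψ (((N:ℝ) - 2*(k:ℝ))/N) - ψ (gFun h))|
        ≤ _ := habsle
      _ = (2*C * ((∑ k ∈ (Finset.range (N+1)).filter
          (fun k : ℕ => ε < |((N:ℝ) - 2*(k:ℝ))/N - gFun h|), aW h N k) / dimerZ h N)
            + ε'/2) * dimerZ h N := by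
          field_simp
  have h2CP : 2*C * ((∑ k ∈ (Finset.range (N+1)).filter
      (fun k : ℕ => ε < |((N:ℝ) - 2*(k:ℝ))/N - gFun h|), aW h N k) / dimerZ h N)
      ≤ 2*C * (ε'/(2*(2*C+1))) :=
    mul_le_mul_of_nonneg_left hP.le (by linarith)
  have hnum : 2*C * (ε'/(2*(2*C+1))) < ε'/2 := by
    have hd : (0:ℝ) < 2*(2*C+1) := by linarith
    have e : 2*C*(ε'/(2*(2*C+1))) * (2*(2*C+1)) = 2*C*ε' := by field_simp
    nlinarith [e, hd, hε', hC0]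
  linarith [hfinal, h2CP, hnum]


end
end

section
/- Fix h ∈ ℝ and J > 0. Assume the variational pressure p̃ has a unique global maximum point m* ∈ ℝ, and that for some integer k ≥ 1 the derivatives ∂^j p̃(m*) vanish for 1 ≤ j ≤ 2k−1 while ∂^{2k} p̃(m*) < 0. Then under the Gibbs measures μ_N of the IMD model, the monomer density m_N converges in distribution to the Dirac measure δ_{m*}: for every bounded continuous ψ : ℝ → ℝ, Σ_{D ∈ 𝒟_N} μ_N(D)·ψ(m_N(D)) → ψ(m*) as N → ∞. -/
open MeasureTheory Filter Real

noncomputable section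

namespace IMD

open Finset
variable {N : ℕ}

def edgeVerts (e : Sym2 (Fin N)) : Finset (Fin N) :=
  Finset.univ.filter (fun v => v ∈ e)

lemma mem_edgeVerts {e : Sym2 (Fin N)} {v : Fin N} : v ∈ edgeVerts e ↔ v ∈ e := by
  simp [edgeVerts]

lemma edgeVerts_card {e : Sym2 (Fin N)} (he : ¬ e.IsDiag) : (edgeVerts e).card = 2 := by
  induction e with
  | _ a b =>
    have hab : a ≠ b := by simpa using he
    have : edgeVerts (s(a,b)) = {a, b} := by
      ext v; simp [mem_edgeVerts, Sym2.mem_iff]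
    rw [this, card_insert_of_notMem (by simp [hab]), card_singleton]

def vertSet (D : Finset (Sym2 (Fin N))) : Finset (Fin N) := D.biUnion edgeVerts

lemma vertSet_card {D : Finset (Sym2 (Fin N))} (hD : IsDimerConfig N D) :
    (vertSet D).card = 2 * D.card := by
  rw [vertSet, card_biUnion]
  · rw [Finset.sum_congr rfl (fun e he => edgeVerts_card (hD.1 e he)), sum_const,
      smul_eq_mul, mul_comm]
  · intro x hx y hy hxy
    rw [Function.onFun, Finset.disjoint_left]
    intro v hvx hvy
    exact hD.2 x hx y hy hxy v ⟨mem_edgeVerts.1 hvx, mem_edgeVerts.1 hvy⟩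

lemma mem_vertSet {D : Finset (Sym2 (Fin N))} {v : Fin N} :
    v ∈ vertSet D ↔ ∃ e ∈ D, v ∈ e := by
  simp [vertSet, mem_edgeVerts]

lemma two_mul_card_le {D : Finset (Sym2 (Fin N))} (hD : IsDimerConfig N D) :
    2 * D.card ≤ N := by
  calc 2 * D.card = (vertSet D).card := (vertSet_card hD).symm
    _ ≤ Fintype.card (Fin N) := Finset.card_le_univ _
    _ = N := Fintype.card_fin N

open Classical in
noncomputable def freeEdges (D : Finset (Sym2 (Fin N))) : Finset (Sym2 (Fin N)) :=
  Finset.univ.filter (fun e => ¬ e.IsDiag ∧ ∀ v ∈ e, v ∉ vertSet D)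

open Classical in
lemma mem_freeEdges {D : Finset (Sym2 (Fin N))} {e : Sym2 (Fin N)} :
    e ∈ freeEdges D ↔ ¬ e.IsDiag ∧ ∀ v ∈ e, v ∉ vertSet D := by
  simp [freeEdges]

/-- counting nondiagonal sym2 elements supported in a finset -/
lemma card_nondiag (S : Finset (Fin N)) :
    (Finset.univ.filter
      (fun e : Sym2 (Fin N) => ¬ e.IsDiag ∧ ∀ v ∈ e, v ∈ S)).card = S.card.choose 2 := by
  classical
  have h1 : Finset.univ.filter
      (fun e : Sym2 (Fin N) => ¬ e.IsDiag ∧ ∀ v ∈ e, v ∈ S)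
      = S.sym2.filter (fun e => ¬ e.IsDiag) := by
    ext e
    simp [Finset.mem_sym2_iff, and_comm]
  have h3 : (S.sym2.filter (fun e => e.IsDiag)).card = S.card := by
    have himg : S.sym2.filter (fun e => e.IsDiag) = S.image (fun v => s(v,v)) := by
      ext e
      induction e with
      | _ a b =>
        simp only [Finset.mem_filter, Finset.mem_sym2_iff, Finset.mem_image,
          Sym2.isDiag_iff_proj_eq]
        constructor
        · rintro ⟨hmem, hab⟩
          subst hab
          exact ⟨a, hmem a (by simp), rfl⟩
        · rintro ⟨v, hv, hve⟩
          rw [Sym2.eq_iff] at hve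
          rcases hve with ⟨rfl, rfl⟩ | ⟨rfl, rfl⟩
          · exact ⟨fun y hy => by simpa using
              (by rcases Sym2.mem_iff.1 hy with rfl | rfl <;> exact hv), rfl⟩
          · exact ⟨fun y hy => by simpa using
              (by rcases Sym2.mem_iff.1 hy with rfl | rfl <;> exact hv), rfl⟩
    rw [himg, Finset.card_image_of_injective]
    intro a b hab
    simpa [Sym2.eq_iff] using hab
  have h4 := Finset.card_filter_add_card_filter_not
    (s := S.sym2) (p := fun e => e.IsDiag)
  have h5 := Finset.card_sym2 S
  have h6 : (S.card + 1).choose 2 = S.card.choose 2 + S.card := by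
    rw [Nat.choose_succ_succ]
    simp [Nat.add_comm]
  rw [h1]
  omega

lemma card_freeEdges {D : Finset (Sym2 (Fin N))} (hD : IsDimerConfig N D) :
    (freeEdges D).card = (N - 2 * D.card).choose 2 := by
  classical
  have : freeEdges D = Finset.univ.filter
      (fun e : Sym2 (Fin N) => ¬ e.IsDiag ∧ ∀ v ∈ e, v ∈ (vertSet D)ᶜ) := by
    ext e
    simp [mem_freeEdges, Finset.mem_compl]
  rw [this, card_nondiag, Finset.card_compl, vertSet_card hD, Fintype.card_fin]

open Classical in
/-- configurations with exactly d dimers -/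
noncomputable def cfgd (N d : ℕ) : Finset (Finset (Sym2 (Fin N))) :=
  (dimerConfigs N).filter (fun D => D.card = d)

open Classical in
lemma mem_cfgd {d : ℕ} {D : Finset (Sym2 (Fin N))} :
    D ∈ cfgd N d ↔ IsDimerConfig N D ∧ D.card = d := by
  simp [cfgd, dimerConfigs]

lemma isDimerConfig_subset {D D' : Finset (Sym2 (Fin N))} (h : D' ⊆ D)
    (hD : IsDimerConfig N D) : IsDimerConfig N D' :=
  ⟨fun e he => hD.1 e (h he), fun e he f hf => hD.2 e (h he) f (h hf)⟩

lemma isDimerConfig_insert {D : Finset (Sym2 (Fin N))} {e : Sym2 (Fin N)}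
    (hD : IsDimerConfig N D) (he : e ∈ freeEdges D) :
    IsDimerConfig N (insert e D) := by
  rw [mem_freeEdges] at he
  constructor
  · intro f hf
    rcases Finset.mem_insert.1 hf with rfl | hf
    · exact he.1
    · exact hD.1 f hf
  · intro f1 hf1 f2 hf2 hne v hv
    rcases Finset.mem_insert.1 hf1 with h1 | h1 <;>
      rcases Finset.mem_insert.1 hf2 with h2 | h2
    · exact hne (h1.trans h2.symm)
    · subst h1; exact he.2 v hv.1 (mem_vertSet.2 ⟨f2, h2, hv.2⟩)
    · subst h2; exact he.2 v hv.2 (mem_vertSet.2 ⟨f1, h1, hv.1⟩)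
    · exact hD.2 f1 h1 f2 h2 hne v hv

lemma not_mem_of_free {D : Finset (Sym2 (Fin N))} {e : Sym2 (Fin N)}
    (he : e ∈ freeEdges D) : e ∉ D := by
  rw [mem_freeEdges] at he
  intro hmem
  induction e with
  | _ a b => exact he.2 a (by simp) (mem_vertSet.2 ⟨s(a,b), hmem, by simp⟩)

lemma free_of_erase {D : Finset (Sym2 (Fin N))} {e : Sym2 (Fin N)}
    (hD : IsDimerConfig N D) (he : e ∈ D) : e ∈ freeEdges (D.erase e) := by
  rw [mem_freeEdges]
  refine ⟨hD.1 e he, ?_⟩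
  intro v hv hvs
  rcases mem_vertSet.1 hvs with ⟨f, hf, hvf⟩
  have hfD : f ∈ D := Finset.mem_of_mem_erase hf
  have hfe : f ≠ e := Finset.ne_of_mem_erase hf
  exact hD.2 e he f hfD (Ne.symm hfe) v ⟨hv, hvf⟩

/-- The key double-counting recursion. -/
lemma cfgd_rec (N d : ℕ) :
    (d + 1) * (cfgd N (d+1)).card = (N - 2*d).choose 2 * (cfgd N d).card := by
  classical
  have hA : ((cfgd N (d+1)).sigma (fun D => D)).card = (d+1) * (cfgd N (d+1)).card := by
    rw [Finset.card_sigma]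
    rw [Finset.sum_congr rfl (fun D hD => (mem_cfgd.1 hD).2)]
    simp [mul_comm]
  have hB : ((cfgd N d).sigma (fun D => freeEdges D)).card
      = (N - 2*d).choose 2 * (cfgd N d).card := by
    rw [Finset.card_sigma]
    rw [Finset.sum_congr rfl (fun D hD => by
      rw [card_freeEdges (mem_cfgd.1 hD).1, (mem_cfgd.1 hD).2])]
    simp [mul_comm]
  rw [← hA, ← hB]
  apply Finset.card_nbij' (fun p => ⟨p.1.erase p.2, p.2⟩) (fun p => ⟨insert p.2 p.1, p.2⟩)
  · rintro ⟨D, e⟩ hp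
    rw [Finset.mem_coe, Finset.mem_sigma] at hp
    obtain ⟨hD, he⟩ := hp
    rw [mem_cfgd] at hD
    rw [Finset.mem_coe, Finset.mem_sigma]
    constructor
    · rw [mem_cfgd]
      refine ⟨isDimerConfig_subset (Finset.erase_subset _ _) hD.1, ?_⟩
      rw [Finset.card_erase_of_mem he, hD.2]
      rfl
    · exact free_of_erase hD.1 he
  · rintro ⟨D, e⟩ hp
    rw [Finset.mem_coe, Finset.mem_sigma] at hp
    obtain ⟨hD, he⟩ := hp
    rw [mem_cfgd] at hD
    rw [Finset.mem_coe, Finset.mem_sigma]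
    constructor
    · rw [mem_cfgd]
      refine ⟨isDimerConfig_insert hD.1 he, ?_⟩
      rw [Finset.card_insert_of_notMem (not_mem_of_free he), hD.2]
    · exact Finset.mem_insert_self _ _
  · rintro ⟨D, e⟩ hp
    rw [Finset.mem_coe, Finset.mem_sigma] at hp
    simp [Finset.insert_erase hp.2]
  · rintro ⟨D, e⟩ hp
    rw [Finset.mem_coe, Finset.mem_sigma] at hp
    have := not_mem_of_free hp.2
    simp [Finset.erase_insert_of_ne, Finset.erase_insert this]

lemma cfgd_zero (N : ℕ) : cfgd N 0 = {∅} := by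
  classical
  ext D
  rw [mem_cfgd]
  simp only [Finset.card_eq_zero, Finset.mem_singleton]
  constructor
  · rintro ⟨_, rfl⟩; rfl
  · rintro rfl
    exact ⟨⟨fun e he => absurd he (Finset.notMem_empty e),
      fun e he => absurd he (Finset.notMem_empty e)⟩, rfl⟩

lemma two_mul_choose_two (n : ℕ) : 2 * n.choose 2 = n * (n - 1) := by
  rw [Nat.choose_two_right]
  have : 2 ∣ n * (n - 1) := by
    rcases Nat.even_or_odd n with he | ho
    · exact Dvd.dvd.mul_right he.two_dvd _
    · rcases n with _ | m
      · simp
      · have : Even m := by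
          rcases Nat.even_or_odd m with h | h
          · exact h
          · exfalso
            have := ho
            rw [Nat.odd_iff] at ho
            rw [Nat.odd_iff] at h
            omega
        simpa [Nat.succ_sub_one] using (Dvd.dvd.mul_left this.two_dvd _)
  omega

/-- The exact count of dimer configurations with d dimers. -/
lemma cfgd_count (N : ℕ) : ∀ d : ℕ,
    (cfgd N d).card * (d.factorial * 2^d) = N.descFactorial (2*d) := by
  intro d
  induction d with
  | zero => simp [cfgd_zero]
  | succ d ih =>
    have hrec := cfgd_rec N d
    have h2 : 2 * (d+1) = 2*d + 1 + 1 := by ring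
    rw [h2, Nat.descFactorial_succ, Nat.descFactorial_succ, ← ih]
    have hc2 := two_mul_choose_two (N - 2*d)
    have hsub : N - 2*d - 1 = N - (2*d+1) := by omega
    calc (cfgd N (d+1)).card * ((d+1).factorial * 2^(d+1))
        = ((d+1) * (cfgd N (d+1)).card) * (d.factorial * 2^d) * 2 := by
          rw [Nat.factorial_succ]; ring
      _ = ((N - 2*d).choose 2 * (cfgd N d).card) * (d.factorial * 2^d) * 2 := by rw [hrec]
      _ = (2 * (N - 2*d).choose 2) * ((cfgd N d).card * (d.factorial * 2^d)) := by ring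
      _ = ((N - 2*d) * (N - 2*d - 1)) * ((cfgd N d).card * (d.factorial * 2^d)) := by rw [hc2]
      _ = (N - (2*d+1)) * ((N - 2*d) * ((cfgd N d).card * (d.factorial * 2^d))) := by
          rw [hsub]; ring


lemma log_factorial_ge (n : ℕ) : (n:ℝ) * Real.log n - n ≤ Real.log n.factorial := by
  induction n with
  | zero => simp
  | succ n ih =>
    have hfact : Real.log (n+1).factorial = Real.log (n+1) + Real.log n.factorial := by
      rw [Nat.factorial_succ]
      push_cast
      rw [Real.log_mul (by positivity) (by exact_mod_cast n.factorial_pos.ne')]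
    have key : (n:ℝ) * Real.log (n+1) - (n:ℝ) * Real.log n ≤ 1 := by
      rcases Nat.eq_zero_or_pos n with rfl | hn
      · simp
      · have hn' : (0:ℝ) < n := by exact_mod_cast hn
        have h1 : Real.log ((n+1)/n : ℝ) ≤ ((n:ℝ)+1)/n - 1 :=
          Real.log_le_sub_one_of_pos (by positivity)
        rw [Real.log_div (by positivity) hn'.ne'] at h1
        have h2 : ((n:ℝ)+1)/n - 1 = 1/n := by field_simp; ring
        rw [h2] at h1
        calc (n:ℝ) * Real.log (n+1) - (n:ℝ) * Real.log n
            = (n:ℝ) * (Real.log (n+1) - Real.log n) := by ring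
          _ ≤ (n:ℝ) * (1/n) := by
              apply mul_le_mul_of_nonneg_left h1 hn'.le
          _ = 1 := by field_simp
    push_cast
    push_cast at hfact
    nlinarith [ih]

lemma log_factorial_le (n : ℕ) :
    Real.log n.factorial ≤ (n:ℝ) * Real.log n - n + Real.log n + 1 := by
  induction n with
  | zero => simp
  | succ n ih =>
    have hfact : Real.log (n+1).factorial = Real.log (n+1) + Real.log n.factorial := by
      rw [Nat.factorial_succ]
      push_cast
      rw [Real.log_mul (by positivity) (by exact_mod_cast n.factorial_pos.ne')]
    rcases Nat.eq_zero_or_pos n with rfl | hn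
    · norm_num
    · have hn' : (0:ℝ) < n := by exact_mod_cast hn
      -- 1/(n+1) ≤ log(n+1) - log n
      have h1 : 1 - (n:ℝ)/(n+1) ≤ Real.log (((n:ℝ)+1)/n) := by
        have := Real.log_le_sub_one_of_pos (x := (n:ℝ)/(n+1)) (by positivity)
        have hlog : Real.log ((n:ℝ)/(n+1)) = - Real.log (((n:ℝ)+1)/n) := by
          rw [← Real.log_inv]
          congr 1
          field_simp
        linarith [hlog ▸ this]
      have h2 : Real.log (((n:ℝ)+1)/n) = Real.log ((n:ℝ)+1) - Real.log n :=
        Real.log_div (by positivity) hn'.ne'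
      have h3 : (1:ℝ) - (n:ℝ)/(n+1) = 1/((n:ℝ)+1) := by field_simp; ring
      have key : 1 ≤ ((n:ℝ)+1) * (Real.log ((n:ℝ)+1) - Real.log n) := by
        rw [h2] at h1
        rw [h3] at h1
        have := mul_le_mul_of_nonneg_left h1 (by positivity : (0:ℝ) ≤ (n:ℝ)+1)
        calc (1:ℝ) = ((n:ℝ)+1) * (1/((n:ℝ)+1)) := by field_simp
          _ ≤ _ := this
      push_cast
      push_cast at hfact
      nlinarith [ih]

/-- `S(x) = x log x - x` -/
noncomputable def Sfun (x : ℝ) : ℝ := x * Real.log x - x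

/-- entropy density of dimer counts -/
noncomputable def entr (s : ℝ) : ℝ := -((1-s)/2) * Real.log (1-s) - s * Real.log s + (s-1)/2

lemma entr_identity (n₁ d : ℕ) (hN : 1 ≤ n₁ + 2*d) :
    ((n₁ + 2*d : ℕ) : ℝ) * entr ((n₁ : ℝ) / ((n₁ + 2*d : ℕ) : ℝ))
      = Sfun ((n₁ + 2*d : ℕ) : ℝ) - Sfun n₁ - Sfun d - d * Real.log 2
        - d * Real.log ((n₁ + 2*d : ℕ) : ℝ) := by
  have hn : (0:ℝ) < ((n₁ + 2*d : ℕ) : ℝ) := by exact_mod_cast hN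
  set n : ℝ := ((n₁ + 2*d : ℕ) : ℝ) with hdefn
  have hxy : n = (n₁:ℝ) + 2*d := by rw [hdefn]; push_cast; ring
  have h1 : 1 - (n₁:ℝ)/n = 2*(d:ℝ)/n := by
    field_simp
    linarith [hxy]
  rw [entr, h1]
  have hlog1 : ∀ x : ℝ, x = (n₁:ℝ) → x * Real.log ((n₁:ℝ)/n) = x * Real.log n₁ - x * Real.log n := by
    intro x hx
    rcases Nat.eq_zero_or_pos n₁ with h0 | hpos
    · subst hx; simp [h0]
    · have : (0:ℝ) < n₁ := by exact_mod_cast hpos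
      rw [Real.log_div this.ne' hn.ne']; ring
  have hlog2 : ∀ x : ℝ, x = (d:ℝ) → x * Real.log (2*(d:ℝ)/n)
      = x * Real.log 2 + x * Real.log d - x * Real.log n := by
    intro x hx
    rcases Nat.eq_zero_or_pos d with h0 | hpos
    · subst hx; simp [h0]
    · have hd' : (0:ℝ) < d := by exact_mod_cast hpos
      rw [Real.log_div (by positivity) hn.ne', Real.log_mul (by norm_num) hd'.ne']; ring
  have e1 := hlog1 (n₁:ℝ) rfl
  have e2 := hlog2 (d:ℝ) rfl
  simp only [Sfun]
  have expand : n * (-(2*(d:ℝ)/n/2) * Real.log (2*(d:ℝ)/n)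
      - (n₁:ℝ)/n * Real.log ((n₁:ℝ)/n) + ((n₁:ℝ)/n - 1)/2)
      = -(d:ℝ) * Real.log (2*(d:ℝ)/n) - (n₁:ℝ) * Real.log ((n₁:ℝ)/n) + ((n₁:ℝ) - n)/2 := by
    field_simp
  rw [expand, e1]
  rw [hxy] at e2 ⊢
  linear_combination (-1:ℝ) * e2

lemma log_nat_mono {a b : ℕ} (hab : a ≤ b) (hb : 1 ≤ b) : Real.log a ≤ Real.log b := by
  rcases Nat.eq_zero_or_pos a with rfl | ha
  · simpa using Real.log_nonneg (by exact_mod_cast hb)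
  · exact Real.log_le_log (by exact_mod_cast ha) (by exact_mod_cast hab)

lemma cfgd_card_pos {N d : ℕ} (hd : 2*d ≤ N) : 0 < (cfgd N d).card := by
  have h := cfgd_count N d
  have hdesc : N.descFactorial (2*d) ≠ 0 := by
    rw [Ne, Nat.descFactorial_eq_zero_iff_lt]
    omega
  rw [← h] at hdesc
  have hne : (cfgd N d).card ≠ 0 := fun h0 => hdesc (by rw [h0, Nat.zero_mul])
  exact Nat.pos_of_ne_zero hne

lemma logc_bound {N d : ℕ} (hN : 1 ≤ N) (hd : 2*d ≤ N) :
    -(2*Real.log N + 2) ≤ Real.log ((cfgd N d).card) - d * Real.log N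
        - (N:ℝ) * entr (((N:ℝ) - 2*d)/N)
    ∧ Real.log ((cfgd N d).card) - d * Real.log N - (N:ℝ) * entr (((N:ℝ) - 2*d)/N)
        ≤ Real.log N + 1 := by
  classical
  set n₁ : ℕ := N - 2*d with hn₁
  have hNsplit : N = n₁ + 2*d := by omega
  have hcast : ((N:ℝ) - 2*d) = (n₁:ℝ) := by
    rw [hNsplit]; push_cast; ring
  have hident := entr_identity n₁ d (by omega)
  rw [← hNsplit] at hident
  -- exact counting identity, cast to ℝ
  have hkey : ((cfgd N d).card : ℝ) * ((d.factorial : ℝ) * 2^d) * (n₁.factorial : ℝ)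
      = (N.factorial : ℝ) := by
    have h1 := cfgd_count N d
    have h2 : (N - 2*d).factorial * N.descFactorial (2*d) = N.factorial :=
      Nat.factorial_mul_descFactorial hd
    rw [← h1] at h2
    push_cast [← h2]
    ring
  have hcpos : (0:ℝ) < (cfgd N d).card := by exact_mod_cast cfgd_card_pos hd
  have hlogc : Real.log ((cfgd N d).card) = Real.log (N.factorial)
      - Real.log (n₁.factorial) - Real.log (d.factorial) - d * Real.log 2 := by
    have := Real.log_mul (mul_ne_zero hcpos.ne' (by positivity) :
        ((cfgd N d).card : ℝ) * ((d.factorial : ℝ) * 2^d) ≠ 0)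
        (by exact_mod_cast n₁.factorial_pos.ne' : (n₁.factorial : ℝ) ≠ 0)
    rw [hkey] at this
    rw [Real.log_mul hcpos.ne' (by positivity),
        Real.log_mul (by exact_mod_cast d.factorial_pos.ne' : (d.factorial:ℝ) ≠ 0)
          (by positivity : ((2:ℝ)^d) ≠ 0), Real.log_pow] at this
    linarith
  have bN1 := log_factorial_ge N
  have bN2 := log_factorial_le N
  have bn1 := log_factorial_ge n₁
  have bn2 := log_factorial_le n₁
  have bd1 := log_factorial_ge d
  have bd2 := log_factorial_le d
  have hlogn₁ : Real.log n₁ ≤ Real.log N := log_nat_mono (by omega) hN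
  have hlogd : Real.log d ≤ Real.log N := log_nat_mono (by omega) hN
  rw [hcast, hident, hlogc]
  simp only [Sfun]
  constructor <;> linarith



lemma sqrt_sq_facts (h : ℝ) :
    Real.sqrt (Real.exp (2*h) + 4) ^ 2 = Real.exp h ^ 2 + 4
      ∧ 0 < Real.sqrt (Real.exp (2*h) + 4) := by
  have hx : Real.exp (2*h) = Real.exp h ^ 2 := by
    rw [two_mul, Real.exp_add]; ring
  constructor
  · rw [Real.sq_sqrt (by positivity), hx]
  · apply Real.sqrt_pos.2; positivity

lemma g_pos (h : ℝ) : 0 < gFun h := by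
  obtain ⟨ht2, htpos⟩ := sqrt_sq_facts h
  set t := Real.sqrt (Real.exp (2*h) + 4)
  have hx : (0:ℝ) < Real.exp h := Real.exp_pos h
  rw [gFun]
  have : Real.exp h < t := by nlinarith
  nlinarith

lemma g_lt_one (h : ℝ) : gFun h < 1 := by
  obtain ⟨ht2, htpos⟩ := sqrt_sq_facts h
  set t := Real.sqrt (Real.exp (2*h) + 4)
  have hx : (0:ℝ) < Real.exp h := Real.exp_pos h
  rw [gFun]
  nlinarith [sq_nonneg (Real.exp h * t - (Real.exp h ^ 2 + 2)), sq_nonneg (Real.exp h * t)]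

lemma g_sq (h : ℝ) : gFun h ^ 2 = Real.exp (2*h) * (1 - gFun h) := by
  obtain ⟨ht2, htpos⟩ := sqrt_sq_facts h
  set t := Real.sqrt (Real.exp (2*h) + 4)
  have hx : Real.exp (2*h) = Real.exp h ^ 2 := by
    rw [two_mul, Real.exp_add]; ring
  rw [gFun]
  linear_combination (Real.exp h ^ 2 / 4) * ht2
    + (Real.exp h * (t - Real.exp h) / 2 - 1) * hx

lemma hasDerivAt_g (h : ℝ) :
    HasDerivAt gFun
      (Real.exp h / 2 * (Real.sqrt (Real.exp (2*h) + 4) - Real.exp h)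
        + Real.exp h / 2 * (Real.exp (2*h) / Real.sqrt (Real.exp (2*h) + 4) - Real.exp h)) h := by
  obtain ⟨ht2, htpos⟩ := sqrt_sq_facts h
  have h0 : HasDerivAt (fun y : ℝ => 2*y) (2:ℝ) h := by
    simpa using (hasDerivAt_id h).const_mul (2:ℝ)
  have h1 : HasDerivAt (fun y : ℝ => Real.exp (2*y) + 4) (Real.exp (2*h) * 2) h :=
    h0.exp.add_const 4
  have h2 : HasDerivAt (fun y : ℝ => Real.sqrt (Real.exp (2*y) + 4))
      (Real.exp (2*h) / Real.sqrt (Real.exp (2*h) + 4)) h := by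
    have hne : Real.exp (2*h) + 4 ≠ 0 := by positivity
    have := (Real.hasDerivAt_sqrt hne).comp h h1
    refine this.congr_deriv ?_
    field_simp
  have h3 : HasDerivAt (fun y : ℝ => Real.exp y / 2) (Real.exp h / 2) h :=
    (Real.hasDerivAt_exp h).div_const 2
  have h4 : HasDerivAt (fun y : ℝ => Real.sqrt (Real.exp (2*y) + 4) - Real.exp y)
      (Real.exp (2*h) / Real.sqrt (Real.exp (2*h) + 4) - Real.exp h) h :=
    h2.sub (Real.hasDerivAt_exp h)
  have h5 := h3.mul h4
  have hfun : gFun = fun y : ℝ =>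
      (Real.exp y / 2) * (Real.sqrt (Real.exp (2*y) + 4) - Real.exp y) := rfl
  rw [hfun]
  exact h5

lemma hasDerivAt_p0 (a : ℝ) : HasDerivAt p0 (gFun a) a := by
  obtain ⟨ht2, htpos⟩ := sqrt_sq_facts a
  have hg1 : gFun a < 1 := g_lt_one a
  have hg0 : 0 < gFun a := g_pos a
  have hgne : 1 - gFun a ≠ 0 := by linarith
  have hd := hasDerivAt_g a
  set t := Real.sqrt (Real.exp (2*a) + 4) with hdeft
  set x := Real.exp a with hdefx
  have hxpos : (0:ℝ) < x := Real.exp_pos a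
  have hxx : Real.exp (2*a) = x^2 := by rw [two_mul, Real.exp_add]; ring
  have hgdef : gFun a = x / 2 * (t - x) := rfl
  -- simplify the derivative of g
  have hgp : x / 2 * (t - x) + x / 2 * (x^2 / t - x)
      = gFun a * ((t - x)/t) := by
    rw [hgdef]
    field_simp
    ring
  rw [hxx] at hd
  have h1 : HasDerivAt (fun y => 1 - gFun y)
      (-(x / 2 * (t - x) + x / 2 * (x^2 / t - x))) a := by
    exact ((hasDerivAt_const a (1:ℝ)).sub hd).congr_deriv (by ring)
  have h2 : HasDerivAt (fun y => Real.log (1 - gFun y))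
      (-(x / 2 * (t - x) + x / 2 * (x^2 / t - x)) / (1 - gFun a)) a := h1.log hgne
  have h3 := ((h1.div_const 2).neg).sub (h2.const_mul (1/2 : ℝ))
  have hp0 : p0 = fun y => -(1 - gFun y)/2 - (1/2) * Real.log (1 - gFun y) := rfl
  rw [hp0]
  have hkey : gFun a * (t + x) = 2 * x := by
    rw [hgdef]
    linear_combination (x/2) * ht2
  have htne : t ≠ 0 := htpos.ne'
  have hfeq : (fun y => -(1 - gFun y)/2 - (1/2) * Real.log (1 - gFun y))
      = ((-fun x => (1 - gFun x) / 2) - fun y => 1 / 2 * Real.log (1 - gFun y)) := by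
    funext y; simp only [Pi.sub_apply, Pi.neg_apply]; ring
  rw [hfeq]
  refine h3.congr_deriv ?_
  · rw [hgp]
    field_simp
    linear_combination hkey

lemma hasDerivAt_ptilde (h J m : ℝ) :
    HasDerivAt (ptilde h J) (-(2*J*m) + gFun ((2*m-1)*J+h) * (2*J)) m := by
  have h0 : HasDerivAt (fun y : ℝ => 2*y) (2:ℝ) m := by
    simpa using (hasDerivAt_id m).const_mul (2:ℝ)
  have h1 : HasDerivAt (fun y : ℝ => (2*y - 1)*J + h) (2*J) m := by
    simpa using ((h0.sub_const 1).mul_const J).add_const h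
  have h2 := (hasDerivAt_p0 ((2*m-1)*J+h)).comp m h1
  have h3 : HasDerivAt (fun y : ℝ => -J * y^2) (-J * (2*m^1)) m := by
    simpa using (hasDerivAt_pow 2 m).const_mul (-J)
  have h4 := h3.add h2
  have hfun : ptilde h J = fun y => -J*y^2 + p0 ((2*y-1)*J + h) := rfl
  rw [hfun]
  refine h4.congr_deriv ?_
  ring

lemma continuous_gFun : Continuous gFun := by
  apply Continuous.mul
  · exact Real.continuous_exp.div_const 2
  · apply Continuous.sub
    · apply Real.continuous_sqrt.comp
      continuity
    · exact Real.continuous_exp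

lemma continuous_p0 : Continuous p0 := by
  rw [continuous_iff_continuousAt]
  intro a
  have h1 : ContinuousAt (fun y => 1 - gFun y) a :=
    (continuous_const.sub continuous_gFun).continuousAt
  have hne : 1 - gFun a ≠ 0 := by have := g_lt_one a; linarith
  have h2 : ContinuousAt (fun y => Real.log (1 - gFun y)) a := h1.log hne
  have : ContinuousAt (fun y => -(1 - gFun y)/2 - (1/2) * Real.log (1 - gFun y)) a :=
    ((h1.neg.div_const 2)).sub (h2.const_mul (1/2 : ℝ))
  exact this

lemma continuous_ptilde (h J : ℝ) : Continuous (ptilde h J) := by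
  have hfun : ptilde h J = fun y => -J*y^2 + p0 ((2*y-1)*J + h) := rfl
  rw [hfun]
  apply Continuous.add
  · continuity
  · exact continuous_p0.comp (by continuity)

lemma continuous_entr : Continuous entr := by
  have hfun : entr = fun s => -(1/2) * ((1-s) * Real.log (1-s))
      - s * Real.log s + (s-1)/2 := by
    funext s; rw [entr]; ring
  rw [hfun]
  have c1 : Continuous (fun s : ℝ => (1-s) * Real.log (1-s)) :=
    Real.continuous_mul_log.comp (continuous_const.sub continuous_id)
  have c2 : Continuous (fun s : ℝ => (s-1)/2) := by continuity
  exact (((continuous_const.mul c1)).sub Real.continuous_mul_log).add c2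

lemma hasDerivAt_entr {s : ℝ} (hs0 : 0 < s) (hs1 : s < 1) :
    HasDerivAt entr (Real.log (1-s) / 2 - Real.log s) s := by
  have hne1 : (1:ℝ) - s ≠ 0 := by linarith
  have e1 : HasDerivAt (fun y : ℝ => 1 - y) (-1) s := by
    exact ((hasDerivAt_const s (1:ℝ)).sub (hasDerivAt_id s)).congr_deriv (by ring)
  have e2 : HasDerivAt (fun y : ℝ => Real.log (1-y)) (-1/(1-s)) s := by
    simpa using e1.log hne1
  have e3 : HasDerivAt (fun y : ℝ => -((1-y)/2)) (1/2 : ℝ) s := by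
    have := (e1.div_const 2).neg
    exact this.congr_deriv (by norm_num)
  have e4 : HasDerivAt (fun y : ℝ => -((1-y)/2) * Real.log (1-y))
      ((1/2) * Real.log (1-s) + (-((1-s)/2)) * (-1/(1-s))) s := e3.mul e2
  have e5 : HasDerivAt (fun y : ℝ => y * Real.log y)
      (1 * Real.log s + s * s⁻¹) s := (hasDerivAt_id s).mul (Real.hasDerivAt_log hs0.ne')
  have e6 : HasDerivAt (fun y : ℝ => (y-1)/2) (1/2 : ℝ) s := by
    simpa using ((hasDerivAt_id s).sub_const 1).div_const 2
  have e7 := (e4.sub e5).add e6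
  have hfun : entr = fun y : ℝ => -((1-y)/2) * Real.log (1-y) - y * Real.log y + (y-1)/2 := rfl
  rw [hfun]
  refine e7.congr_deriv ?_
  field_simp
  ring

lemma log_g_eq (a : ℝ) : Real.log (gFun a) = a + Real.log (1 - gFun a) / 2 := by
  have hg0 := g_pos a
  have hg1 := g_lt_one a
  have h2 : Real.log (gFun a ^ 2) = Real.log (Real.exp (2*a) * (1 - gFun a)) := by
    rw [g_sq]
  rw [Real.log_pow, Real.log_mul (Real.exp_ne_zero _) (by linarith), Real.log_exp] at h2
  push_cast at h2
  linarith

lemma phi_at_g (a : ℝ) : entr (gFun a) + a * gFun a = p0 a := by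
  rw [entr, log_g_eq a, p0]
  ring

lemma phi_le {a s : ℝ} (hs0 : 0 ≤ s) (hs1 : s ≤ 1) : entr s + a * s ≤ p0 a := by
  set G := gFun a with hG
  have hG0 : 0 < G := g_pos a
  have hG1 : G < 1 := g_lt_one a
  set φ : ℝ → ℝ := fun y => entr y + a * y with hφ
  have hφcont : Continuous φ := continuous_entr.add (continuous_const.mul continuous_id)
  have hφd : ∀ y ∈ Set.Ioo (0:ℝ) 1,
      HasDerivAt φ (Real.log (1-y)/2 - Real.log y + a) y := by
    intro y hy
    have := (hasDerivAt_entr hy.1 hy.2).add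
      ((hasDerivAt_id y).const_mul a)
    exact this.congr_deriv (by ring)
  have hφG : φ G = p0 a := phi_at_g a
  have hcrit : Real.log (1-G)/2 - Real.log G + a = 0 := by
    have := log_g_eq a
    linarith
  rw [← hφG]
  rcases le_or_gt s G with hle | hgt
  · rcases eq_or_lt_of_le hle with rfl | hlt
    · exact le_rfl
    · have hmono : StrictMonoOn φ (Set.Icc 0 G) := by
        apply strictMonoOn_of_deriv_pos (convex_Icc 0 G) hφcont.continuousOn
        intro y hy
        rw [interior_Icc] at hy
        obtain ⟨hya, hyb⟩ := hy
        have hy1 : y < 1 := lt_trans hyb hG1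
        rw [(hφd y ⟨hya, hy1⟩).deriv]
        have l1 : Real.log (1-G) < Real.log (1-y) :=
          Real.log_lt_log (by linarith) (by linarith)
        have l2 : Real.log y < Real.log G := Real.log_lt_log hya hyb
        linarith
      exact (hmono ⟨hs0, hle⟩ ⟨le_of_lt hG0, le_refl G⟩ hlt).le
  · have hanti : StrictAntiOn φ (Set.Icc G 1) := by
      apply strictAntiOn_of_deriv_neg (convex_Icc G 1) hφcont.continuousOn
      intro y hy
      rw [interior_Icc] at hy
      obtain ⟨hya, hyb⟩ := hy
      have hy0 : 0 < y := lt_trans hG0 hya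
      rw [(hφd y ⟨hy0, hyb⟩).deriv]
      have l1 : Real.log (1-y) < Real.log (1-G) :=
        Real.log_lt_log (by linarith) (by linarith)
      have l2 : Real.log G < Real.log y := Real.log_lt_log hG0 hya
      linarith
    exact (hanti ⟨le_refl G, hG1.le⟩ ⟨hgt.le, hs1⟩ hgt).le


/-! ### Assembly -/

noncomputable def fphi (h J m : ℝ) : ℝ := (h - J) * m + J * m^2

noncomputable def sN (N d : ℕ) : ℝ := ((N:ℝ) - 2*d) / N

noncomputable def W (h J : ℝ) (N d : ℕ) : ℝ :=
  ((cfgd N d).card : ℝ) * (N:ℝ)^(-(d:ℤ)) * Real.exp ((N:ℝ) * fphi h J (sN N d))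

lemma W_nonneg (h J : ℝ) (N d : ℕ) : 0 ≤ W h J N d := by
  rw [W]
  rcases Nat.eq_zero_or_pos N with rfl | hN
  · rcases Nat.eq_zero_or_pos d with rfl | hd
    · positivity
    · have : ((0:ℕ):ℝ)^(-(d:ℤ)) = 0 := by
        rw [Nat.cast_zero, zero_zpow]
        omega
      rw [this]
      simp
  · have : (0:ℝ) < (N:ℝ) := by exact_mod_cast hN
    positivity

lemma negH_eq (h J : ℝ) (N : ℕ) (D : Finset (Sym2 (Fin N))) :
    negH N h J D = (N:ℝ) * fphi h J (monomerDensity N D) := rfl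

lemma density_eq {N d : ℕ} {D : Finset (Sym2 (Fin N))} (hD : D ∈ cfgd N d) :
    monomerDensity N D = sN N d := by
  rw [monomerDensity, monomerCount, sN, (mem_cfgd.1 hD).2]

lemma group_general (h J : ℝ) (N : ℕ) (u : ℝ → ℝ) :
    ∑ D ∈ dimerConfigs N,
        (N:ℝ)^(-(D.card:ℤ)) * Real.exp (negH N h J D) * u (monomerDensity N D)
      = ∑ d ∈ Finset.range (N+1), W h J N d * u (sN N d) := by
  classical
  have hmap : ∀ D ∈ dimerConfigs N, D.card ∈ Finset.range (N+1) := by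
    intro D hD
    rw [Finset.mem_range]
    have hcfg : IsDimerConfig N D := by
      simpa [dimerConfigs] using hD
    have := two_mul_card_le hcfg
    omega
  rw [← Finset.sum_fiberwise_of_maps_to hmap
    (fun D => (N:ℝ)^(-(D.card:ℤ)) * Real.exp (negH N h J D) * u (monomerDensity N D))]
  apply Finset.sum_congr rfl
  intro d _
  have hfil : (dimerConfigs N).filter (fun D => D.card = d) = cfgd N d := by
    rw [cfgd]
  rw [hfil]
  have hterm : ∀ D ∈ cfgd N d,
      (N:ℝ)^(-(D.card:ℤ)) * Real.exp (negH N h J D) * u (monomerDensity N D)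
        = (N:ℝ)^(-(d:ℤ)) * Real.exp ((N:ℝ) * fphi h J (sN N d)) * u (sN N d) := by
    intro D hD
    rw [negH_eq, density_eq hD, (mem_cfgd.1 hD).2]
  rw [Finset.sum_congr rfl hterm, Finset.sum_const, W]
  push_cast
  ring

lemma Z_eq (h J : ℝ) (N : ℕ) :
    ZIMD N h J = ∑ d ∈ Finset.range (N+1), W h J N d := by
  have := group_general h J N (fun _ => 1)
  simpa [ZIMD, mul_one] using this

lemma sN_mem {N d : ℕ} (hN : 1 ≤ N) (hd : 2*d ≤ N) :
    0 ≤ sN N d ∧ sN N d ≤ 1 := by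
  have hNpos : (0:ℝ) < N := by exact_mod_cast hN
  have hdle : (2*d : ℝ) ≤ N := by exact_mod_cast hd
  have hd0 : (0:ℝ) ≤ 2*(d:ℝ) := by positivity
  constructor
  · rw [sN]
    apply div_nonneg _ hNpos.le
    linarith
  · rw [sN, div_le_one hNpos]
    linarith

lemma cfgd_empty_of_gt {N d : ℕ} (hd : N < 2*d) : (cfgd N d).card = 0 := by
  rw [Finset.card_eq_zero, Finset.eq_empty_iff_forall_notMem]
  intro D hD
  obtain ⟨hcfg, hcard⟩ := mem_cfgd.1 hD
  have := two_mul_card_le hcfg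
  omega

lemma zpow_neg_eq_exp {N : ℕ} (hN : 1 ≤ N) (d : ℕ) :
    (N:ℝ)^(-(d:ℤ)) = Real.exp (-((d:ℝ) * Real.log N)) := by
  have hNpos : (0:ℝ) < N := by exact_mod_cast hN
  rw [zpow_neg, zpow_natCast, Real.exp_neg]
  congr 1
  rw [← Real.exp_log (pow_pos hNpos d), Real.log_pow]

lemma W_le_exp {h J : ℝ} {N d : ℕ} (hN : 1 ≤ N) {B : ℝ}
    (hB : 2*d ≤ N →
      (N:ℝ)*(entr (sN N d) + fphi h J (sN N d)) + Real.log N + 1 ≤ B) :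
    W h J N d ≤ Real.exp B := by
  rcases le_or_gt (2*d) N with hd | hd
  · have hub := (logc_bound hN hd).2
    have hcpos : (0:ℝ) < ((cfgd N d).card : ℝ) := by exact_mod_cast cfgd_card_pos hd
    have hc : ((cfgd N d).card : ℝ) = Real.exp (Real.log ((cfgd N d).card)) :=
      (Real.exp_log hcpos).symm
    rw [W, hc, zpow_neg_eq_exp hN d, ← Real.exp_add, ← Real.exp_add]
    apply Real.exp_le_exp.2
    have hsN : (((N:ℝ) - 2*d)/N) = sN N d := rfl
    rw [hsN] at hub
    have := hB hd
    nlinarith [hub, this]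
  · rw [W, cfgd_empty_of_gt hd]
    simp [Real.exp_pos B |>.le]

lemma W_ge_exp {h J : ℝ} {N d : ℕ} (hN : 1 ≤ N) (hd : 2*d ≤ N) :
    Real.exp ((N:ℝ)*(entr (sN N d) + fphi h J (sN N d)) - 2*Real.log N - 2)
      ≤ W h J N d := by
  have hlb := (logc_bound hN hd).1
  have hcpos : (0:ℝ) < ((cfgd N d).card : ℝ) := by exact_mod_cast cfgd_card_pos hd
  have hc : ((cfgd N d).card : ℝ) = Real.exp (Real.log ((cfgd N d).card)) :=
    (Real.exp_log hcpos).symm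
  rw [W, hc, zpow_neg_eq_exp hN d, ← Real.exp_add, ← Real.exp_add]
  apply Real.exp_le_exp.2
  have hsN : (((N:ℝ) - 2*d)/N) = sN N d := rfl
  rw [hsN] at hlb
  nlinarith [hlb]

lemma gap_lemma (h J mstar : ℝ)
    (hmax : ∀ m : ℝ, ptilde h J m ≤ ptilde h J mstar)
    (huniq : ∀ m : ℝ, (∀ m' : ℝ, ptilde h J m' ≤ ptilde h J m) → m = mstar)
    {ε : ℝ} (hε : 0 < ε) :
    ∃ δ > 0, ∀ m : ℝ, 0 ≤ m → m ≤ 1 → ε ≤ |m - mstar| →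
      ptilde h J m ≤ ptilde h J mstar - δ := by
  classical
  set K : Set ℝ := {m : ℝ | m ∈ Set.Icc (0:ℝ) 1 ∧ ε ≤ |m - mstar|} with hK
  have hKclosed : IsClosed K := by
    apply IsClosed.inter isClosed_Icc
    have : Continuous (fun m : ℝ => |m - mstar|) :=
      (continuous_id.sub continuous_const).abs
    exact isClosed_le continuous_const this
  have hKsub : K ⊆ Set.Icc (0:ℝ) 1 := fun m hm => hm.1
  have hKcompact : IsCompact K := isCompact_Icc.of_isClosed_subset hKclosed hKsub
  rcases K.eq_empty_or_nonempty with hKe | hKne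
  · refine ⟨1, one_pos, fun m hm0 hm1 hmd => ?_⟩
    exfalso
    have : m ∈ K := ⟨⟨hm0, hm1⟩, hmd⟩
    rw [hKe] at this
    exact this
  · obtain ⟨m₀, hm₀K, hm₀max⟩ :=
      hKcompact.exists_isMaxOn hKne (continuous_ptilde h J).continuousOn
    have hlt : ptilde h J m₀ < ptilde h J mstar := by
      rcases lt_or_eq_of_le (hmax m₀) with hl | he
      · exact hl
      · exfalso
        have hm₀eq : m₀ = mstar := by
          apply huniq m₀
          intro m'
          rw [he]
          exact hmax m'
        have := hm₀K.2
        rw [hm₀eq, sub_self, abs_zero] at this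
        linarith
    refine ⟨ptilde h J mstar - ptilde h J m₀, by linarith, ?_⟩
    intro m hm0 hm1 hmd
    have hmK : m ∈ K := ⟨⟨hm0, hm1⟩, hmd⟩
    have := isMaxOn_iff.1 hm₀max m hmK
    linarith

lemma mstar_fixed {h J mstar : ℝ} (hJ : 0 < J)
    (hder : deriv (ptilde h J) mstar = 0) :
    gFun ((2*mstar - 1)*J + h) = mstar := by
  have hd := hasDerivAt_ptilde h J mstar
  rw [hd.deriv] at hder
  have h2J : (2*J) ≠ 0 := by positivity
  apply mul_right_cancel₀ h2J
  linarith

lemma entr_add_f_le (h J : ℝ) {m : ℝ} (hm0 : 0 ≤ m) (hm1 : m ≤ 1) :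
    entr m + fphi h J m ≤ ptilde h J m := by
  have := phi_le (a := (2*m-1)*J + h) hm0 hm1
  rw [ptilde, fphi]
  nlinarith [this]

lemma entr_add_f_at_mstar {h J mstar : ℝ} (hJ : 0 < J)
    (hder : deriv (ptilde h J) mstar = 0) :
    entr mstar + fphi h J mstar = ptilde h J mstar := by
  have hgm := mstar_fixed hJ hder
  have := phi_at_g ((2*mstar - 1)*J + h)
  rw [hgm] at this
  rw [ptilde, fphi]
  nlinarith [this]

/-- rate of decay of the error term -/
lemma ratio_tendsto_zero {δ : ℝ} (hδ : 0 < δ) :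
    Filter.Tendsto (fun N : ℕ => ((N:ℝ)+1) * Real.exp (3*Real.log N + 3 - (N:ℝ)*δ/2))
      Filter.atTop (nhds 0) := by
  have hbound : ∀ N : ℕ, 1 ≤ N →
      ((N:ℝ)+1) * Real.exp (3*Real.log N + 3 - (N:ℝ)*δ/2)
        ≤ (2 * Real.exp 3 * (2/δ)^4) * (((N:ℝ)*δ/2)^4 * Real.exp (-((N:ℝ)*δ/2))) := by
    intro N hN
    have hNpos : (0:ℝ) < N := by exact_mod_cast hN
    have hexp3 : Real.exp (3*Real.log N) = (N:ℝ)^3 := by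
      rw [show (3:ℝ)*Real.log N = Real.log ((N:ℝ)^3) by rw [Real.log_pow]; push_cast; ring]
      exact Real.exp_log (by positivity)
    have heq : Real.exp (3*Real.log N + 3 - (N:ℝ)*δ/2)
        = (N:ℝ)^3 * Real.exp 3 * Real.exp (-((N:ℝ)*δ/2)) := by
      rw [← hexp3, ← Real.exp_add, ← Real.exp_add]
      ring_nf
    rw [heq]
    have hN1' : (1:ℝ) ≤ (N:ℝ) := by exact_mod_cast hN
    have hN1 : ((N:ℝ)+1) ≤ 2*(N:ℝ) := by linarith
    have hstep : ((N:ℝ)+1) * ((N:ℝ)^3 * Real.exp 3 * Real.exp (-((N:ℝ)*δ/2)))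
        ≤ (2*(N:ℝ)) * ((N:ℝ)^3 * Real.exp 3 * Real.exp (-((N:ℝ)*δ/2))) := by
      apply mul_le_mul_of_nonneg_right hN1
      positivity
    calc ((N:ℝ)+1) * ((N:ℝ)^3 * Real.exp 3 * Real.exp (-((N:ℝ)*δ/2)))
        ≤ (2*(N:ℝ)) * ((N:ℝ)^3 * Real.exp 3 * Real.exp (-((N:ℝ)*δ/2))) := hstep
      _ = (2 * Real.exp 3 * (2/δ)^4) * (((N:ℝ)*δ/2)^4 * Real.exp (-((N:ℝ)*δ/2))) := by
          field_simp
  have hcomp : Filter.Tendsto (fun N : ℕ => ((N:ℝ)*δ/2)^4 * Real.exp (-((N:ℝ)*δ/2)))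
      Filter.atTop (nhds 0) := by
    apply (tendsto_pow_mul_exp_neg_atTop_nhds_zero 4).comp
    have h1 : Filter.Tendsto (fun N : ℕ => (N:ℝ)) Filter.atTop Filter.atTop :=
      tendsto_natCast_atTop_atTop
    exact (h1.atTop_mul_const (by positivity : (0:ℝ) < δ/2)).congr (fun n => by ring)
  have hconst : Filter.Tendsto
      (fun N : ℕ => (2 * Real.exp 3 * (2/δ)^4) * (((N:ℝ)*δ/2)^4 * Real.exp (-((N:ℝ)*δ/2))))
      Filter.atTop (nhds 0) := by
    have := hcomp.const_mul (2 * Real.exp 3 * (2/δ)^4)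
    simpa using this
  apply squeeze_zero_norm' _ hconst
  filter_upwards [Filter.eventually_ge_atTop 1] with N hN
  rw [Real.norm_eq_abs, abs_of_nonneg (by positivity)]
  exact hbound N hN

lemma div_sub_eq {a b z : ℝ} (hz : z ≠ 0) : a / z - b = (a - b*z)/z := by
  field_simp

lemma small_arith {C ε R : ℝ} (hC0 : 0 ≤ C) (hε : 0 < ε) (hR : R < ε/(4*(C+1))) :
    2*C*R < ε/2 := by
  have hC1 : (0:ℝ) < C + 1 := by linarith
  have h2C : 2*C*R ≤ 2*C * (ε/(4*(C+1))) :=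
    mul_le_mul_of_nonneg_left hR.le (by linarith)
  have heq : 2*C * (ε/(4*(C+1))) = (ε/2) * (C/(C+1)) := by
    field_simp
    ring
  have hfr0 : 0 ≤ C/(C+1) := div_nonneg hC0 hC1.le
  have hfrac : C / (C+1) < 1 := by
    rw [div_lt_one hC1]
    linarith
  nlinarith

end IMD

set_option maxHeartbeats 1600000 in
/-- law of large numbers for the IMD model in the uniqueness region:
the monomer density converges in distribution to `δ_{m*}`. -/
theorem imd_lln_unique (h J : ℝ) (hJ : 0 < J) (mstar : ℝ)
    (hmax : ∀ m : ℝ, ptilde h J m ≤ ptilde h J mstar)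
    (huniq : ∀ m : ℝ, (∀ m' : ℝ, ptilde h J m' ≤ ptilde h J m) → m = mstar)
    (k : ℕ) (hk : 1 ≤ k)
    (hvanish : ∀ j : ℕ, 1 ≤ j → j ≤ 2*k - 1 → iteratedDeriv j (ptilde h J) mstar = 0)
    (hneg : iteratedDeriv (2*k) (ptilde h J) mstar < 0) :
    ∀ ψ : ℝ → ℝ, Continuous ψ → (∃ C : ℝ, ∀ x : ℝ, |ψ x| ≤ C) →
      Tendsto (fun N : ℕ => gibbsExp N h J (fun D => ψ (monomerDensity N D)))
        atTop (nhds (ψ mstar)) := by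
  intro ψ hψc hψb
  obtain ⟨C, hC⟩ := hψb
  have hC0 : 0 ≤ C := le_trans (abs_nonneg _) (hC 0)
  -- the first derivative vanishes at mstar
  have hder : deriv (ptilde h J) mstar = 0 := by
    have h1 := hvanish 1 le_rfl (by omega)
    rwa [iteratedDeriv_one] at h1
  have hgm := IMD.mstar_fixed hJ hder
  have hm0 : 0 < mstar := by rw [← hgm]; exact IMD.g_pos _
  have hm1 : mstar < 1 := by rw [← hgm]; exact IMD.g_lt_one _
  have hPstar : IMD.entr mstar + IMD.fphi h J mstar = ptilde h J mstar :=
    IMD.entr_add_f_at_mstar hJ hder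
  rw [Metric.tendsto_atTop]
  intro ε hε
  obtain ⟨δψ, hδψ0, hδψ⟩ := Metric.continuousAt_iff.1 (hψc.continuousAt (x := mstar)) (ε/4) (by linarith)
  obtain ⟨δ, hδ0, hgap⟩ := IMD.gap_lemma h J mstar hmax huniq hδψ0
  set P : ℝ := ptilde h J mstar with hPdef
  set dstar : ℕ → ℕ := fun N => ⌊(1 - mstar)/2 * N⌋₊ with hdstardef
  have hdstar_le : ∀ N : ℕ, 2 * dstar N ≤ N := by
    intro N
    have h1 : ((dstar N : ℝ)) ≤ (1 - mstar)/2 * N :=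
      Nat.floor_le (mul_nonneg (by linarith) (Nat.cast_nonneg N))
    have h2 : ((2 * dstar N : ℕ) : ℝ) ≤ (N:ℝ) := by
      push_cast
      nlinarith [Nat.cast_nonneg (α := ℝ) N]
    exact_mod_cast h2
  have hsstar_close : ∀ N : ℕ, 1 ≤ N →
      mstar ≤ IMD.sN N (dstar N) ∧ IMD.sN N (dstar N) ≤ mstar + 2/N := by
    intro N hN
    have hNpos : (0:ℝ) < N := by exact_mod_cast hN
    have h1 : ((dstar N : ℝ)) ≤ (1 - mstar)/2 * N :=
      Nat.floor_le (mul_nonneg (by linarith) (Nat.cast_nonneg N))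
    have h2 : (1 - mstar)/2 * N < (dstar N : ℝ) + 1 := Nat.lt_floor_add_one _
    rw [IMD.sN]
    constructor
    · rw [le_div_iff₀ hNpos]
      nlinarith
    · rw [div_le_iff₀ hNpos]
      have hexp : (mstar + 2/(N:ℝ))*(N:ℝ) = mstar*N + 2 := by field_simp
      rw [hexp]
      nlinarith
  have hsstar_tendsto : Filter.Tendsto (fun N : ℕ => IMD.sN N (dstar N))
      Filter.atTop (nhds mstar) := by
    have hup : Filter.Tendsto (fun N : ℕ => mstar + 2/(N:ℝ))
        Filter.atTop (nhds (mstar + 0)) :=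
      tendsto_const_nhds.add (tendsto_const_nhds.div_atTop tendsto_natCast_atTop_atTop)
    rw [add_zero] at hup
    apply tendsto_of_tendsto_of_tendsto_of_le_of_le' tendsto_const_nhds hup
    · filter_upwards [Filter.eventually_ge_atTop 1] with N hN
      exact (hsstar_close N hN).1
    · filter_upwards [Filter.eventually_ge_atTop 1] with N hN
      exact (hsstar_close N hN).2
  have hEF : Filter.Tendsto
      (fun N : ℕ => IMD.entr (IMD.sN N (dstar N)) + IMD.fphi h J (IMD.sN N (dstar N)))
      Filter.atTop (nhds P) := by
    have hfc : Continuous (fun s : ℝ => IMD.fphi h J s) := by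
      have heq : (fun s : ℝ => IMD.fphi h J s) = fun s => (h - J) * s + J * s^2 := rfl
      rw [heq]
      exact (continuous_const.mul continuous_id).add (continuous_const.mul (continuous_pow 2))
    have hcont : Continuous (fun s : ℝ => IMD.entr s + IMD.fphi h J s) :=
      IMD.continuous_entr.add hfc
    have := (hcont.continuousAt (x := mstar)).tendsto.comp hsstar_tendsto
    rw [hPstar] at this
    exact this
  have hev1 : ∀ᶠ N : ℕ in Filter.atTop,
      P - δ/2 ≤ IMD.entr (IMD.sN N (dstar N)) + IMD.fphi h J (IMD.sN N (dstar N)) :=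
    hEF.eventually (eventually_ge_nhds (by linarith : P - δ/2 < P))
  have hev2 : ∀ᶠ N : ℕ in Filter.atTop,
      ((N:ℝ)+1) * Real.exp (3*Real.log N + 3 - (N:ℝ)*δ/2) < ε/(4*(C+1)) :=
    (IMD.ratio_tendsto_zero hδ0).eventually
      (eventually_lt_nhds (div_pos (by linarith) (by linarith) : (0:ℝ) < ε/(4*(C+1))))
  obtain ⟨N₀, hN₀⟩ := Filter.eventually_atTop.1
    ((hev1.and hev2).and (Filter.eventually_ge_atTop 1))
  refine ⟨N₀, fun N hNN₀ => ?_⟩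
  obtain ⟨⟨hE1, hE2⟩, hN1⟩ := hN₀ N hNN₀
  have hNpos : (0:ℝ) < N := by exact_mod_cast hN1
  -- notation
  set Z : ℝ := ZIMD N h J with hZdef
  set Num : ℝ := ∑ D ∈ dimerConfigs N,
      (N:ℝ)^(-(D.card:ℤ)) * Real.exp (negH N h J D) * ψ (monomerDensity N D) with hNumdef
  have hgibbs : gibbsExp N h J (fun D => ψ (monomerDensity N D)) = Num / Z := rfl
  set ES : ℝ := IMD.entr (IMD.sN N (dstar N)) + IMD.fphi h J (IMD.sN N (dstar N)) with hESdef
  -- lower bound on Z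
  have hZsum : Z = ∑ d ∈ Finset.range (N+1), IMD.W h J N d := IMD.Z_eq h J N
  have hWd : Real.exp ((N:ℝ)*ES - 2*Real.log N - 2) ≤ IMD.W h J N (dstar N) :=
    IMD.W_ge_exp hN1 (hdstar_le N)
  have hdmem : dstar N ∈ Finset.range (N+1) := by
    rw [Finset.mem_range]
    have := hdstar_le N
    omega
  have hZge : IMD.W h J N (dstar N) ≤ Z := by
    rw [hZsum]
    exact Finset.single_le_sum (fun d _ => IMD.W_nonneg h J N d) hdmem
  have hZpos : (0:ℝ) < Z := lt_of_lt_of_le (lt_of_lt_of_le (Real.exp_pos _) hWd) hZge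
  -- bad part
  set badd : Finset ℕ := (Finset.range (N+1)).filter
    (fun d => δψ ≤ |IMD.sN N d - mstar|) with hbadddef
  set Zbad : ℝ := ∑ d ∈ badd, IMD.W h J N d with hZbaddef
  have hZbad_nonneg : 0 ≤ Zbad :=
    Finset.sum_nonneg (fun d _ => IMD.W_nonneg h J N d)
  have hterm_le : ∀ d ∈ badd, IMD.W h J N d
      ≤ Real.exp ((N:ℝ)*(P - δ) + Real.log N + 1) := by
    intro d hd
    rw [hbadddef, Finset.mem_filter] at hd
    apply IMD.W_le_exp hN1
    intro h2d
    obtain ⟨hs0, hs1⟩ := IMD.sN_mem hN1 h2d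
    have hgle : ptilde h J (IMD.sN N d) ≤ P - δ := hgap _ hs0 hs1 hd.2
    have hef : IMD.entr (IMD.sN N d) + IMD.fphi h J (IMD.sN N d)
        ≤ ptilde h J (IMD.sN N d) := IMD.entr_add_f_le h J hs0 hs1
    have hmul : (N:ℝ)*(IMD.entr (IMD.sN N d) + IMD.fphi h J (IMD.sN N d))
        ≤ (N:ℝ)*(P - δ) :=
      mul_le_mul_of_nonneg_left (le_trans hef hgle) hNpos.le
    linarith
  have hZbad_le : Zbad ≤ ((N:ℝ)+1) * Real.exp ((N:ℝ)*(P - δ) + Real.log N + 1) := by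
    calc Zbad ≤ ∑ _d ∈ badd, Real.exp ((N:ℝ)*(P - δ) + Real.log N + 1) :=
          Finset.sum_le_sum hterm_le
      _ = badd.card * Real.exp ((N:ℝ)*(P - δ) + Real.log N + 1) := by
          rw [Finset.sum_const, nsmul_eq_mul]
      _ ≤ ((N:ℝ)+1) * Real.exp ((N:ℝ)*(P - δ) + Real.log N + 1) := by
          apply mul_le_mul_of_nonneg_right _ (Real.exp_pos _).le
          have : badd.card ≤ N+1 := le_trans (Finset.card_filter_le _ _)
            (by rw [Finset.card_range])
          exact_mod_cast this
  -- ratio bound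
  set R : ℝ := ((N:ℝ)+1) * Real.exp (3*Real.log N + 3 - (N:ℝ)*δ/2) with hRdef
  have hR_nonneg : 0 ≤ R := by positivity
  have hZbadZ : Zbad ≤ R * Z := by
    have hAB : ((N:ℝ)+1) * Real.exp ((N:ℝ)*(P - δ) + Real.log N + 1)
        ≤ R * Real.exp ((N:ℝ)*ES - 2*Real.log N - 2) := by
      rw [hRdef, mul_assoc, ← Real.exp_add]
      apply mul_le_mul_of_nonneg_left _ (by positivity : (0:ℝ) ≤ (N:ℝ)+1)
      apply Real.exp_le_exp.2
      have hESge : P - δ/2 ≤ ES := hE1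
      nlinarith [hNpos.le]
    calc Zbad ≤ ((N:ℝ)+1) * Real.exp ((N:ℝ)*(P - δ) + Real.log N + 1) := hZbad_le
      _ ≤ R * Real.exp ((N:ℝ)*ES - 2*Real.log N - 2) := hAB
      _ ≤ R * IMD.W h J N (dstar N) := mul_le_mul_of_nonneg_left hWd hR_nonneg
      _ ≤ R * Z := mul_le_mul_of_nonneg_left hZge hR_nonneg
  -- numerator splitting
  have hw : ∀ D : Finset (Sym2 (Fin N)),
      0 ≤ (N:ℝ)^(-(D.card:ℤ)) * Real.exp (negH N h J D) :=
    fun D => mul_nonneg (zpow_nonneg (Nat.cast_nonneg N) _) (Real.exp_pos _).le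
  set u : ℝ → ℝ := fun m => if δψ ≤ |m - mstar| then 1 else 0 with hudef
  have hbadgroup : ∑ D ∈ dimerConfigs N,
      ((N:ℝ)^(-(D.card:ℤ)) * Real.exp (negH N h J D)) * u (monomerDensity N D)
        = Zbad := by
    rw [IMD.group_general h J N u, hZbaddef, hbadddef, Finset.sum_filter]
    apply Finset.sum_congr rfl
    intro d _
    rw [hudef]
    by_cases hcase : δψ ≤ |IMD.sN N d - mstar| <;> simp [hcase]
  have hNum_split : |Num - ψ mstar * Z| ≤ (ε/4) * Z + 2*C*Zbad := by
    have hZconfig : Z = ∑ D ∈ dimerConfigs N,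
        (N:ℝ)^(-(D.card:ℤ)) * Real.exp (negH N h J D) := rfl
    have hdiff : Num - ψ mstar * Z = ∑ D ∈ dimerConfigs N,
        ((N:ℝ)^(-(D.card:ℤ)) * Real.exp (negH N h J D))
          * (ψ (monomerDensity N D) - ψ mstar) := by
      rw [hNumdef, hZconfig, Finset.mul_sum, ← Finset.sum_sub_distrib]
      apply Finset.sum_congr rfl
      intro D _
      ring
    rw [hdiff]
    calc |∑ D ∈ dimerConfigs N, ((N:ℝ)^(-(D.card:ℤ)) * Real.exp (negH N h J D))
          * (ψ (monomerDensity N D) - ψ mstar)|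
        ≤ ∑ D ∈ dimerConfigs N, |((N:ℝ)^(-(D.card:ℤ)) * Real.exp (negH N h J D))
          * (ψ (monomerDensity N D) - ψ mstar)| := Finset.abs_sum_le_sum_abs _ _
      _ ≤ ∑ D ∈ dimerConfigs N, (((N:ℝ)^(-(D.card:ℤ)) * Real.exp (negH N h J D)) * (ε/4)
          + 2*C*(((N:ℝ)^(-(D.card:ℤ)) * Real.exp (negH N h J D)) * u (monomerDensity N D))) := by
          apply Finset.sum_le_sum
          intro D _
          rw [abs_mul, abs_of_nonneg (hw D)]
          rw [hudef]
          by_cases hcase : δψ ≤ |monomerDensity N D - mstar|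
          · simp only [hcase, if_true, mul_one]
            have habs : |ψ (monomerDensity N D) - ψ mstar| ≤ 2*C := by
              calc |ψ (monomerDensity N D) - ψ mstar|
                  ≤ |ψ (monomerDensity N D)| + |ψ mstar| := abs_sub _ _
                _ ≤ C + C := add_le_add (hC _) (hC _)
                _ = 2*C := by ring
            have hh1 := mul_le_mul_of_nonneg_left habs (hw D)
            have hh2 : 0 ≤ ((N:ℝ)^(-(D.card:ℤ)) * Real.exp (negH N h J D)) * (ε/4) :=
              mul_nonneg (hw D) (by linarith)
            linarith
          · simp only [hcase, if_false, mul_zero, add_zero]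
            push_neg at hcase
            have hdist : dist (monomerDensity N D) mstar < δψ := by
              rw [Real.dist_eq]; exact hcase
            have hd2 := hδψ hdist
            rw [Real.dist_eq] at hd2
            exact mul_le_mul_of_nonneg_left hd2.le (hw D)
      _ = (ε/4) * Z + 2*C*Zbad := by
          rw [Finset.sum_add_distrib, ← Finset.mul_sum, ← Finset.sum_mul, ← hZconfig,
            hbadgroup]
          ring
  -- final estimate
  have hfinal : dist (gibbsExp N h J (fun D => ψ (monomerDensity N D))) (ψ mstar)
      ≤ ε/4 + 2*C*R := by
    rw [Real.dist_eq, hgibbs]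
    rw [IMD.div_sub_eq hZpos.ne', abs_div, abs_of_pos hZpos]
    rw [div_le_iff₀ hZpos]
    have h2CZbad : 2*C*Zbad ≤ 2*C*(R*Z) :=
      mul_le_mul_of_nonneg_left hZbadZ (by linarith)
    calc |Num - ψ mstar * Z| ≤ (ε/4) * Z + 2*C*Zbad := hNum_split
      _ ≤ (ε/4) * Z + 2*C*(R*Z) := by linarith
      _ = (ε/4 + 2*C*R) * Z := by ring
  have hCR : 2*C*R < ε/2 := IMD.small_arith hC0 hε hE2
  calc dist (gibbsExp N h J (fun D => ψ (monomerDensity N D))) (ψ mstar)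
      ≤ ε/4 + 2*C*R := hfinal
    _ < ε/4 + ε/2 := by linarith
    _ < ε := by linarith


end
end

section
/- Gaussian representation of the pure monomer-dimer partition function: for every integer N ≥ 1 and every a ∈ ℝ, Z_N^{(0)}(a) = √(N/(2π)) · ∫_ℝ ((x + e^a)·e^{−x²/2})^N dx. -/
open MeasureTheory Filter Real

noncomputable section

/-!
Both sides reduce to the Gaussian Wick formula
`∫ (1 + t y)^n e^{-y²/2} dy = √(2π) · Σ_{D matching of K_n} t^{2|D|}`.
A matching on `insert v S` either leaves `v` unmatched or pairs it with some `u ∈ S`, so the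
matching sums satisfy `m_{n+2} = m_{n+1} + (n+1) t² m_n`; Gaussian integration by parts,
`∫ y p(y) e^{-y²/2} = ∫ p'(y) e^{-y²/2}`, gives the same recursion for the integrals.
On the other side, `Z_N^{(0)}(a) = e^{aN} Σ_D (e^{-2a}/N)^{|D|}`, and the substitution `x = y/√N`
turns the integral into `e^{aN}/√N` times the Wick integral with `t = e^{-a}/√N`.
-/

open Polynomial

theorem integrable_eval_mul_exp_neg_mul_sq {b : ℝ} (hb : 0 < b) (p : ℝ[X]) :
    Integrable fun x : ℝ => p.eval x * exp (-b * x ^ 2) := by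
  induction p using Polynomial.induction_on' with
  | add p q hp hq =>
    simp only [eval_add, add_mul]
    exact hp.add hq
  | monomial n c =>
    have hmon := integrable_rpow_mul_exp_neg_mul_sq hb (s := n)
      (neg_one_lt_zero.trans_le n.cast_nonneg)
    simpa [mul_assoc, Real.rpow_natCast] using hmon.const_mul c

theorem integrable_eval_mul_gaussian (p : ℝ[X]) :
    Integrable fun x : ℝ => p.eval x * exp (-x ^ 2 / 2) := by
  simpa [neg_div, div_eq_inv_mul] using
    integrable_eval_mul_exp_neg_mul_sq (b := 1 / 2) (by norm_num) p

def gaussianIntegral : ℝ[X] →ₗ[ℝ] ℝ where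
  toFun p := ∫ x, p.eval x * exp (-x ^ 2 / 2)
  map_add' p q := by
    simp only [eval_add, add_mul]
    exact integral_add (integrable_eval_mul_gaussian p) (integrable_eval_mul_gaussian q)
  map_smul' c p := by
    simp only [eval_smul, smul_eq_mul, mul_assoc, integral_const_mul, RingHom.id_apply]

theorem gaussianIntegral_apply (p : ℝ[X]) :
    gaussianIntegral p = ∫ x, p.eval x * exp (-x ^ 2 / 2) := rfl

theorem gaussianIntegral_one : gaussianIntegral 1 = √(2 * π) := by
  have h := integral_gaussian (1 / 2)
  rw [show π / (1 / 2) = 2 * π by ring] at h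
  simpa [gaussianIntegral_apply, neg_div, div_eq_inv_mul] using h

theorem hasDerivAt_exp_neg_sq_div_two (x : ℝ) :
    HasDerivAt (fun x : ℝ => exp (-x ^ 2 / 2)) (-x * exp (-x ^ 2 / 2)) x := by
  refine ((hasDerivAt_pow 2 x).fun_neg.div_const 2).exp.congr_deriv ?_
  norm_num
  ring

theorem gaussianIntegral_X_mul (p : ℝ[X]) :
    gaussianIntegral (X * p) = gaussianIntegral (derivative p) := by
  have hderiv : ∀ x, HasDerivAt (fun x => p.eval x * exp (-x ^ 2 / 2))
      ((derivative p - X * p).eval x * exp (-x ^ 2 / 2)) x := fun x => by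
    refine ((p.hasDerivAt x).fun_mul (hasDerivAt_exp_neg_sq_div_two x)).congr_deriv ?_
    simp only [eval_sub, eval_mul, eval_X]
    ring
  have hzero := integral_eq_zero_of_hasDerivAt_of_integrable hderiv
    (integrable_eval_mul_gaussian _) (integrable_eval_mul_gaussian p)
  rw [← gaussianIntegral_apply, map_sub, sub_eq_zero] at hzero
  exact hzero.symm

theorem gaussianIntegral_X : gaussianIntegral X = 0 := by
  simpa using gaussianIntegral_X_mul 1

theorem gaussianIntegral_one_add_C_mul_X_pow_add_two (t : ℝ) (n : ℕ) :
    gaussianIntegral ((1 + C t * X) ^ (n + 2)) =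
      gaussianIntegral ((1 + C t * X) ^ (n + 1)) +
        (n + 1) * t ^ 2 * gaussianIntegral ((1 + C t * X) ^ n) := by
  have hsplit : (1 + C t * X) ^ (n + 2) =
      (1 + C t * X) ^ (n + 1) + t • (X * (1 + C t * X) ^ (n + 1)) := by
    rw [smul_eq_C_mul]; ring
  have hderiv : derivative ((1 + C t * X) ^ (n + 1)) =
      ((n + 1) * t) • (1 + C t * X) ^ n := by
    rw [smul_eq_C_mul, derivative_pow, add_tsub_cancel_right, derivative_add, derivative_one,
      derivative_C_mul_X, zero_add, C_mul, C_add, C_1]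
    simp only [map_natCast]
    push_cast
    ring
  rw [hsplit, map_add, map_smul, gaussianIntegral_X_mul, hderiv, map_smul, smul_eq_mul,
    smul_eq_mul]
  ring

section Matchings

variable {α : Type*}

def IsMatching (D : Finset (Sym2 α)) : Prop :=
  (∀ e ∈ D, ¬ e.IsDiag) ∧ ∀ e ∈ D, ∀ f ∈ D, e ≠ f → ∀ v : α, ¬(v ∈ e ∧ v ∈ f)

open Classical in
def matchingsOn (S : Finset α) : Finset (Finset (Sym2 α)) :=
  {D ∈ S.sym2.powerset | IsMatching D}

theorem mem_matchingsOn {S : Finset α} {D : Finset (Sym2 α)} :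
    D ∈ matchingsOn S ↔ (∀ e ∈ D, ∀ a ∈ e, a ∈ S) ∧ IsMatching D := by
  simp [matchingsOn, Finset.subset_iff]

theorem matchingsOn_empty : matchingsOn (∅ : Finset α) = {∅} := by
  ext D
  simp only [mem_matchingsOn, Finset.notMem_empty, Finset.mem_singleton]
  refine ⟨fun ⟨h, _⟩ => Finset.eq_empty_of_forall_notMem fun e he => ?_, ?_⟩
  · induction e using Sym2.ind with
    | _ a b => exact h _ he a (Sym2.mem_mk_left a b)
  · rintro rfl
    simp [IsMatching]

theorem IsMatching.subset {D D' : Finset (Sym2 α)} (hD : IsMatching D) (h : D' ⊆ D) :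
    IsMatching D' :=
  ⟨fun e he => hD.1 e (h he), fun e he f hf => hD.2 e (h he) f (h hf)⟩

theorem mk_notMem_of_mem_matchingsOn {S : Finset α} {D : Finset (Sym2 α)} {v : α}
    (hD : D ∈ matchingsOn S) (hv : v ∉ S) (u : α) : s(v, u) ∉ D :=
  fun h => hv ((mem_matchingsOn.mp hD).1 _ h v (Sym2.mem_mk_left v u))

variable [DecidableEq α]

theorem IsMatching.insert {D : Finset (Sym2 α)} {e : Sym2 α} (hD : IsMatching D)
    (he : ¬ e.IsDiag) (hdisj : ∀ f ∈ D, ∀ a ∈ e, a ∉ f) : IsMatching (insert e D) := by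
  refine ⟨fun f hf => ?_, fun f hf g hg hfg a ⟨haf, hag⟩ => ?_⟩
  · rcases Finset.mem_insert.mp hf with rfl | hf
    exacts [he, hD.1 f hf]
  · rcases Finset.mem_insert.mp hf with rfl | hfD <;>
      rcases Finset.mem_insert.mp hg with rfl | hgD
    · exact hfg rfl
    · exact hdisj g hgD a haf hag
    · exact hdisj f hfD a hag haf
    · exact hD.2 f hfD g hgD hfg a ⟨haf, hag⟩

theorem matchingsOn_insert {S : Finset α} {v : α} (hv : v ∉ S) :
    matchingsOn (insert v S) = matchingsOn S ∪
      S.biUnion fun u => (matchingsOn (S.erase u)).image (insert s(v, u)) := by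
  ext D
  simp only [Finset.mem_union, Finset.mem_biUnion, Finset.mem_image, mem_matchingsOn]
  constructor
  · rintro ⟨hsupp, hD⟩
    by_cases hcov : ∃ e ∈ D, v ∈ e
    · obtain ⟨e, he, hve⟩ := hcov
      have hvu : Sym2.Mem.other hve ≠ v := Sym2.other_ne (hD.1 e he) hve
      have huS : Sym2.Mem.other hve ∈ S :=
        (Finset.mem_insert.mp (hsupp e he _ (Sym2.other_mem hve))).resolve_left hvu
      refine Or.inr ⟨_, huS, D.erase e, ⟨fun f hf a haf => ?_, hD.subset (D.erase_subset e)⟩, ?_⟩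
      · obtain ⟨hfe, hf⟩ := Finset.mem_erase.mp hf
        have hae : a ∉ e := fun hae => hD.2 f hf e he hfe a ⟨haf, hae⟩
        refine Finset.mem_erase.mpr ⟨fun hau => hae (hau ▸ Sym2.other_mem hve), ?_⟩
        exact (Finset.mem_insert.mp (hsupp f hf a haf)).resolve_left
          fun hav => hae (hav ▸ hve)
      · rw [Sym2.other_spec hve, Finset.insert_erase he]
    · push Not at hcov
      exact Or.inl ⟨fun e he a hae => (Finset.mem_insert.mp (hsupp e he a hae)).resolve_left
        fun hav => hcov e he (hav ▸ hae), hD⟩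
  · rintro (⟨hsupp, hD⟩ | ⟨u, huS, D, ⟨hsupp, hD⟩, rfl⟩)
    · exact ⟨fun e he a hae => Finset.mem_insert_of_mem (hsupp e he a hae), hD⟩
    · refine ⟨fun e he a hae => ?_, hD.insert ?_ fun f hf a hae haf => ?_⟩
      · rcases Finset.mem_insert.mp he with rfl | he
        · rcases Sym2.mem_iff.mp hae with rfl | rfl
          exacts [Finset.mem_insert_self _ _, Finset.mem_insert_of_mem huS]
        · exact Finset.mem_insert_of_mem (Finset.mem_of_mem_erase (hsupp e he a hae))
      · rw [Sym2.mk_isDiag_iff]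
        rintro rfl
        exact hv huS
      · have haS := Finset.mem_erase.mp (hsupp f hf a haf)
        rcases Sym2.mem_iff.mp hae with rfl | rfl
        exacts [hv haS.2, haS.1 rfl]

theorem sum_matchingsOn_insert {β : Type*} [AddCommMonoid β] (g : Finset (Sym2 α) → β)
    {S : Finset α} {v : α} (hv : v ∉ S) :
    ∑ D ∈ matchingsOn (insert v S), g D = ∑ D ∈ matchingsOn S, g D +
      ∑ u ∈ S, ∑ D ∈ matchingsOn (S.erase u), g (insert s(v, u) D) := by
  have hdisj : Disjoint (matchingsOn S)
      (S.biUnion fun u => (matchingsOn (S.erase u)).image (insert s(v, u))) := by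
    simp only [Finset.disjoint_left, Finset.mem_biUnion, Finset.mem_image, not_exists, not_and]
    rintro _ hD u - D' - rfl
    exact mk_notMem_of_mem_matchingsOn hD hv u (Finset.mem_insert_self _ _)
  have hpair : (S : Set α).PairwiseDisjoint
      fun u => (matchingsOn (S.erase u)).image (insert s(v, u)) := by
    intro u _ u' _ huu'
    simp only [Function.onFun, Finset.disjoint_left, Finset.mem_image, not_exists, not_and]
    rintro _ ⟨D, -, rfl⟩ D' hD' hDD'
    have hmem : s(v, u) ∈ insert s(v, u') D' := hDD' ▸ Finset.mem_insert_self _ _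
    rcases Finset.mem_insert.mp hmem with h | h
    · exact huu' (Sym2.congr_right.mp h)
    · exact mk_notMem_of_mem_matchingsOn hD' (fun h' => hv (Finset.mem_of_mem_erase h')) u h
  rw [matchingsOn_insert hv, Finset.sum_union hdisj, Finset.sum_biUnion hpair]
  congr 1
  refine Finset.sum_congr rfl fun u _ => Finset.sum_image fun D hD D' hD' h => ?_
  have hv' : v ∉ S.erase u := fun h' => hv (Finset.mem_of_mem_erase h')
  rw [← Finset.erase_insert (mk_notMem_of_mem_matchingsOn hD hv' u), h,
    Finset.erase_insert (mk_notMem_of_mem_matchingsOn hD' hv' u)]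

variable {R : Type*} [CommSemiring R]

theorem sum_pow_card_matchingsOn_insert (w : R) {S : Finset α} {v : α} (hv : v ∉ S) :
    ∑ D ∈ matchingsOn (insert v S), w ^ D.card = ∑ D ∈ matchingsOn S, w ^ D.card +
      w * ∑ u ∈ S, ∑ D ∈ matchingsOn (S.erase u), w ^ D.card := by
  rw [sum_matchingsOn_insert _ hv, Finset.mul_sum]
  congr 1
  refine Finset.sum_congr rfl fun u _ => ?_
  rw [Finset.mul_sum]
  refine Finset.sum_congr rfl fun D hD => ?_
  have hv' : v ∉ S.erase u := fun h => hv (Finset.mem_of_mem_erase h)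
  rw [Finset.card_insert_of_notMem (mk_notMem_of_mem_matchingsOn hD hv' u), pow_succ']

theorem sum_pow_card_matchingsOn (w : R) (f : ℕ → R) (h0 : f 0 = 1) (h1 : f 1 = 1)
    (hrec : ∀ n, f (n + 2) = f (n + 1) + (n + 1) * w * f n) (S : Finset α) :
    ∑ D ∈ matchingsOn S, w ^ D.card = f S.card := by
  induction hS : S.card using Nat.strong_induction_on generalizing S with
  | _ n ih =>
  rcases n with _ | _ | n
  · simp [Finset.card_eq_zero.mp hS, matchingsOn_empty, h0]
  · obtain ⟨v, rfl⟩ := Finset.card_eq_one.mp hS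
    rw [← LawfulSingleton.insert_empty_eq,
      sum_pow_card_matchingsOn_insert w (Finset.notMem_empty v)]
    simp [matchingsOn_empty, h1]
  · obtain ⟨v, S, hv, rfl, hS'⟩ := Finset.card_eq_succ.mp hS
    have herase : ∀ u ∈ S, ∑ D ∈ matchingsOn (S.erase u), w ^ D.card = f n := fun u hu =>
      ih n (by omega) _ (by rw [Finset.card_erase_of_mem hu, hS']; rfl)
    rw [sum_pow_card_matchingsOn_insert w hv, ih (n + 1) (by omega) S hS',
      Finset.sum_congr rfl herase, Finset.sum_const, hS', nsmul_eq_mul, hrec]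
    push_cast
    ring

end Matchings

theorem gaussianIntegral_one_add_C_mul_X_pow_card {α : Type*} [DecidableEq α] (t : ℝ)
    (S : Finset α) :
    gaussianIntegral ((1 + C t * X) ^ S.card) =
      √(2 * π) * ∑ D ∈ matchingsOn S, (t ^ 2) ^ D.card := by
  have h2π : √(2 * π) ≠ 0 := by positivity
  rw [sum_pow_card_matchingsOn (t ^ 2)
    (fun n => gaussianIntegral ((1 + C t * X) ^ n) / √(2 * π))]
  · field_simp
  · simp only [pow_zero, gaussianIntegral_one, div_self h2π]
  · simp only [pow_one, ← smul_eq_C_mul, map_add, map_smul, gaussianIntegral_one,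
      gaussianIntegral_X, smul_zero, add_zero, div_self h2π]
  · intro n
    simp only [gaussianIntegral_one_add_C_mul_X_pow_add_two]
    ring

theorem dimerConfigs_eq_matchingsOn (N : ℕ) : dimerConfigs N = matchingsOn Finset.univ := by
  ext D
  simp [dimerConfigs, mem_matchingsOn, IsDimerConfig, IsMatching]

theorem Z0_eq_exp_mul_sum (N : ℕ) (a : ℝ) :
    Z0 N a = exp (a * N) *
      ∑ D ∈ matchingsOn (Finset.univ : Finset (Fin N)), (exp (-(2 * a)) / N) ^ D.card := by
  rw [Z0, dimerConfigs_eq_matchingsOn, Finset.mul_sum]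
  refine Finset.sum_congr rfl fun D _ => ?_
  have hexp : exp (a * monomerCount N D) = exp (a * N) * exp (-(2 * a)) ^ D.card := by
    rw [monomerCount, ← exp_nat_mul, ← exp_add]
    ring_nf
  rw [hexp, zpow_neg, zpow_natCast, div_pow]
  ring

theorem integral_add_mul_exp_neg_sq_div_two_pow {n : ℕ} (hn : n ≠ 0) {b : ℝ} (hb : b ≠ 0) :
    ∫ x, ((x + b) * exp (-x ^ 2 / 2)) ^ n =
      b ^ n / √n * ∫ y, (1 + (b * √n)⁻¹ * y) ^ n * exp (-y ^ 2 / 2) := by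
  have hs : 0 < √(n : ℝ) := Real.sqrt_pos.mpr (by positivity)
  have hs2 : √(n : ℝ) ^ 2 = n := Real.sq_sqrt (by positivity)
  have hpt : ∀ y : ℝ, (((√n)⁻¹ * y + b) * exp (-((√n)⁻¹ * y) ^ 2 / 2)) ^ n =
      b ^ n * ((1 + (b * √n)⁻¹ * y) ^ n * exp (-y ^ 2 / 2)) := fun y => by
    have hlin : (√n)⁻¹ * y + b = b * (1 + (b * √n)⁻¹ * y) := by field_simp; ring
    have hquad : (n : ℝ) * (-((√n)⁻¹ * y) ^ 2 / 2) = -y ^ 2 / 2 := by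
      rw [mul_pow, inv_pow, hs2]; field_simp
    rw [mul_pow, ← exp_nat_mul, hquad, hlin, mul_pow, mul_assoc]
  calc ∫ x, ((x + b) * exp (-x ^ 2 / 2)) ^ n
      = (√n)⁻¹ * ∫ y, (((√n)⁻¹ * y + b) * exp (-((√n)⁻¹ * y) ^ 2 / 2)) ^ n := by
        rw [Measure.integral_comp_inv_mul_left (fun x => ((x + b) * exp (-x ^ 2 / 2)) ^ n),
          abs_of_pos hs, smul_eq_mul, inv_mul_cancel_left₀ hs.ne']
    _ = b ^ n / √n * ∫ y, (1 + (b * √n)⁻¹ * y) ^ n * exp (-y ^ 2 / 2) := by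
        simp_rw [hpt, integral_const_mul]
        ring

/-- Gaussian representation of the pure hard-core partition
function. -/
theorem hardcore_gaussian_representation (N : ℕ) (hN : 1 ≤ N) (a : ℝ) :
    Z0 N a = Real.sqrt ((N : ℝ) / (2 * π)) *
      ∫ x : ℝ, ((x + Real.exp a) * Real.exp (-x^2/2)) ^ N := by
  have hN' : (0 : ℝ) < N := by exact_mod_cast hN
  have ht : ((exp a * √N)⁻¹) ^ 2 = exp (-(2 * a)) / N := by
    rw [inv_pow, mul_pow, Real.sq_sqrt hN'.le, ← exp_nat_mul, exp_neg]
    push_cast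
    ring_nf
  have hwick := gaussianIntegral_one_add_C_mul_X_pow_card (exp a * √N)⁻¹
    (Finset.univ : Finset (Fin N))
  rw [gaussianIntegral_apply, Finset.card_univ, Fintype.card_fin, ht] at hwick
  simp only [eval_pow, eval_add, eval_one, eval_mul, eval_C, eval_X] at hwick
  rw [Z0_eq_exp_mul_sum, integral_add_mul_exp_neg_sq_div_two_pow (by omega) (exp_pos a).ne',
    hwick, Real.sqrt_div hN'.le, ← exp_nat_mul]
  field_simp

end
end

section
/- Let (W_N) and (Y_N) be sequences of real random variables such that, for each N, W_N and Y_N are independent. Suppose W_N converges in distribution to a random variable W whose characteristic function t ↦ 𝔼 e^{itW} never vanishes on ℝ. Let Y be a real random variable independent of W. Then Y_N converges in distribution to Y if and only if W_N + Y_N converges in distribution to W + Y. -/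
open MeasureTheory Filter Real

noncomputable section

namespace ConvSumAux

variable {Ω : Type*} [MeasurableSpace Ω] (P : Measure Ω) [IsProbabilityMeasure P]

set_option linter.unusedSectionVars false
set_option linter.unusedVariables false

def cf (X : Ω → ℝ) (t : ℝ) : ℂ := ∫ ω, Complex.exp (Complex.I * (t * X ω : ℝ)) ∂P

lemma integrable_of_bdd {E : Type*} [NormedAddCommGroup E] {f : Ω → E}
    (hm : AEStronglyMeasurable f P) {C : ℝ} (h : ∀ ω, ‖f ω‖ ≤ C) : Integrable f P :=
  (integrable_const C).mono' hm (Filter.Eventually.of_forall h)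

lemma integral_ofReal'' {f : Ω → ℝ} : ∫ ω, ((f ω : ℝ) : ℂ) ∂P = ((∫ ω, f ω ∂P : ℝ) : ℂ) :=
  integral_ofReal

lemma cf_eq (X : Ω → ℝ) (hX : Measurable X) (t : ℝ) :
    cf P X t = ((∫ ω, Real.cos (t * X ω) ∂P : ℝ) : ℂ)
      + ((∫ ω, Real.sin (t * X ω) ∂P : ℝ) : ℂ) * Complex.I := by
  have hmc : Measurable fun ω => Real.cos (t * X ω) :=
    (Real.continuous_cos.comp (continuous_const.mul continuous_id)).measurable.comp hX
  have hms : Measurable fun ω => Real.sin (t * X ω) :=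
    (Real.continuous_sin.comp (continuous_const.mul continuous_id)).measurable.comp hX
  have hic : Integrable (fun ω => Real.cos (t * X ω)) P :=
    integrable_of_bdd P hmc.aestronglyMeasurable (C := 1)
      (fun ω => by rw [Real.norm_eq_abs]; exact Real.abs_cos_le_one _)
  have his : Integrable (fun ω => Real.sin (t * X ω)) P :=
    integrable_of_bdd P hms.aestronglyMeasurable (C := 1)
      (fun ω => by rw [Real.norm_eq_abs]; exact Real.abs_sin_le_one _)
  have key : ∀ ω, Complex.exp (Complex.I * (t * X ω : ℝ))
      = ((Real.cos (t * X ω) : ℝ) : ℂ) + ((Real.sin (t * X ω) : ℝ) : ℂ) * Complex.I := by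
    intro ω
    rw [mul_comm, Complex.exp_mul_I]
    simp [Complex.ofReal_cos, Complex.ofReal_sin]
  rw [cf]
  simp_rw [key]
  rw [show (∫ ω, (((Real.cos (t * X ω) : ℝ) : ℂ) + ((Real.sin (t * X ω) : ℝ) : ℂ) * Complex.I) ∂P) = (∫ ω, ((Real.cos (t * X ω) : ℝ) : ℂ) ∂P) + (∫ ω, ((Real.sin (t * X ω) : ℝ) : ℂ) * Complex.I ∂P) from integral_add (hic.ofReal) ((his.ofReal).mul_const Complex.I)]
  rw [integral_mul_const]
  rw [integral_ofReal'' P, integral_ofReal'' P]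

lemma cf_tendsto (X : ℕ → Ω → ℝ) (Xl : Ω → ℝ)
    (hconv : ∀ ψ : ℝ → ℝ, Continuous ψ → (∃ C : ℝ, ∀ x : ℝ, |ψ x| ≤ C) →
      Tendsto (fun n => ∫ ω, ψ (X n ω) ∂P) atTop (nhds (∫ ω, ψ (Xl ω) ∂P)))
    (hm : ∀ n, Measurable (X n)) (hml : Measurable Xl) (t : ℝ) :
    Tendsto (fun n => cf P (X n) t) atTop (nhds (cf P Xl t)) := by
  have hc := hconv (fun x => Real.cos (t * x))
    (Real.continuous_cos.comp (continuous_const.mul continuous_id))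
    ⟨1, fun x => Real.abs_cos_le_one _⟩
  have hs := hconv (fun x => Real.sin (t * x))
    (Real.continuous_sin.comp (continuous_const.mul continuous_id))
    ⟨1, fun x => Real.abs_sin_le_one _⟩
  have h : Tendsto (fun n => ((∫ ω, Real.cos (t * X n ω) ∂P : ℝ) : ℂ)
      + ((∫ ω, Real.sin (t * X n ω) ∂P : ℝ) : ℂ) * Complex.I) atTop
      (nhds (((∫ ω, Real.cos (t * Xl ω) ∂P : ℝ) : ℂ)
      + ((∫ ω, Real.sin (t * Xl ω) ∂P : ℝ) : ℂ) * Complex.I)) :=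
    ((Complex.continuous_ofReal.tendsto _).comp hc).add
      (((Complex.continuous_ofReal.tendsto _).comp hs).mul_const _)
  rw [cf_eq P Xl hml t]
  exact h.congr fun n => (cf_eq P (X n) (hm n) t).symm

lemma cf_add_of_indep (W Y : Ω → ℝ) (hW : Measurable W) (hY : Measurable Y)
    (h : ProbabilityTheory.IndepFun W Y P) (t : ℝ) :
    cf P (fun ω => W ω + Y ω) t = cf P W t * cf P Y t := by
  have mcos : Measurable fun x : ℝ => Real.cos (t * x) :=
    (Real.continuous_cos.comp (continuous_const.mul continuous_id)).measurable
  have msin : Measurable fun x : ℝ => Real.sin (t * x) :=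
    (Real.continuous_sin.comp (continuous_const.mul continuous_id)).measurable
  have hmcW : Measurable fun ω => Real.cos (t * W ω) := mcos.comp hW
  have hmsW : Measurable fun ω => Real.sin (t * W ω) := msin.comp hW
  have hmcY : Measurable fun ω => Real.cos (t * Y ω) := mcos.comp hY
  have hmsY : Measurable fun ω => Real.sin (t * Y ω) := msin.comp hY
  have hcc : ∫ ω, Real.cos (t * W ω) * Real.cos (t * Y ω) ∂P
      = (∫ ω, Real.cos (t * W ω) ∂P) * ∫ ω, Real.cos (t * Y ω) ∂P :=
    ProbabilityTheory.IndepFun.integral_fun_mul_eq_mul_integral (h.comp mcos mcos)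
      hmcW.aestronglyMeasurable hmcY.aestronglyMeasurable
  have hss : ∫ ω, Real.sin (t * W ω) * Real.sin (t * Y ω) ∂P
      = (∫ ω, Real.sin (t * W ω) ∂P) * ∫ ω, Real.sin (t * Y ω) ∂P :=
    ProbabilityTheory.IndepFun.integral_fun_mul_eq_mul_integral (h.comp msin msin)
      hmsW.aestronglyMeasurable hmsY.aestronglyMeasurable
  have hsc : ∫ ω, Real.sin (t * W ω) * Real.cos (t * Y ω) ∂P
      = (∫ ω, Real.sin (t * W ω) ∂P) * ∫ ω, Real.cos (t * Y ω) ∂P :=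
    ProbabilityTheory.IndepFun.integral_fun_mul_eq_mul_integral (h.comp msin mcos)
      hmsW.aestronglyMeasurable hmcY.aestronglyMeasurable
  have hcs : ∫ ω, Real.cos (t * W ω) * Real.sin (t * Y ω) ∂P
      = (∫ ω, Real.cos (t * W ω) ∂P) * ∫ ω, Real.sin (t * Y ω) ∂P :=
    ProbabilityTheory.IndepFun.integral_fun_mul_eq_mul_integral (h.comp mcos msin)
      hmcW.aestronglyMeasurable hmsY.aestronglyMeasurable
  have bdd : ∀ (f g : Ω → ℝ), Measurable f → Measurable g → (∀ ω, |f ω| ≤ 1) → (∀ ω, |g ω| ≤ 1) →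
      Integrable (fun ω => f ω * g ω) P := by
    intro f g hf hg hbf hbg
    refine integrable_of_bdd P (hf.mul hg).aestronglyMeasurable (C := 1) fun ω => ?_
    rw [Real.norm_eq_abs, abs_mul]
    exact mul_le_one₀ (hbf ω) (abs_nonneg _) (hbg ω)
  have icc := bdd _ _ hmcW hmcY (fun ω => Real.abs_cos_le_one _) (fun ω => Real.abs_cos_le_one _)
  have iss := bdd _ _ hmsW hmsY (fun ω => Real.abs_sin_le_one _) (fun ω => Real.abs_sin_le_one _)
  have isc := bdd _ _ hmsW hmcY (fun ω => Real.abs_sin_le_one _) (fun ω => Real.abs_cos_le_one _)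
  have ics := bdd _ _ hmcW hmsY (fun ω => Real.abs_cos_le_one _) (fun ω => Real.abs_sin_le_one _)
  rw [cf_eq P (fun ω => W ω + Y ω) (hW.add hY) t, cf_eq P W hW t, cf_eq P Y hY t]
  have keyc : ∀ ω, Real.cos (t * (W ω + Y ω))
      = Real.cos (t * W ω) * Real.cos (t * Y ω) - Real.sin (t * W ω) * Real.sin (t * Y ω) := by
    intro ω; rw [mul_add, Real.cos_add]
  have keys : ∀ ω, Real.sin (t * (W ω + Y ω))
      = Real.sin (t * W ω) * Real.cos (t * Y ω) + Real.cos (t * W ω) * Real.sin (t * Y ω) := by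
    intro ω; rw [mul_add, Real.sin_add]
  simp_rw [keyc, keys]
  rw [integral_sub icc iss, integral_add isc ics, hcc, hss, hsc, hcs]
  push_cast
  ring_nf
  rw [Complex.I_sq]
  ring

lemma tail_mono (X : Ω → ℝ) {M M' : ℝ} (h : M ≤ M') :
    (P {ω | M' < |X ω|}).toReal ≤ (P {ω | M < |X ω|}).toReal :=
  ENNReal.toReal_mono (measure_ne_top _ _)
    (measure_mono fun ω hω => lt_of_le_of_lt h hω)

lemma tight_single (X : Ω → ℝ) (hX : Measurable X) {ε : ℝ} (hε : 0 < ε) :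
    ∃ M : ℝ, 0 < M ∧ (P {ω | M < |X ω|}).toReal ≤ ε := by
  set s : ℕ → Set Ω := fun k => {ω | (k : ℝ) < |X ω|} with hs
  have hmeas : ∀ k, MeasurableSet (s k) :=
    fun k => measurableSet_lt measurable_const (hX.abs)
  have hanti : Antitone s := fun i j hij ω hω =>
    lt_of_le_of_lt (show ((i:ℝ)) ≤ (j:ℝ) from Nat.cast_le.2 hij) hω
  have hempty : ⋂ k, s k = ∅ := by
    ext ω
    simp only [Set.mem_iInter, Set.mem_empty_iff_false, iff_false, not_forall]
    obtain ⟨k, hk⟩ := exists_nat_ge (|X ω|)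
    exact ⟨k, by simp [hs, not_lt.2 hk]⟩
  have htend : Tendsto (fun k => P (s k)) atTop (nhds 0) := by
    have := tendsto_measure_iInter_atTop (μ := P) (fun k => (hmeas k).nullMeasurableSet)
      hanti ⟨0, measure_ne_top _ _⟩
    rwa [hempty, measure_empty] at this
  have : ∀ᶠ k in atTop, P (s k) < ENNReal.ofReal ε :=
    htend.eventually_lt_const (by simp [hε])
  obtain ⟨k, hk⟩ := this.exists
  refine ⟨(k : ℝ) + 1, by positivity, ?_⟩
  have hsub : (P {ω | (k : ℝ) + 1 < |X ω|}).toReal ≤ (P (s k)).toReal :=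
    tail_mono P X (by linarith)
  refine hsub.trans ?_
  rw [← ENNReal.ofReal_toReal (measure_ne_top P (s k))] at hk
  exact le_of_lt (by rwa [ENNReal.ofReal_lt_ofReal_iff hε] at hk)

lemma tight_of_conv (X : ℕ → Ω → ℝ) (Xl : Ω → ℝ)
    (hm : ∀ n, Measurable (X n)) (hml : Measurable Xl)
    (hconv : ∀ ψ : ℝ → ℝ, Continuous ψ → (∃ C : ℝ, ∀ x : ℝ, |ψ x| ≤ C) →
      Tendsto (fun n => ∫ ω, ψ (X n ω) ∂P) atTop (nhds (∫ ω, ψ (Xl ω) ∂P)))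
    {ε : ℝ} (hε : 0 < ε) :
    ∃ M : ℝ, 0 < M ∧ ∀ n, (P {ω | M < |X n ω|}).toReal ≤ ε := by
  obtain ⟨M₀, hM₀pos, hM₀⟩ := tight_single P Xl hml (half_pos hε)
  set ψ : ℝ → ℝ := fun x => min 1 (max 0 (|x| - M₀)) with hψdef
  have hψcont : Continuous ψ :=
    continuous_const.min (continuous_const.max (continuous_abs.sub continuous_const))
  have hψ01 : ∀ x, 0 ≤ ψ x ∧ ψ x ≤ 1 := by
    intro x
    constructor
    · exact le_min zero_le_one (le_max_left _ _)
    · exact min_le_left _ _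
  have hψbd : ∃ C : ℝ, ∀ x : ℝ, |ψ x| ≤ C :=
    ⟨1, fun x => abs_le.2 ⟨by linarith [(hψ01 x).1], (hψ01 x).2⟩⟩
  -- ψ ≤ indicator of {M₀ < |x|}
  have hψle : ∀ (Z : Ω → ℝ), Measurable Z →
      ∫ ω, ψ (Z ω) ∂P ≤ (P {ω | M₀ < |Z ω|}).toReal := by
    intro Z hZ
    have hint : Integrable (fun ω => ψ (Z ω)) P :=
      ((integrable_const (1:ℝ)).mono' ((hψcont.measurable.comp hZ).aestronglyMeasurable)
        (Filter.Eventually.of_forall fun ω => by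
          rw [Real.norm_eq_abs]; exact abs_le.2 ⟨by linarith [(hψ01 (Z ω)).1], (hψ01 (Z ω)).2⟩))
    have : ∫ ω, ψ (Z ω) ∂P ≤ ∫ ω, Set.indicator {ω | M₀ < |Z ω|} (fun _ => (1:ℝ)) ω ∂P := by
      refine integral_mono hint ?_ ?_
      · exact (integrable_const 1).indicator (measurableSet_lt measurable_const hZ.abs)
      · intro ω
        by_cases hω : M₀ < |Z ω|
        · rw [Set.indicator_of_mem (show ω ∈ {ω | M₀ < |Z ω|} from hω)]; exact (hψ01 (Z ω)).2
        · rw [Set.indicator_of_notMem (show ω ∉ {ω | M₀ < |Z ω|} from hω)]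
          have : |Z ω| - M₀ ≤ 0 := by simpa using not_lt.1 hω
          simp only [hψdef]
          exact le_trans (min_le_right _ _) (by simp [this])
    rwa [integral_indicator_const _ (measurableSet_lt measurable_const hZ.abs), smul_eq_mul,
      mul_one] at this
  -- indicator of {M₀ + 1 < |x|} ≤ ψ
  have hlei : ∀ (Z : Ω → ℝ), Measurable Z →
      (P {ω | M₀ + 1 < |Z ω|}).toReal ≤ ∫ ω, ψ (Z ω) ∂P := by
    intro Z hZ
    have hint : Integrable (fun ω => ψ (Z ω)) P :=
      ((integrable_const (1:ℝ)).mono' ((hψcont.measurable.comp hZ).aestronglyMeasurable)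
        (Filter.Eventually.of_forall fun ω => by
          rw [Real.norm_eq_abs]; exact abs_le.2 ⟨by linarith [(hψ01 (Z ω)).1], (hψ01 (Z ω)).2⟩))
    have : ∫ ω, Set.indicator {ω | M₀ + 1 < |Z ω|} (fun _ => (1:ℝ)) ω ∂P ≤ ∫ ω, ψ (Z ω) ∂P := by
      refine integral_mono ?_ hint ?_
      · exact (integrable_const 1).indicator (measurableSet_lt measurable_const hZ.abs)
      · intro ω
        by_cases hω : M₀ + 1 < |Z ω|
        · rw [Set.indicator_of_mem (show ω ∈ {ω | M₀ + 1 < |Z ω|} from hω)]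
          refine le_min le_rfl (le_max_of_le_right (by linarith))
        · rw [Set.indicator_of_notMem (show ω ∉ {ω | M₀ + 1 < |Z ω|} from hω)]
          exact (hψ01 (Z ω)).1
    rwa [integral_indicator_const _ (measurableSet_lt measurable_const hZ.abs), smul_eq_mul,
      mul_one] at this
  have hlim : ∫ ω, ψ (Xl ω) ∂P ≤ ε / 2 := (hψle Xl hml).trans hM₀
  have hev : ∀ᶠ n in atTop, ∫ ω, ψ (X n ω) ∂P < ε :=
    (hconv ψ hψcont hψbd).eventually_lt_const (by linarith)
  obtain ⟨N, hN⟩ := eventually_atTop.1 hev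
  -- handle n < N
  have hfin : ∀ n, ∃ Mn : ℝ, 0 < Mn ∧ (P {ω | Mn < |X n ω|}).toReal ≤ ε :=
    fun n => tight_single P (X n) (hm n) hε
  choose g hgpos hgle using hfin
  set M : ℝ := (M₀ + 1) + ∑ i ∈ Finset.range N, max (g i) 0 with hM
  have hsum_nonneg : ∀ i ∈ Finset.range N, (0:ℝ) ≤ max (g i) 0 := fun i _ => le_max_right _ _
  have hMge : M₀ + 1 ≤ M := le_add_of_nonneg_right (Finset.sum_nonneg hsum_nonneg)
  refine ⟨M, by positivity, fun n => ?_⟩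
  rcases lt_or_ge n N with hn | hn
  · have hgi : g n ≤ M := by
      have h1 : max (g n) 0 ≤ ∑ i ∈ Finset.range N, max (g i) 0 :=
        Finset.single_le_sum hsum_nonneg (Finset.mem_range.2 hn)
      have h2 : g n ≤ max (g n) 0 := le_max_left _ _
      have : (0:ℝ) ≤ M₀ + 1 := by positivity
      linarith
    exact (tail_mono P (X n) hgi).trans (hgle n)
  · refine (tail_mono P (X n) hMge).trans ?_
    exact ((hlei (X n) (hm n)).trans (le_of_lt (hN n hn)))

lemma tight_add (U V : ℕ → Ω → ℝ)
    (hU : ∀ ε : ℝ, 0 < ε → ∃ M : ℝ, 0 < M ∧ ∀ n, (P {ω | M < |U n ω|}).toReal ≤ ε)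
    (hV : ∀ ε : ℝ, 0 < ε → ∃ M : ℝ, 0 < M ∧ ∀ n, (P {ω | M < |V n ω|}).toReal ≤ ε)
    {ε : ℝ} (hε : 0 < ε) :
    ∃ M : ℝ, 0 < M ∧ ∀ n, (P {ω | M < |U n ω + V n ω|}).toReal ≤ ε := by
  obtain ⟨M₁, hM₁pos, hM₁⟩ := hU (ε/2) (half_pos hε)
  obtain ⟨M₂, hM₂pos, hM₂⟩ := hV (ε/2) (half_pos hε)
  refine ⟨M₁ + M₂, by positivity, fun n => ?_⟩
  have hsub : {ω | M₁ + M₂ < |U n ω + V n ω|} ⊆ {ω | M₁ < |U n ω|} ∪ {ω | M₂ < |V n ω|} := by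
    intro ω hω
    by_contra hcon
    simp only [Set.mem_union, Set.mem_setOf_eq, not_or, not_lt] at hcon
    have := abs_add_le (U n ω) (V n ω)
    simp only [Set.mem_setOf_eq] at hω
    linarith [hcon.1, hcon.2]
  calc (P {ω | M₁ + M₂ < |U n ω + V n ω|}).toReal
      ≤ (P ({ω | M₁ < |U n ω|} ∪ {ω | M₂ < |V n ω|})).toReal :=
        ENNReal.toReal_mono (measure_ne_top _ _) (measure_mono hsub)
    _ ≤ (P {ω | M₁ < |U n ω|} + P {ω | M₂ < |V n ω|}).toReal :=
        ENNReal.toReal_mono (by finiteness) (measure_union_le _ _)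
    _ = (P {ω | M₁ < |U n ω|}).toReal + (P {ω | M₂ < |V n ω|}).toReal :=
        ENNReal.toReal_add (measure_ne_top _ _) (measure_ne_top _ _)
    _ ≤ ε/2 + ε/2 := add_le_add (hM₁ n) (hM₂ n)
    _ = ε := by ring

lemma tendsto_integral_of_cf (X : ℕ → Ω → ℝ) (Xl : Ω → ℝ)
    (hm : ∀ n, Measurable (X n)) (hml : Measurable Xl)
    (tight : ∀ ε : ℝ, 0 < ε → ∃ M : ℝ, 0 < M ∧ ∀ n, (P {ω | M < |X n ω|}).toReal ≤ ε)
    (hcf : ∀ t : ℝ, Tendsto (fun n => cf P (X n) t) atTop (nhds (cf P Xl t))) :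
    ∀ ψ : ℝ → ℝ, Continuous ψ → (∃ C : ℝ, ∀ x : ℝ, |ψ x| ≤ C) →
      Tendsto (fun n => ∫ ω, ψ (X n ω) ∂P) atTop (nhds (∫ ω, ψ (Xl ω) ∂P)) := by
  intro ψ hψ hbd
  obtain ⟨C, hC⟩ := hbd
  have hC0 : 0 ≤ C := le_trans (abs_nonneg _) (hC 0)
  rw [Metric.tendsto_atTop]
  intro ε hε
  suffices H : ∀ᶠ n in atTop, |(∫ ω, ψ (X n ω) ∂P) - ∫ ω, ψ (Xl ω) ∂P| ≤ ε/2 by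
    obtain ⟨N, hN⟩ := eventually_atTop.1 H
    refine ⟨N, fun n hn => ?_⟩
    rw [Real.dist_eq]
    exact lt_of_le_of_lt (hN n hn) (by linarith)
  set δ : ℝ := (ε/2) / (4*C + 4) with hδdef
  have hδ : 0 < δ := by positivity
  obtain ⟨M₁, hM₁pos, hM₁⟩ := tight δ hδ
  obtain ⟨M₂, hM₂pos, hM₂⟩ := tight_single P Xl hml hδ
  set M : ℝ := max M₁ M₂ with hMdef
  have hMpos : 0 < M := lt_max_of_lt_left hM₁pos
  have htailn : ∀ n, (P {ω | M < |X n ω|}).toReal ≤ δ :=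
    fun n => (tail_mono P _ (le_max_left _ _)).trans (hM₁ n)
  have htaill : (P {ω | M < |Xl ω|}).toReal ≤ δ :=
    (tail_mono P _ (le_max_right _ _)).trans hM₂
  set L : ℝ := 2*M + 2 with hLdef
  have hL : 0 < L := by positivity
  haveI : Fact (0 < L) := ⟨hL⟩
  -- cutoff function
  set χ : ℝ → ℝ := fun x => max 0 (min 1 (M + 1 - |x|)) with hχdef
  set g : ℝ → ℝ := fun x => ψ x * χ x with hgdef
  have hχcont : Continuous χ :=
    continuous_const.max (continuous_const.min (continuous_const.sub continuous_abs))
  have hgcont : Continuous g := hψ.mul hχcont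
  have hχ01 : ∀ x, 0 ≤ χ x ∧ χ x ≤ 1 := fun x =>
    ⟨le_max_left _ _, max_le (by linarith) (min_le_left _ _)⟩
  have hgeq : ∀ x, |x| ≤ M → g x = ψ x := by
    intro x hx
    have : χ x = 1 := by
      have h1 : (1:ℝ) ≤ M + 1 - |x| := by linarith
      simp only [hχdef]
      rw [min_eq_left h1, max_eq_right zero_le_one]
    simp [hgdef, this]
  have hgzero : ∀ x, M + 1 ≤ |x| → g x = 0 := by
    intro x hx
    have : χ x = 0 := by
      have h1 : M + 1 - |x| ≤ 0 := by linarith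
      simp only [hχdef]
      rw [max_eq_left]
      exact le_trans (min_le_right _ _) h1
    simp [hgdef, this]
  have hgbd : ∀ x, |g x| ≤ C := by
    intro x
    rw [hgdef, abs_mul]
    calc |ψ x| * |χ x| ≤ C * 1 :=
      mul_le_mul (hC x) (abs_le.2 ⟨by linarith [(hχ01 x).1], (hχ01 x).2⟩) (abs_nonneg _) hC0
    _ = C := mul_one C
  -- periodization
  have hbound : -(M+1) + L = M + 1 := by rw [hLdef]; ring
  set G : AddCircle L → ℝ := AddCircle.liftIco L (-(M+1)) g with hGdef
  have hz1 : g (-(M+1)) = 0 := hgzero _ (by rw [abs_neg, abs_of_nonneg (by linarith : (0:ℝ) ≤ M+1)])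
  have hz2 : g (M+1) = 0 := hgzero _ (le_of_eq (abs_of_nonneg (by linarith : (0:ℝ) ≤ M+1)).symm)
  have hGcont : Continuous G := by
    refine AddCircle.liftIco_continuous ?_ hgcont.continuousOn
    rw [hbound, hz1, hz2]
  have hGeq : ∀ x : ℝ, |x| ≤ M → G (x : AddCircle L) = ψ x := by
    intro x hx
    obtain ⟨hx1, hx2⟩ := abs_le.1 hx
    have hmem : x ∈ Set.Ico (-(M+1)) (-(M+1) + L) := by
      rw [hbound]; exact ⟨by linarith, by linarith⟩
    rw [hGdef, AddCircle.liftIco_coe_apply hmem, hgeq x hx]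
  have hGbd : ∀ z, |G z| ≤ C := by
    intro z
    have hz : z ∈ ((↑) : ℝ → AddCircle L) '' Set.Ico (-(M+1)) (-(M+1) + L) := by
      rw [AddCircle.coe_image_Ico_eq]; trivial
    obtain ⟨x, hx, rfl⟩ := hz
    rw [hGdef, AddCircle.liftIco_coe_apply hx]
    exact hgbd x
  -- bound 1 : replacing ψ by the periodic G
  have key1 : ∀ (Z : Ω → ℝ), Measurable Z → (P {ω | M < |Z ω|}).toReal ≤ δ →
      |(∫ ω, ψ (Z ω) ∂P) - ∫ ω, G (↑(Z ω)) ∂P| ≤ 2*C*δ := by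
    intro Z hZ htail
    have hmes : Measurable fun ω => G (↑(Z ω) : AddCircle L) :=
      hGcont.measurable.comp (AddCircle.measurable_mk'.comp hZ)
    have hiψ : Integrable (fun ω => ψ (Z ω)) P :=
      integrable_of_bdd P ((hψ.measurable.comp hZ).aestronglyMeasurable) (C := C)
        (fun ω => by rw [Real.norm_eq_abs]; exact hC _)
    have hiG : Integrable (fun ω => G (↑(Z ω) : AddCircle L)) P :=
      integrable_of_bdd P hmes.aestronglyMeasurable (C := C)
        (fun ω => by rw [Real.norm_eq_abs]; exact hGbd _)
    have hsetm : MeasurableSet {ω | M < |Z ω|} := measurableSet_lt measurable_const hZ.abs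
    rw [← integral_sub hiψ hiG]
    refine le_trans (by
      simpa [Real.norm_eq_abs] using
        norm_integral_le_integral_norm (μ := P) (fun ω => ψ (Z ω) - G (↑(Z ω) : AddCircle L))) ?_
    have hble : ∀ ω, |ψ (Z ω) - G (↑(Z ω) : AddCircle L)|
        ≤ Set.indicator {ω | M < |Z ω|} (fun _ => 2*C) ω := by
      intro ω
      by_cases hω : M < |Z ω|
      · rw [Set.indicator_of_mem (show ω ∈ {ω | M < |Z ω|} from hω)]
        calc |ψ (Z ω) - G (↑(Z ω) : AddCircle L)| ≤ |ψ (Z ω)| + |G (↑(Z ω) : AddCircle L)| :=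
            abs_sub _ _
          _ ≤ C + C := add_le_add (hC _) (hGbd _)
          _ = 2*C := by ring
      · rw [Set.indicator_of_notMem (show ω ∉ {ω | M < |Z ω|} from hω),
          hGeq _ (not_lt.1 hω), sub_self, abs_zero]
    calc ∫ ω, |ψ (Z ω) - G (↑(Z ω) : AddCircle L)| ∂P
        ≤ ∫ ω, Set.indicator {ω | M < |Z ω|} (fun _ => 2*C) ω ∂P :=
          integral_mono (hiψ.sub hiG).abs ((integrable_const (2*C)).indicator hsetm) hble
      _ = (P {ω | M < |Z ω|}).toReal * (2*C) := by
          rw [integral_indicator_const _ hsetm, smul_eq_mul]; rfl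
      _ ≤ δ * (2*C) := mul_le_mul_of_nonneg_right htail (by positivity)
      _ = 2*C*δ := by ring
  -- Fourier approximation on the circle
  set Gc : C(AddCircle L, ℂ) := ⟨fun z => ((G z : ℝ) : ℂ), Complex.continuous_ofReal.comp hGcont⟩
    with hGcdef
  have hGcmem : Gc ∈ closure ((Submodule.span ℂ (Set.range (@fourier L))) :
      Set C(AddCircle L, ℂ)) := by
    have htop := span_fourier_closure_eq_top (T := L)
    have h2 : Gc ∈ (Submodule.span ℂ (Set.range (@fourier L))).topologicalClosure := by
      rw [htop]; trivial
    rwa [← Submodule.topologicalClosure_coe]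
  obtain ⟨p, hpmem, hpdist⟩ := Metric.mem_closure_iff.1 hGcmem δ hδ
  have hpoint : ∀ z, ‖Gc z - p z‖ ≤ δ := by
    intro z
    rw [← dist_eq_norm]
    exact le_of_lt (lt_of_le_of_lt (ContinuousMap.dist_apply_le_dist z) hpdist)
  -- integrability of continuous circle functions
  have hicirc : ∀ (q : C(AddCircle L, ℂ)) (Z : Ω → ℝ), Measurable Z →
      Integrable (fun ω => q (↑(Z ω) : AddCircle L)) P := by
    intro q Z hZ
    refine integrable_of_bdd P ((q.continuous.measurable.comp
      (AddCircle.measurable_mk'.comp hZ)).aestronglyMeasurable) (C := ‖q‖)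
      (fun ω => q.norm_coe_le_norm _)
  -- bound 2 : replacing G by the trigonometric polynomial p
  have key2 : ∀ (Z : Ω → ℝ), Measurable Z →
      ‖(∫ ω, Gc (↑(Z ω) : AddCircle L) ∂P) - ∫ ω, p (↑(Z ω) : AddCircle L) ∂P‖ ≤ δ := by
    intro Z hZ
    rw [← integral_sub (hicirc Gc Z hZ) (hicirc p Z hZ)]
    refine (norm_integral_le_integral_norm _).trans ?_
    calc ∫ ω, ‖Gc (↑(Z ω) : AddCircle L) - p (↑(Z ω) : AddCircle L)‖ ∂P
        ≤ ∫ _, δ ∂P := integral_mono ((hicirc Gc Z hZ).sub (hicirc p Z hZ)).norm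
          (integrable_const δ) (fun ω => hpoint _)
      _ = δ := by simp
  -- the integral of p along the variables converges, via characteristic functions
  obtain ⟨m, c, q, hq⟩ := Submodule.mem_span_set'.1 hpmem
  have hk : ∀ i, ∃ kk : ℤ, fourier kk = (q i : C(AddCircle L, ℂ)) := fun i => (q i).2
  choose k hkk using hk
  have fourier_int : ∀ (Z : Ω → ℝ), Measurable Z → ∀ kk : ℤ,
      (∫ ω, (fourier kk (↑(Z ω) : AddCircle L)) ∂P) = cf P Z (2*π*kk/L) := by
    intro Z hZ kk
    rw [cf]
    refine integral_congr_ae (Filter.Eventually.of_forall fun ω => ?_)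
    show fourier kk (↑(Z ω) : AddCircle L) = _
    rw [fourier_coe_apply]
    congr 1
    push_cast
    ring
  have hQeq : ∀ (Z : Ω → ℝ), Measurable Z →
      ∫ ω, p (↑(Z ω) : AddCircle L) ∂P = ∑ i, c i • cf P Z (2*π*(k i)/L) := by
    intro Z hZ
    rw [← hq]
    have : ∀ ω, ((∑ i, c i • (q i : C(AddCircle L, ℂ))) (↑(Z ω) : AddCircle L))
        = ∑ i, c i • ((q i : C(AddCircle L, ℂ)) (↑(Z ω) : AddCircle L)) := by
      intro ω
      simp
    simp_rw [this]
    rw [integral_finset_sum]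
    · refine Finset.sum_congr rfl fun i _ => ?_
      rw [integral_smul]
      congr 1
      rw [← hkk i, fourier_int Z hZ (k i)]
    · intro i _
      exact ((hicirc _ Z hZ).smul (c i))
  have htendQ : Tendsto (fun n => ∫ ω, p (↑(X n ω) : AddCircle L) ∂P) atTop
      (nhds (∫ ω, p (↑(Xl ω) : AddCircle L) ∂P)) := by
    simp_rw [hQeq (X _) (hm _), hQeq Xl hml]
    exact tendsto_finset_sum _ (fun i _ => ((hcf _).const_smul (c i)))
  have hevQ : ∀ᶠ n in atTop, ‖(∫ ω, p (↑(X n ω) : AddCircle L) ∂P)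
      - ∫ ω, p (↑(Xl ω) : AddCircle L) ∂P‖ ≤ δ := by
    filter_upwards [htendQ.eventually (Metric.closedBall_mem_nhds _ hδ)] with n hn
    rw [← dist_eq_norm]
    exact hn
  -- final assembly
  have tri : ∀ a b c : ℂ, ‖a - c‖ ≤ ‖a - b‖ + ‖b - c‖ := fun a b c => by
    rw [← sub_add_sub_cancel a b c]; exact norm_add_le _ _
  filter_upwards [hevQ] with n hn
  have hBr : ∀ (Z : Ω → ℝ), Measurable Z →
      (∫ ω, Gc (↑(Z ω) : AddCircle L) ∂P) = (((∫ ω, G (↑(Z ω) : AddCircle L) ∂P : ℝ)) : ℂ) := by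
    intro Z hZ
    exact integral_ofReal'' P
  have habs : |(∫ ω, ψ (X n ω) ∂P) - ∫ ω, ψ (Xl ω) ∂P|
      = ‖(((∫ ω, ψ (X n ω) ∂P : ℝ)) : ℂ) - (((∫ ω, ψ (Xl ω) ∂P : ℝ)) : ℂ)‖ := by
    rw [← Complex.ofReal_sub, Complex.norm_real, Real.norm_eq_abs]
  rw [habs]
  have t1 : ‖(((∫ ω, ψ (X n ω) ∂P : ℝ)) : ℂ) - ∫ ω, Gc (↑(X n ω) : AddCircle L) ∂P‖ ≤ 2*C*δ := by
    rw [hBr (X n) (hm n), ← Complex.ofReal_sub, Complex.norm_real, Real.norm_eq_abs]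
    exact key1 (X n) (hm n) (htailn n)
  have t5 : ‖(∫ ω, Gc (↑(Xl ω) : AddCircle L) ∂P) - (((∫ ω, ψ (Xl ω) ∂P : ℝ)) : ℂ)‖ ≤ 2*C*δ := by
    rw [hBr Xl hml, ← Complex.ofReal_sub, Complex.norm_real, Real.norm_eq_abs, abs_sub_comm]
    exact key1 Xl hml htaill
  have t2 := key2 (X n) (hm n)
  have t4 : ‖(∫ ω, p (↑(Xl ω) : AddCircle L) ∂P) - ∫ ω, Gc (↑(Xl ω) : AddCircle L) ∂P‖ ≤ δ := by
    rw [norm_sub_rev]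
    exact key2 Xl hml
  set a : ℂ := (((∫ ω, ψ (X n ω) ∂P : ℝ)) : ℂ) with ha
  set b : ℂ := ∫ ω, Gc (↑(X n ω) : AddCircle L) ∂P with hb
  set c' : ℂ := ∫ ω, p (↑(X n ω) : AddCircle L) ∂P with hc'
  set d : ℂ := ∫ ω, p (↑(Xl ω) : AddCircle L) ∂P with hd
  set e : ℂ := ∫ ω, Gc (↑(Xl ω) : AddCircle L) ∂P with he
  set f : ℂ := (((∫ ω, ψ (Xl ω) ∂P : ℝ)) : ℂ) with hf
  have chain : ‖a - f‖ ≤ ‖a - b‖ + (‖b - c'‖ + (‖c' - d‖ + (‖d - e‖ + ‖e - f‖))) :=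
    calc ‖a - f‖ ≤ ‖a - b‖ + ‖b - f‖ := tri _ _ _
      _ ≤ ‖a - b‖ + (‖b - c'‖ + ‖c' - f‖) := add_le_add_right (tri _ _ _) _
      _ ≤ ‖a - b‖ + (‖b - c'‖ + (‖c' - d‖ + ‖d - f‖)) := by
          refine add_le_add_right (add_le_add_right (tri _ _ _) _) _
      _ ≤ ‖a - b‖ + (‖b - c'‖ + (‖c' - d‖ + (‖d - e‖ + ‖e - f‖))) := by
          refine add_le_add_right (add_le_add_right (add_le_add_right (tri _ _ _) _) _) _
  refine chain.trans ?_
  have total : ‖a - b‖ + (‖b - c'‖ + (‖c' - d‖ + (‖d - e‖ + ‖e - f‖)))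
      ≤ 2*C*δ + (δ + (δ + (δ + 2*C*δ))) :=
    add_le_add t1 (add_le_add t2 (add_le_add hn (add_le_add t4 t5)))
  refine total.trans ?_
  have hδle : (4*C+4) * δ = ε/2 := by
    rw [hδdef]; field_simp
  nlinarith [hδ.le]

end ConvSumAux

open ConvSumAux in
/-- if `W_N → W` in distribution, the characteristic function of
`W` never vanishes, `W_N ⟂ Y_N`, and `W ⟂ Y`, then `Y_N → Y` in distribution iff
`W_N + Y_N → W + Y` in distribution. -/
theorem conv_in_distribution_of_sum_iff
    {Ω : Type*} [MeasurableSpace Ω] (P : Measure Ω) [IsProbabilityMeasure P]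
    (W Y : ℕ → Ω → ℝ) (Wlim Ylim : Ω → ℝ)
    (hWmeas : ∀ n, Measurable (W n)) (hYmeas : ∀ n, Measurable (Y n))
    (hWlimMeas : Measurable Wlim) (hYlimMeas : Measurable Ylim)
    (hindep : ∀ n, ProbabilityTheory.IndepFun (W n) (Y n) P)
    (hindepLim : ProbabilityTheory.IndepFun Wlim Ylim P)
    (hWconv : ∀ ψ : ℝ → ℝ, Continuous ψ → (∃ C : ℝ, ∀ x : ℝ, |ψ x| ≤ C) →
      Tendsto (fun n => ∫ ω, ψ (W n ω) ∂P) atTop (nhds (∫ ω, ψ (Wlim ω) ∂P)))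
    (hchar : ∀ t : ℝ, (∫ ω, Complex.exp (Complex.I * (t * Wlim ω : ℝ)) ∂P) ≠ 0) :
    (∀ ψ : ℝ → ℝ, Continuous ψ → (∃ C : ℝ, ∀ x : ℝ, |ψ x| ≤ C) →
        Tendsto (fun n => ∫ ω, ψ (Y n ω) ∂P) atTop (nhds (∫ ω, ψ (Ylim ω) ∂P)))
      ↔
    (∀ ψ : ℝ → ℝ, Continuous ψ → (∃ C : ℝ, ∀ x : ℝ, |ψ x| ≤ C) →
        Tendsto (fun n => ∫ ω, ψ (W n ω + Y n ω) ∂P) atTop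
          (nhds (∫ ω, ψ (Wlim ω + Ylim ω) ∂P))) := by
  have hSm : ∀ n, Measurable (fun ω => W n ω + Y n ω) := fun n => (hWmeas n).add (hYmeas n)
  have hSlm : Measurable (fun ω => Wlim ω + Ylim ω) := hWlimMeas.add hYlimMeas
  have hWtight : ∀ ε : ℝ, 0 < ε → ∃ M : ℝ, 0 < M ∧ ∀ n, (P {ω | M < |W n ω|}).toReal ≤ ε :=
    fun ε hε => tight_of_conv P W Wlim hWmeas hWlimMeas hWconv hε
  have hWcf : ∀ t : ℝ, Tendsto (fun n => cf P (W n) t) atTop (nhds (cf P Wlim t)) :=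
    fun t => cf_tendsto P W Wlim hWconv hWmeas hWlimMeas t
  constructor
  · -- Y_N → Y implies W_N + Y_N → W + Y
    intro hYconv
    apply tendsto_integral_of_cf P (fun n ω => W n ω + Y n ω) (fun ω => Wlim ω + Ylim ω)
      hSm hSlm
    · -- tightness of the sums
      intro ε hε
      exact tight_add P W Y hWtight
        (fun ε hε => tight_of_conv P Y Ylim hYmeas hYlimMeas hYconv hε) hε
    · -- convergence of characteristic functions
      intro t
      have hYcf := cf_tendsto P Y Ylim hYconv hYmeas hYlimMeas t
      have h1 : ∀ n, cf P (fun ω => W n ω + Y n ω) t = cf P (W n) t * cf P (Y n) t :=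
        fun n => cf_add_of_indep P (W n) (Y n) (hWmeas n) (hYmeas n) (hindep n) t
      rw [show cf P (fun ω => Wlim ω + Ylim ω) t = cf P Wlim t * cf P Ylim t from
        cf_add_of_indep P Wlim Ylim hWlimMeas hYlimMeas hindepLim t]
      exact ((hWcf t).mul hYcf).congr (fun n => (h1 n).symm)
  · -- W_N + Y_N → W + Y implies Y_N → Y
    intro hSconv
    apply tendsto_integral_of_cf P Y Ylim hYmeas hYlimMeas
    · -- tightness of Y
      intro ε hε
      have hStight : ∀ ε : ℝ, 0 < ε → ∃ M : ℝ, 0 < M ∧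
          ∀ n, (P {ω | M < |W n ω + Y n ω|}).toReal ≤ ε := fun ε hε =>
        tight_of_conv P (fun n ω => W n ω + Y n ω) (fun ω => Wlim ω + Ylim ω)
          hSm hSlm hSconv hε
      have hWneg : ∀ ε : ℝ, 0 < ε → ∃ M : ℝ, 0 < M ∧
          ∀ n, (P {ω | M < |-(W n ω)|}).toReal ≤ ε := by
        intro ε hε
        obtain ⟨M, hM, h⟩ := hWtight ε hε
        exact ⟨M, hM, fun n => by simpa [abs_neg] using h n⟩
      obtain ⟨M, hM, h⟩ := tight_add P (fun n ω => W n ω + Y n ω) (fun n ω => -(W n ω))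
        hStight hWneg hε
      refine ⟨M, hM, fun n => ?_⟩
      have heq : ∀ ω, W n ω + Y n ω + -(W n ω) = Y n ω := fun ω => by ring
      simpa [heq] using h n
    · -- convergence of characteristic functions of Y
      intro t
      have hScf := cf_tendsto P (fun n ω => W n ω + Y n ω) (fun ω => Wlim ω + Ylim ω)
        hSconv hSm hSlm t
      have hWne : cf P Wlim t ≠ 0 := hchar t
      have hdiv : Tendsto (fun n => cf P (fun ω => W n ω + Y n ω) t / cf P (W n) t) atTop
          (nhds ((cf P (fun ω => Wlim ω + Ylim ω) t) / cf P Wlim t)) :=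
        hScf.div (hWcf t) hWne
      have hlim_eq : (cf P (fun ω => Wlim ω + Ylim ω) t) / cf P Wlim t = cf P Ylim t := by
        rw [cf_add_of_indep P Wlim Ylim hWlimMeas hYlimMeas hindepLim t,
          mul_div_cancel_left₀ _ hWne]
      have hev : ∀ᶠ n in atTop,
          cf P (fun ω => W n ω + Y n ω) t / cf P (W n) t = cf P (Y n) t := by
        filter_upwards [(hWcf t).eventually_ne hWne] with n hne
        rw [cf_add_of_indep P (W n) (Y n) (hWmeas n) (hYmeas n) (hindep n) t,
          mul_div_cancel_left₀ _ hne]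
      rw [← hlim_eq]
      exact hdiv.congr' hev

end
end

section
/- Fix h ∈ ℝ, J > 0, η ≥ 0, u ∈ ℝ and an integer N ≥ 1. Let S_N be the number of monomers, distributed according to the Gibbs measure μ_N of the IMD model, and let W be a Gaussian random variable with law 𝒩(0, (2J)^{−1}) independent of S_N. Then the real random variable W/N^{1/2−η} + (S_N − N·u)/N^{1−η} has law absolutely continuous with respect to Lebesgue measure, with density x ↦ C_N·exp(N·F_N(x/N^η + u)), where C_N^{−1} = ∫_ℝ exp(N·F_N(x/N^η + u)) dx. -/
/-!
Conditionally on `S_N = S`, the variable is Gaussian with mean `N^η (S/N - u)` and variance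
`N^{2η}/(2JN)`, so its law has density `x ↦ ∑_D μ_N(D) φ_D(x)`. With `m = x/N^η + u`, completing
the square gives `-H_N(D) - JN(m - S_N(D)/N)² = -JNm² + (2Jm + h - J) S_N(D)`: the Gaussian
smearing linearises the imitative term, and the sum over `D` collapses to
`e^{-JNm²} Z_N⁰(2Jm + h - J) = e^{N F_N(m)}` up to a constant factor. Since the law is a
probability measure, that factor is `C_N`.
-/

open MeasureTheory Filter Real

noncomputable section

open scoped ENNReal NNReal
open ProbabilityTheory

namespace MeasureTheory.Measure

variable {α β γ : Type*} [MeasurableSpace α] [MeasurableSpace β] [MeasurableSpace γ]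

theorem map_prod_finsetSum {ι : Type*} (s : Finset ι) (μ : Measure α) [SFinite μ]
    (ν : ι → Measure β) [∀ i, SFinite (ν i)] {f : α × β → γ} (hf : Measurable f) :
    (μ.prod (∑ i ∈ s, ν i)).map f = ∑ i ∈ s, (μ.prod (ν i)).map f := by
  rw [← sum_coe_finset, prod_sum_right, map_sum hf.aemeasurable]
  exact sum_coe_finset s fun i => (μ.prod (ν i)).map f

theorem map_prod_finsetSum_smul_dirac {ι : Type*} (s : Finset ι) (μ : Measure α) [SFinite μ]
    (w : ι → ℝ≥0∞) (y : ι → β) {f : α × β → γ} (hf : Measurable f) :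
    (μ.prod (∑ i ∈ s, w i • dirac (y i))).map f
      = ∑ i ∈ s, w i • μ.map (fun x => f (x, y i)) := by
  rw [map_prod_finsetSum s μ _ hf]
  refine Finset.sum_congr rfl fun i _ => ?_
  rw [prod_smul_right, Measure.map_smul, prod_dirac, map_map hf measurable_prodMk_right]
  rfl

theorem finsetSum_smul_withDensity {ι : Type*} (μ : Measure α) (s : Finset ι) (c : ι → ℝ≥0∞)
    {f : ι → α → ℝ≥0∞} (hf : ∀ i, Measurable (f i)) :
    ∑ i ∈ s, c i • μ.withDensity (f i) = μ.withDensity (fun x => ∑ i ∈ s, c i * f i x) := by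
  ext A hA
  rw [finsetSum_apply, withDensity_apply _ hA,
    lintegral_finsetSum s (fun i _ => (hf i).const_mul (c i))]
  refine Finset.sum_congr rfl fun i _ => ?_
  rw [smul_apply, smul_eq_mul, withDensity_apply _ hA, lintegral_const_mul _ (hf i)]

end MeasureTheory.Measure

theorem MeasureTheory.integral_eq_one_of_isProbabilityMeasure_withDensity {α : Type*}
    [MeasurableSpace α] {μ : Measure α} {g : α → ℝ} (hg : AEStronglyMeasurable g μ)
    (hg0 : 0 ≤ᵐ[μ] g) [IsProbabilityMeasure (μ.withDensity fun x => ENNReal.ofReal (g x))] :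
    ∫ x, g x ∂μ = 1 := by
  rw [integral_eq_lintegral_of_nonneg_ae hg0 hg, ← setLIntegral_univ, ← withDensity_apply _ .univ,
    measure_univ, ENNReal.toReal_one]

theorem ProbabilityTheory.gaussianReal_map_div_add {μ : ℝ} {v v' : ℝ≥0} (a c : ℝ)
    (hv' : (v' : ℝ) = v / a ^ 2) :
    (gaussianReal μ v).map (fun x => x / a + c) = gaussianReal (μ / a + c) v' := by
  have hcomp : (fun x : ℝ => x / a + c) = (fun y => y + c) ∘ (fun x => a⁻¹ * x) := by
    funext x
    simp [div_eq_inv_mul]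
  rw [hcomp, ← Measure.map_map (by fun_prop) (by fun_prop), gaussianReal_map_const_mul,
    gaussianReal_map_add_const, inv_mul_eq_div]
  congr 1
  ext
  rw [NNReal.coe_mul, NNReal.coe_mk, hv', inv_pow, inv_mul_eq_div]

/-- The Gibbs probability `μ_N(D)`. -/
def gibbsWeight (N : ℕ) (h J : ℝ) (D : Finset (Sym2 (Fin N))) : ℝ :=
  (N : ℝ) ^ (-(D.card : ℤ)) * Real.exp (negH N h J D) / ZIMD N h J

def monomerLaw (N : ℕ) (h J : ℝ) : Measure ℝ :=
  ∑ D ∈ dimerConfigs N, ENNReal.ofReal (gibbsWeight N h J D) • Measure.dirac (monomerCount N D)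

theorem empty_mem_dimerConfigs (N : ℕ) : ∅ ∈ dimerConfigs N := by
  simp [dimerConfigs, IsDimerConfig]

theorem sum_dimerConfigs_pos (N : ℕ) (f : Finset (Sym2 (Fin N)) → ℝ) :
    0 < ∑ D ∈ dimerConfigs N, (N : ℝ) ^ (-(D.card : ℤ)) * Real.exp (f D) :=
  Finset.sum_pos' (fun D _ => by positivity) ⟨∅, empty_mem_dimerConfigs N, by simp [Real.exp_pos]⟩

theorem ZIMD_pos (N : ℕ) (h J : ℝ) : 0 < ZIMD N h J := sum_dimerConfigs_pos N _

theorem Z0_pos (N : ℕ) (a : ℝ) : 0 < Z0 N a := sum_dimerConfigs_pos N _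

theorem gibbsWeight_nonneg (N : ℕ) (h J : ℝ) (D : Finset (Sym2 (Fin N))) :
    0 ≤ gibbsWeight N h J D :=
  div_nonneg (by positivity) (ZIMD_pos N h J).le

theorem sum_gibbsWeight (N : ℕ) (h J : ℝ) : ∑ D ∈ dimerConfigs N, gibbsWeight N h J D = 1 := by
  simp only [gibbsWeight]
  rw [← Finset.sum_div, ← ZIMD, div_self (ZIMD_pos N h J).ne']

instance (N : ℕ) (h J : ℝ) : IsProbabilityMeasure (monomerLaw N h J) := by
  constructor
  simp only [monomerLaw, Measure.finsetSum_apply, Measure.smul_apply, measure_univ, smul_eq_mul,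
    mul_one]
  rw [← ENNReal.ofReal_sum_of_nonneg fun D _ => gibbsWeight_nonneg N h J D, sum_gibbsWeight,
    ENNReal.ofReal_one]

theorem measurable_FN (h J : ℝ) (N : ℕ) : Measurable (FN h J N) := by
  unfold FN p0N Z0
  fun_prop

theorem exp_mul_FN {N : ℕ} (hN : (N : ℝ) ≠ 0) (h J m : ℝ) :
    Real.exp (N * FN h J N m) = Real.exp (-(J * N) * m ^ 2) * Z0 N (2 * J * m + h - J) := by
  have hexponent : N * FN h J N m = -(J * N) * m ^ 2 + Real.log (Z0 N (2 * J * m + h - J)) := by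
    rw [FN, p0N]
    field_simp
  rw [hexponent, Real.exp_add, Real.exp_log (Z0_pos N _)]

theorem negH_sub_sq_eq {N : ℕ} (hN : (N : ℝ) ≠ 0) (h J m : ℝ) (D : Finset (Sym2 (Fin N))) :
    negH N h J D - J * N * (m - monomerDensity N D) ^ 2
      = -(J * N) * m ^ 2 + (2 * J * m + h - J) * monomerCount N D := by
  rw [negH, monomerDensity]
  field_simp
  ring

theorem sum_gibbsWeight_mul_gaussianPDFReal {N : ℕ} (hN : (N : ℝ) ≠ 0) (h : ℝ) {J : ℝ}
    (hJ : J ≠ 0) {e : ℝ} (he : e ≠ 0) {v : ℝ≥0} (hv : (v : ℝ) = e ^ 2 / (2 * J * N)) (u x : ℝ) :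
    ∑ D ∈ dimerConfigs N,
        gibbsWeight N h J D * gaussianPDFReal (e * (monomerDensity N D - u)) v x
      = (√(2 * π * v))⁻¹ / ZIMD N h J * Real.exp (N * FN h J N (x / e + u)) := by
  rw [exp_mul_FN hN, Z0, Finset.mul_sum, Finset.mul_sum]
  refine Finset.sum_congr rfl fun D _ => ?_
  have hexponent : -(x - e * (monomerDensity N D - u)) ^ 2 / (2 * v)
      = -(J * N * (x / e + u - monomerDensity N D) ^ 2) := by
    rw [hv]
    field_simp
    ring
  have hsq := congrArg Real.exp (negH_sub_sq_eq hN h J (x / e + u) D)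
  rw [Real.exp_sub, Real.exp_add] at hsq
  rw [gaussianPDFReal, hexponent, gibbsWeight, Real.exp_neg]
  linear_combination (√(2 * π * v))⁻¹ / ZIMD N h J * (N : ℝ) ^ (-(D.card : ℤ)) * hsq

theorem exists_map_gaussian_prod_monomerLaw_eq_withDensity {N : ℕ} (hN : 0 < (N : ℝ)) (h : ℝ)
    {J : ℝ} (hJ : 0 < J) {e : ℝ} (he : 0 < e) (u : ℝ) :
    ∃ K : ℝ, 0 < K ∧
      ((gaussianReal 0 (2 * J)⁻¹.toNNReal).prod (monomerLaw N h J)).map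
          (fun p : ℝ × ℝ => p.1 / (√N / e) + (p.2 - N * u) / (N / e))
        = volume.withDensity fun x => ENNReal.ofReal (K * Real.exp (N * FN h J N (x / e + u))) := by
  set v : ℝ≥0 := (e ^ 2 / (2 * J * N)).toNNReal
  have hv : (v : ℝ) = e ^ 2 / (2 * J * N) := Real.coe_toNNReal _ (by positivity)
  have hv_pos : 0 < (v : ℝ) := hv ▸ by positivity
  have hv_div : (v : ℝ) = ((2 * J)⁻¹.toNNReal : ℝ) / (√N / e) ^ 2 := by
    rw [hv, Real.coe_toNNReal _ (by positivity), div_pow, Real.sq_sqrt hN.le]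
    field_simp
  have hlaw (D : Finset (Sym2 (Fin N))) :
      (gaussianReal 0 (2 * J)⁻¹.toNNReal).map
          (fun x => x / (√N / e) + (monomerCount N D - N * u) / (N / e))
        = volume.withDensity (gaussianPDF (e * (monomerDensity N D - u)) v) := by
    rw [gaussianReal_map_div_add _ _ hv_div,
      gaussianReal_of_var_ne_zero _ (by exact_mod_cast hv_pos.ne'),
      zero_div, zero_add, monomerDensity]
    congr 2
    field_simp
  refine ⟨(√(2 * π * v))⁻¹ / ZIMD N h J, by have := ZIMD_pos N h J; positivity, ?_⟩
  rw [monomerLaw, Measure.map_prod_finsetSum_smul_dirac _ _ _ _ (by fun_prop)]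
  simp_rw [hlaw]
  rw [Measure.finsetSum_smul_withDensity _ _ _ fun D => measurable_gaussianPDF _ _]
  congr with x
  rw [← sum_gibbsWeight_mul_gaussianPDFReal hN.ne' h hJ.ne' he.ne' hv u x,
    ENNReal.ofReal_sum_of_nonneg fun D _ =>
      mul_nonneg (gibbsWeight_nonneg N h J D) (gaussianPDFReal_nonneg _ _ _)]
  refine Finset.sum_congr rfl fun D _ => ?_
  rw [gaussianPDF, ENNReal.ofReal_mul (gibbsWeight_nonneg N h J D)]

theorem gibbs_gaussian_convolution_density_general (h J : ℝ) (hJ : 0 < J) (η u : ℝ)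
    (N : ℕ) (hN : 1 ≤ N) (CN : ℝ)
    (hCN : CN = (∫ x : ℝ, Real.exp ((N : ℝ) * FN h J N (x / (N : ℝ) ^ η + u)))⁻¹) :
    Measure.map
        (fun p : ℝ × ℝ =>
          p.1 / (N : ℝ) ^ ((1:ℝ)/2 - η) + (p.2 - (N : ℝ) * u) / (N : ℝ) ^ ((1:ℝ) - η))
        ((ProbabilityTheory.gaussianReal 0 (Real.toNNReal (2*J)⁻¹)).prod
          (∑ D ∈ dimerConfigs N,
            ENNReal.ofReal
                ((N : ℝ) ^ (-(D.card : ℤ)) * Real.exp (negH N h J D) / ZIMD N h J) •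
              Measure.dirac (monomerCount N D)))
      =
      volume.withDensity
        (fun x : ℝ => ENNReal.ofReal (CN * Real.exp ((N : ℝ) * FN h J N (x / (N : ℝ) ^ η + u)))) := by
  have hN_pos : 0 < (N : ℝ) := by exact_mod_cast hN
  rw [rpow_sub hN_pos, rpow_sub hN_pos, rpow_one, ← sqrt_eq_rpow]
  obtain ⟨K, hK_pos, hK⟩ := exists_map_gaussian_prod_monomerLaw_eq_withDensity hN_pos h hJ
    (rpow_pos_of_pos hN_pos η) u
  have : IsProbabilityMeasure (volume.withDensity fun x =>
      ENNReal.ofReal (K * Real.exp (N * FN h J N (x / (N : ℝ) ^ η + u)))) :=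
    hK ▸ Measure.isProbabilityMeasure_map (by fun_prop)
  have hK_integral : K * ∫ x : ℝ, Real.exp (N * FN h J N (x / (N : ℝ) ^ η + u)) = 1 := by
    rw [← integral_const_mul]
    refine integral_eq_one_of_isProbabilityMeasure_withDensity ?_
      (ae_of_all _ fun x => by positivity)
    have hmeas := ((measurable_FN h J N).comp (by fun_prop : Measurable fun x : ℝ =>
      x / (N : ℝ) ^ η + u)).const_mul (N : ℝ) |>.exp
    exact (hmeas.const_mul K).aestronglyMeasurable
  rw [hCN, ← eq_inv_of_mul_eq_one_left hK_integral]
  exact hK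

/-- the law of `W/N^{1/2−η} + (S_N − Nu)/N^{1−η}`, where `S_N` has
the IMD Gibbs law and `W ∼ 𝒩(0,(2J)⁻¹)` is independent of `S_N`, has density
`x ↦ C_N · exp(N·F_N(x/N^η + u))` with respect to Lebesgue measure. -/
theorem gibbs_gaussian_convolution_density (h J : ℝ) (hJ : 0 < J) (η u : ℝ)
    (hη : 0 ≤ η) (N : ℕ) (hN : 1 ≤ N) (CN : ℝ)
    (hCN : CN = (∫ x : ℝ, Real.exp ((N : ℝ) * FN h J N (x / (N : ℝ) ^ η + u)))⁻¹) :
    Measure.map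
        (fun p : ℝ × ℝ =>
          p.1 / (N : ℝ) ^ ((1:ℝ)/2 - η) + (p.2 - (N : ℝ) * u) / (N : ℝ) ^ ((1:ℝ) - η))
        ((ProbabilityTheory.gaussianReal 0 (Real.toNNReal (2*J)⁻¹)).prod
          (∑ D ∈ dimerConfigs N,
            ENNReal.ofReal
                ((N : ℝ) ^ (-(D.card : ℤ)) * Real.exp (negH N h J D) / ZIMD N h J) •
              Measure.dirac (monomerCount N D)))
      =
      volume.withDensity
        (fun x : ℝ => ENNReal.ofReal (CN * Real.exp ((N : ℝ) * FN h J N (x / (N : ℝ) ^ η + u)))) :=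
  gibbs_gaussian_convolution_density_general h J hJ η u N hN CN hCN

end
end
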